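/- arXiv:2602.04387 — 11 statements merged into one kernel-verified Lean document; each statement's English description precedes it below -/
import Mathlib

section
/- Let q be a real quaternion, and for integers ℓ ≥ 1 and k ≥ 2ℓ−1 set H_ℓ^k(q) := Σ_{j=0}^{k−2ℓ+1} C(ℓ+j−1, ℓ−1)·C(k−ℓ−j, ℓ−1)·q^{k−2ℓ+1−j}·(star q)^j. Then H_ℓ^k(q) is fixed by quaternionic conjugation, i.e. star(H_ℓ^k(q)) = H_ℓ^k(q); equivalently, H_ℓ^k(q) is a real scalar. (Lemma 5.2 of the paper: the polynomials H_ℓ^k are real-valued.) -/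
/-! Conjugation reverses each monomial `q^a q̄^b` into `q^b q̄^a`, which is the same as reversing
the summation index; the binomial weights of `H_ℓ^k` are invariant under that reversal. -/

open Finset

/-- The polynomials `H_ℓ^k(q) = ∑_{j=0}^{k-2ℓ+1} C(ℓ+j-1,ℓ-1) C(k-ℓ-j,ℓ-1) q^{k-2ℓ+1-j} q̄^j`,
with the convention `H_ℓ^k = 0` when `k < 2ℓ - 1` (the index range is then empty). -/
noncomputable def Hpoly (ℓ k : ℕ) (q : Quaternion ℝ) : Quaternion ℝ :=
  ∑ j ∈ Finset.range (k + 2 - 2 * ℓ),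
    ((Nat.choose (ℓ - 1 + j) (ℓ - 1) * Nat.choose (k - ℓ - j) (ℓ - 1) : ℕ) : Quaternion ℝ) *
      q ^ (k + 1 - 2 * ℓ - j) * (star q) ^ j

theorem star_sum_natCast_mul_pow_mul_star_pow {R : Type*} [Semiring R] [StarRing R]
    (x : R) (n : ℕ) (c : ℕ → ℕ) (hc : ∀ j < n, c (n - 1 - j) = c j) :
    star (∑ j ∈ range n, (c j : R) * x ^ (n - 1 - j) * star x ^ j) =
      ∑ j ∈ range n, (c j : R) * x ^ (n - 1 - j) * star x ^ j := by
  rw [star_sum, ← sum_range_reflect]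
  refine sum_congr rfl fun j hjn => ?_
  have hj : j < n := mem_range.mp hjn
  rw [star_mul, star_mul, star_pow, star_pow, star_star, star_natCast, hc j hj,
    Nat.sub_sub_self (by omega : j ≤ n - 1), mul_assoc, (Nat.cast_commute _ _).eq, mul_assoc]

theorem Hpoly_coeff_symm (ℓ k j : ℕ) (hj : j < k + 2 - 2 * ℓ) :
    (ℓ - 1 + (k + 1 - 2 * ℓ - j)).choose (ℓ - 1) * (k - ℓ - (k + 1 - 2 * ℓ - j)).choose (ℓ - 1) =
      (ℓ - 1 + j).choose (ℓ - 1) * (k - ℓ - j).choose (ℓ - 1) := by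
  rcases Nat.eq_zero_or_pos ℓ with rfl | hℓ
  · simp
  rw [show ℓ - 1 + (k + 1 - 2 * ℓ - j) = k - ℓ - j by omega,
    show k - ℓ - (k + 1 - 2 * ℓ - j) = ℓ - 1 + j by omega, mul_comm]

theorem star_Hpoly_general (q : Quaternion ℝ) (ℓ k : ℕ) :
    star (Hpoly ℓ k q) = Hpoly ℓ k q := by
  have hexp : ∀ j, k + 1 - 2 * ℓ - j = k + 2 - 2 * ℓ - 1 - j := fun j => by omega
  simp only [Hpoly, hexp]
  exact star_sum_natCast_mul_pow_mul_star_pow q _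
    (fun j => (ℓ - 1 + j).choose (ℓ - 1) * (k - ℓ - j).choose (ℓ - 1))
    fun j hj => by simpa only [hexp] using Hpoly_coeff_symm ℓ k j hj

/-- **Lemma 5.2.** The polynomials `H_ℓ^k` are fixed by quaternionic conjugation,
i.e. they are real-valued. -/
theorem star_Hpoly (q : Quaternion ℝ) (ℓ k : ℕ) (hℓ : 1 ≤ ℓ) (hk : 2 * ℓ - 1 ≤ k) :
    star (Hpoly ℓ k q) = Hpoly ℓ k q :=
  star_Hpoly_general q ℓ k
end

section
/- Let q be a real quaternion and let ℓ ≥ 1, k ≥ 2ℓ−1 be integers. Then H_{ℓ+1}^{k+2}(q) − 2·(re q)·H_{ℓ+1}^{k+1}(q) + ‖q‖²·H_{ℓ+1}^{k}(q) = H_ℓ^{k}(q), where by convention H_{ℓ'}^{k'}(q) := 0 whenever k' < 2ℓ'−1. (Lemma 5.9 of the paper: the three-term recursion satisfied by the polynomials H_ℓ^k.) -/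
open Finset PowerSeries

def hpoly {R : Type*} [Semiring R] (ℓ k : ℕ) (x y : R) : R :=
  ∑ j ∈ range (k + 2 - 2 * ℓ),
    ((Nat.choose (ℓ - 1 + j) (ℓ - 1) * Nat.choose (k - ℓ - j) (ℓ - 1) : ℕ) : R) *
      x ^ (k + 1 - 2 * ℓ - j) * y ^ j

theorem map_hpoly {R S : Type*} [Semiring R] [Semiring S] (f : R →+* S) (ℓ k : ℕ) (x y : R) :
    f (hpoly ℓ k x y) = hpoly ℓ k (f x) (f y) := by
  simp [hpoly]

section CommRing

variable {R : Type*} [CommRing R]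

noncomputable def hpolySeries (m : ℕ) (x y : R) : R⟦X⟧ :=
  rescale y (invOneSubPow R (m + 1)).val * rescale x (invOneSubPow R (m + 1)).val

theorem hpoly_eq_coeff_X_pow_mul_hpolySeries (m k : ℕ) (x y : R) :
    hpoly (m + 1) k x y = coeff k (X ^ (2 * m + 1) * hpolySeries m x y) := by
  rw [coeff_X_pow_mul', hpolySeries, coeff_mul, Nat.sum_antidiagonal_eq_sum_range_succ_mk]
  split_ifs with hk
  · rw [hpoly, show k + 2 - 2 * (m + 1) = k - (2 * m + 1) + 1 by omega]
    refine sum_congr rfl fun j hj => ?_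
    have hjk : j ≤ k - (2 * m + 1) := Nat.lt_succ_iff.mp (mem_range.mp hj)
    simp only [coeff_rescale, invOneSubPow_val_succ_eq_mk_add_choose, coeff_mk, Nat.cast_mul]
    rw [show k + 1 - 2 * (m + 1) - j = k - (2 * m + 1) - j by omega,
      show k - (m + 1) - j = m + (k - (2 * m + 1) - j) by omega, Nat.add_sub_cancel]
    ring
  · rw [hpoly, show k + 2 - 2 * (m + 1) = 0 by omega, sum_range_zero]

theorem one_sub_C_mul_X_mul_rescale_invOneSubPow_succ (m : ℕ) (x : R) :
    (1 - C x * X) * rescale x (invOneSubPow R (m + 1)).val = rescale x (invOneSubPow R m).val := by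
  simpa [rescale_X] using
    congrArg (rescale x) (one_sub_pow_mul_invOneSubPow_val_add_eq_invOneSubPow_val R m 1)

theorem one_sub_mul_one_sub_mul_hpolySeries_succ (m : ℕ) (x y : R) :
    (1 - C x * X) * (1 - C y * X) * hpolySeries (m + 1) x y = hpolySeries m x y := by
  rw [hpolySeries, hpolySeries, ← one_sub_C_mul_X_mul_rescale_invOneSubPow_succ (m + 1) x,
    ← one_sub_C_mul_X_mul_rescale_invOneSubPow_succ (m + 1) y]
  ring

theorem coeff_succ_succ_one_sub_mul_one_sub_mul (k : ℕ) (x y : R) (f : R⟦X⟧) :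
    coeff (k + 2) ((1 - C x * X) * (1 - C y * X) * f) =
      coeff (k + 2) f - (x + y) * coeff (k + 1) f + x * y * coeff k f := by
  have : (1 - C x * X) * (1 - C y * X) * f = f - C (x + y) * (X * f) + C (x * y) * (X ^ 2 * f) := by
    simp only [map_add, map_mul]
    ring
  rw [this, map_add, map_sub, coeff_C_mul, coeff_C_mul, coeff_succ_X_mul, coeff_X_pow_mul]

theorem hpoly_recursion (ℓ k : ℕ) (hℓ : 1 ≤ ℓ) (x y : R) :
    hpoly (ℓ + 1) (k + 2) x y - (x + y) * hpoly (ℓ + 1) (k + 1) x y +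
        x * y * hpoly (ℓ + 1) k x y = hpoly ℓ k x y := by
  obtain ⟨m, rfl⟩ : ∃ m, ℓ = m + 1 := ⟨ℓ - 1, by omega⟩
  simp only [hpoly_eq_coeff_X_pow_mul_hpolySeries]
  rw [← coeff_succ_succ_one_sub_mul_one_sub_mul, mul_left_comm,
    one_sub_mul_one_sub_mul_hpolySeries_succ, show 2 * (m + 1) + 1 = 2 + (2 * m + 1) by ring,
    pow_add, mul_assoc, coeff_X_pow_mul]

end CommRing

open scoped IsMulCommutative in
theorem hpoly_recursion_of_commute {A : Type*} [Ring A] (ℓ k : ℕ) (hℓ : 1 ≤ ℓ) {x y : A}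
    (hxy : Commute x y) :
    hpoly (ℓ + 1) (k + 2) x y - (x + y) * hpoly (ℓ + 1) (k + 1) x y +
        x * y * hpoly (ℓ + 1) k x y = hpoly ℓ k x y := by
  have : IsMulCommutative (Subring.closure {x, y}) := Subring.isMulCommutative_closure <| by
    rintro a (rfl | rfl) b (rfl | rfl) <;> first | rfl | exact hxy.eq | exact hxy.eq.symm
  have hx : x ∈ Subring.closure {x, y} := Subring.subset_closure (by simp)
  have hy : y ∈ Subring.closure {x, y} := Subring.subset_closure (by simp)
  simpa only [map_sub, map_add, map_mul, map_hpoly, Subring.subtype_apply] using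
    congrArg (Subring.closure {x, y}).subtype (hpoly_recursion ℓ k hℓ ⟨x, hx⟩ ⟨y, hy⟩)

theorem Hpoly_eq_hpoly (ℓ k : ℕ) (q : Quaternion ℝ) : Hpoly ℓ k q = hpoly ℓ k q (star q) := rfl

theorem Hpoly_recursion_general (q : Quaternion ℝ) (ℓ k : ℕ) (hℓ : 1 ≤ ℓ) :
    Hpoly (ℓ + 1) (k + 2) q - ((2 * q.re : ℝ) : Quaternion ℝ) * Hpoly (ℓ + 1) (k + 1) q +
        ((‖q‖ ^ 2 : ℝ) : Quaternion ℝ) * Hpoly (ℓ + 1) k q =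
      Hpoly ℓ k q := by
  have hre : ((2 * q.re : ℝ) : Quaternion ℝ) = q + star q := (Quaternion.self_add_star' q).symm
  have hnorm : ((‖q‖ ^ 2 : ℝ) : Quaternion ℝ) = q * star q := by
    rw [sq, ← Quaternion.normSq_eq_norm_mul_self, Quaternion.self_mul_star]
  simp only [hre, hnorm, Hpoly_eq_hpoly]
  exact hpoly_recursion_of_commute ℓ k hℓ (star_comm_self' q).symm

/-- **Lemma 5.9.** The three-term recursion
`H_{ℓ+1}^{k+2}(q) - 2 (re q) H_{ℓ+1}^{k+1}(q) + ‖q‖² H_{ℓ+1}^k(q) = H_ℓ^k(q)`. -/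
theorem Hpoly_recursion (q : Quaternion ℝ) (ℓ k : ℕ) (hℓ : 1 ≤ ℓ) (hk : 2 * ℓ - 1 ≤ k) :
    Hpoly (ℓ + 1) (k + 2) q - ((2 * q.re : ℝ) : Quaternion ℝ) * Hpoly (ℓ + 1) (k + 1) q +
        ((‖q‖ ^ 2 : ℝ) : Quaternion ℝ) * Hpoly (ℓ + 1) k q =
      Hpoly ℓ k q :=
  Hpoly_recursion_general q ℓ k hℓ
end

section
/- Let q, s be real quaternions with ‖q‖ < ‖s‖ and let ℓ ≥ 1 be an integer. Then the quaternion Q := s² − 2·(re q)·s + ‖q‖² is nonzero, the series Σ_{k=2ℓ−1}^{∞} H_ℓ^k(q)·(s⁻¹)^{k+1} converges absolutely, and its sum equals (Q⁻¹)^ℓ. -/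
open Quaternion Finset Function

namespace QcsAux

/-- coefficient `c_L(a) = C(L+a, L)`, corresponding to `ℓ = L+1`. -/
def cc (L a : ℕ) : ℕ := (L + a).choose L

def pc (c : ℕ → ℕ) : ℕ → ℕ
  | 0 => 0
  | j + 1 => c j

def wc (c : ℕ → ℕ) (j : ℕ) : ℕ := c j - pc c j

lemma cc_zero (L : ℕ) : cc L 0 = 1 := by simp [cc]

lemma cc_mono (L : ℕ) : Monotone (cc L) := fun a b hab => Nat.choose_le_choose _ (by omega)

lemma pc_le (c : ℕ → ℕ) (hc : Monotone c) (j : ℕ) : pc c j ≤ c j := by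
  cases j with
  | zero => simp [pc]
  | succ j => exact hc (Nat.le_succ j)

lemma wc_le (c : ℕ → ℕ) (j : ℕ) : wc c j ≤ c j := Nat.sub_le _ _

lemma wc_cc_succ (M a : ℕ) : wc (cc (M + 1)) a = cc M a := by
  cases a with
  | zero => simp [wc, pc, cc]
  | succ a =>
    have h := Nat.choose_succ_succ (M + a + 1) M
    simp only [wc, pc, cc]
    have e1 : M + 1 + (a + 1) = (M + a + 1) + 1 := by omega
    have e2 : M + 1 + a = M + a + 1 := by omega
    have e3 : M + (a + 1) = M + a + 1 := by omega
    rw [e1, e2, e3, h]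
    simp only [Nat.succ_eq_add_one]
    omega

lemma wc_cc_zero_succ (a : ℕ) : wc (cc 0) (a + 1) = 0 := by
  simp [wc, pc, cc]

lemma wc_cc_zero_zero : wc (cc 0) 0 = 1 := by simp [wc, pc, cc]

lemma norm_ncast (n : ℕ) : ‖((n : ℕ) : ℍ)‖ = (n : ℝ) := by
  rw [← Quaternion.coe_natCast, Quaternion.norm_coe]
  simp

lemma cast_swap (m n : ℕ) (X : ℍ) : (m : ℍ) * ((n : ℍ) * X) = (n : ℍ) * ((m : ℍ) * X) := by
  rw [← mul_assoc, ← mul_assoc, (Nat.cast_commute m ((n : ℕ) : ℍ)).eq]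

/-- The telescoping lemma. -/
lemma tel (c : ℕ → ℕ) (hc : Monotone c) (Y : ℕ → ℍ)
    (h1 : Summable fun j => ((c j : ℕ) : ℍ) * Y j)
    (h2 : Summable fun j => ((c j : ℕ) : ℍ) * Y (j + 1)) :
    ∑' j, ((c j : ℕ) : ℍ) * (Y j - Y (j + 1)) = ∑' j, ((wc c j : ℕ) : ℍ) * Y j := by
  have hZ : Summable (fun j => ((pc c j : ℕ) : ℍ) * Y j) := by
    refine (summable_nat_add_iff 1).1 (h2.congr fun j => ?_)
    simp [pc]
  have key : ∑' j, ((c j : ℕ) : ℍ) * Y (j + 1) = ∑' j, ((pc c j : ℕ) : ℍ) * Y j := by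
    rw [Summable.tsum_eq_zero_add hZ]
    simp [pc]
  calc ∑' j, ((c j : ℕ) : ℍ) * (Y j - Y (j + 1))
      = ∑' j, (((c j : ℕ) : ℍ) * Y j - ((c j : ℕ) : ℍ) * Y (j + 1)) := by
        simp [mul_sub]
    _ = (∑' j, ((c j : ℕ) : ℍ) * Y j) - ∑' j, ((c j : ℕ) : ℍ) * Y (j + 1) := Summable.tsum_sub h1 h2
    _ = (∑' j, ((c j : ℕ) : ℍ) * Y j) - ∑' j, ((pc c j : ℕ) : ℍ) * Y j := by rw [key]
    _ = ∑' j, (((c j : ℕ) : ℍ) * Y j - ((pc c j : ℕ) : ℍ) * Y j) := (Summable.tsum_sub h1 hZ).symm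
    _ = ∑' j, ((wc c j : ℕ) : ℍ) * Y j := by
        refine tsum_congr fun j => ?_
        rw [← sub_mul, wc, Nat.cast_sub (pc_le c hc j)]


noncomputable def hh (q s : ℍ) (L x y : ℕ) : ℍ :=
  q ^ x * (star q) ^ y * (s⁻¹) ^ (x + y + 2 * L)

noncomputable def FF (q s : ℍ) (L : ℕ) (p : ℕ × ℕ) : ℍ :=
  ((cc L p.1 * cc L p.2 : ℕ) : ℍ) * hh q s (L + 1) p.1 p.2

noncomputable def Qq (q s : ℍ) : ℍ :=
  s ^ 2 - ((2 * q.re : ℝ) : ℍ) * s + ((‖q‖ ^ 2 : ℝ) : ℍ)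

variable {q s : ℍ}

lemma s_ne (h : ‖q‖ < ‖s‖) : s ≠ 0 := by
  intro hs
  rw [hs, norm_zero] at h
  exact absurd h (not_lt.2 (norm_nonneg q))

lemma rr_lt_one (h : ‖q‖ < ‖s‖) : ‖q‖ * ‖s⁻¹‖ < 1 := by
  have hs : (0:ℝ) < ‖s‖ := lt_of_le_of_lt (norm_nonneg q) h
  rw [norm_inv, ← div_eq_mul_inv]
  exact (div_lt_one hs).2 h

lemma norm_hh (L x y : ℕ) : ‖hh q s L x y‖ = ‖q‖ ^ x * ‖q‖ ^ y * ‖s⁻¹‖ ^ (x + y + 2 * L) := by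
  simp [hh, norm_mul, norm_pow, Quaternion.norm_star]

lemma summable_base (h : ‖q‖ < ‖s‖) (L : ℕ) :
    Summable (fun n => (cc L n : ℝ) * (‖q‖ * ‖s⁻¹‖) ^ n) := by
  have hr : ‖(‖q‖ * ‖s⁻¹‖ : ℝ)‖ < 1 := by
    rw [Real.norm_eq_abs, abs_of_nonneg (by positivity)]
    exact rr_lt_one h
  exact (summable_choose_mul_geometric_of_norm_lt_one L hr).congr fun n => by
    rw [cc, Nat.add_comm L n]


noncomputable def GG (q s : ℍ) (L : ℕ) (p : ℕ × ℕ) : ℍ :=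
  ((wc (cc L) p.1 * wc (cc L) p.2 : ℕ) : ℍ) * hh q s L p.1 p.2

lemma summable_oneD_norm (h : ‖q‖ < ‖s‖) (L : ℕ) (e : ℕ → ℕ) (he : ∀ n, e n ≤ cc L n)
    (x d : ℕ) : Summable (fun j => ‖((e j : ℕ) : ℍ) * hh q s L x (j + d)‖) := by
  refine Summable.of_nonneg_of_le (fun n => norm_nonneg _) (fun j => ?_)
    (((summable_base h L).mul_left (‖q‖ ^ (x + d) * ‖s⁻¹‖ ^ (x + d + 2 * L))))
  have heq : ‖((e j : ℕ) : ℍ) * hh q s L x (j + d)‖ =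
      (‖q‖ ^ (x + d) * ‖s⁻¹‖ ^ (x + d + 2 * L)) * ((e j : ℝ) * (‖q‖ * ‖s⁻¹‖) ^ j) := by
    rw [norm_mul, norm_ncast, norm_hh, mul_pow]
    ring
  rw [heq]
  have h1 : (e j : ℝ) ≤ (cc L j : ℝ) := by exact_mod_cast he j
  have h2 : (0:ℝ) ≤ (‖q‖ * ‖s⁻¹‖) ^ j := by positivity
  have h3 : (0:ℝ) ≤ ‖q‖ ^ (x + d) * ‖s⁻¹‖ ^ (x + d + 2 * L) := by positivity
  exact mul_le_mul_of_nonneg_left (mul_le_mul_of_nonneg_right h1 h2) h3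

lemma summable_oneD (h : ‖q‖ < ‖s‖) (L : ℕ) (e : ℕ → ℕ) (he : ∀ n, e n ≤ cc L n)
    (x d : ℕ) : Summable (fun j => ((e j : ℕ) : ℍ) * hh q s L x (j + d)) :=
  (summable_oneD_norm h L e he x d).of_norm

lemma summable_twoD_norm (h : ‖q‖ < ‖s‖) (L : ℕ) (e f : ℕ → ℕ)
    (he : ∀ n, e n ≤ cc L n) (hf : ∀ n, f n ≤ cc L n) (M : ℕ) :
    Summable (fun p : ℕ × ℕ => ‖((e p.1 * f p.2 : ℕ) : ℍ) * hh q s M p.1 p.2‖) := by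
  have h1 : Summable (fun a => (cc L a : ℝ) * (‖q‖ * ‖s⁻¹‖) ^ a * ‖s⁻¹‖ ^ (2 * M)) :=
    (summable_base h L).mul_right _
  have hprod := h1.mul_of_nonneg (summable_base h L)
    (fun a => by positivity) (fun a => by positivity)
  refine Summable.of_nonneg_of_le (fun p => norm_nonneg _) (fun p => ?_) hprod
  have heq : ‖((e p.1 * f p.2 : ℕ) : ℍ) * hh q s M p.1 p.2‖ =
      ((e p.1 : ℝ) * (‖q‖ * ‖s⁻¹‖) ^ p.1 * ‖s⁻¹‖ ^ (2 * M)) *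
        ((f p.2 : ℝ) * (‖q‖ * ‖s⁻¹‖) ^ p.2) := by
    rw [norm_mul, norm_ncast, norm_hh, Nat.cast_mul, mul_pow, mul_pow]
    ring
  rw [heq]
  have ha : (e p.1 : ℝ) ≤ (cc L p.1 : ℝ) := by exact_mod_cast he p.1
  have hb : (f p.2 : ℝ) ≤ (cc L p.2 : ℝ) := by exact_mod_cast hf p.2
  have r0 : (0:ℝ) ≤ ‖q‖ * ‖s⁻¹‖ := by positivity
  gcongr

lemma summable_twoD (h : ‖q‖ < ‖s‖) (L : ℕ) (e f : ℕ → ℕ)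
    (he : ∀ n, e n ≤ cc L n) (hf : ∀ n, f n ≤ cc L n) (M : ℕ) :
    Summable (fun p : ℕ × ℕ => ((e p.1 * f p.2 : ℕ) : ℍ) * hh q s M p.1 p.2) :=
  (summable_twoD_norm h L e f he hf M).of_norm


lemma commute_star_self (q : ℍ) : Commute (star q) q := by
  have hst : star q = ((2 * q.re : ℝ) : ℍ) - q := by
    rw [← Quaternion.self_add_star']; simp
  rw [hst]
  exact (Quaternion.coe_commute _ q).sub_left (Commute.refl q)

lemma coe_normsq_eq (q : ℍ) : ((‖q‖ ^ 2 : ℝ) : ℍ) = q * star q := by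
  rw [Quaternion.self_mul_star]
  congr 1
  rw [Quaternion.normSq_eq_norm_mul_self, sq]

lemma commute_s_Q : Commute s (Qq q s) := by
  unfold Qq
  exact (((Commute.refl s).pow_right 2).sub_right
    ((Quaternion.coe_commute _ s).symm.mul_right (Commute.refl s))).add_right
    (Quaternion.coe_commute _ s).symm

lemma hh_mul_Q (h : ‖q‖ < ‖s‖) (L a j : ℕ) :
    hh q s (L + 1) a j * Qq q s =
      hh q s L a j - hh q s L (a + 1) j - hh q s L a (j + 1) + hh q s L (a + 1) (j + 1) := by
  have hs0 : s ≠ 0 := s_ne h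
  set t := s⁻¹ with ht
  set n := a + j + 2 * L with hn
  have hts : ∀ m : ℕ, s * t ^ (m + 1) = t ^ m := by
    intro m
    rw [pow_succ', ← mul_assoc, mul_inv_cancel₀ hs0, one_mul]
  have hts2 : ∀ m : ℕ, s ^ 2 * t ^ (m + 2) = t ^ m := by
    intro m
    have : s ^ 2 * t ^ (m + 2) = s * (s * t ^ ((m + 1) + 1)) := by
      rw [show m + 2 = m + 1 + 1 from rfl, sq, mul_assoc]
    rw [this, hts (m + 1), hts m]
  have hcom : ∀ m : ℕ, t ^ m * Qq q s = Qq q s * t ^ m := by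
    intro m
    exact ((commute_s_Q.inv_left₀).pow_left m).eq
  have cqj : ∀ m : ℕ, (star q) ^ m * q = q * (star q) ^ m := fun m =>
    ((commute_star_self q).pow_left m).eq
  -- key expansion of Qq * t^(n+2)
  have key : Qq q s * t ^ (n + 2) =
      t ^ n - ((2 * q.re : ℝ) : ℍ) * t ^ (n + 1) + ((‖q‖ ^ 2 : ℝ) : ℍ) * t ^ (n + 2) := by
    show (s ^ 2 - ((2 * q.re : ℝ) : ℍ) * s + ((‖q‖ ^ 2 : ℝ) : ℍ)) * t ^ (n + 2) = _
    rw [add_mul, sub_mul, hts2 n, mul_assoc, hts (n + 1)]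
  -- the exponent bookkeeping
  have ea : a + j + 2 * (L + 1) = n + 2 := by omega
  have eb : (a + 1) + j + 2 * L = n + 1 := by omega
  have ec : a + (j + 1) + 2 * L = n + 1 := by omega
  have ed : (a + 1) + (j + 1) + 2 * L = n + 2 := by omega
  unfold hh
  rw [ea, eb, ec, ed]
  rw [mul_assoc, hcom (n + 2), key]
  rw [mul_add, mul_sub]
  -- middle term
  have mid : q ^ a * (star q) ^ j * (((2 * q.re : ℝ) : ℍ) * t ^ (n + 1)) =
      q ^ (a + 1) * (star q) ^ j * t ^ (n + 1) + q ^ a * (star q) ^ (j + 1) * t ^ (n + 1) := by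
    rw [← mul_assoc, ← Quaternion.self_add_star', mul_add,
      mul_assoc (q ^ a) ((star q) ^ j) q, cqj j, ← mul_assoc (q ^ a) q ((star q) ^ j),
      ← pow_succ, mul_assoc (q ^ a) ((star q) ^ j) (star q), ← pow_succ, add_mul]
  -- last term
  have las : q ^ a * (star q) ^ j * (((‖q‖ ^ 2 : ℝ) : ℍ) * t ^ (n + 2)) =
      q ^ (a + 1) * (star q) ^ (j + 1) * t ^ (n + 2) := by
    rw [← mul_assoc, coe_normsq_eq]
    have : q ^ a * (star q) ^ j * (q * star q) = q ^ (a + 1) * (star q) ^ (j + 1) := by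
      rw [mul_assoc (q ^ a) ((star q) ^ j) (q * star q), ← mul_assoc ((star q) ^ j) q (star q),
        cqj j, mul_assoc q ((star q) ^ j) (star q), ← pow_succ, ← mul_assoc, ← pow_succ]
    rw [this]
  rw [mid, las]
  simp only [mul_assoc]
  abel


lemma keyQ (h : ‖q‖ < ‖s‖) (L : ℕ) :
    ∑' p : ℕ × ℕ, (FF q s L p * Qq q s) = ∑' p : ℕ × ℕ, GG q s L p := by
  have hwle : ∀ n, wc (cc L) n ≤ cc L n := fun n => wc_le _ n
  have hcle : ∀ n, cc L n ≤ cc L n := fun n => le_rfl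
  have SFQ : Summable fun p : ℕ × ℕ => FF q s L p * Qq q s :=
    (summable_twoD h L (cc L) (cc L) hcle hcle (L + 1)).mul_right _
  have SG : Summable (GG q s L) := summable_twoD h L (wc (cc L)) (wc (cc L)) hwle hwle L
  have SVj : ∀ x d : ℕ, Summable fun j => ((wc (cc L) j : ℕ) : ℍ) * hh q s L x (j + d) :=
    fun x d => summable_oneD h L (wc (cc L)) hwle x d
  set V : ℕ → ℍ := fun x => ∑' j, ((wc (cc L) j : ℕ) : ℍ) * hh q s L x j with hV
  set KK : ℝ := ∑' j, (cc L j : ℝ) * (‖q‖ * ‖s⁻¹‖) ^ j with hKK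
  have hK0 : (0:ℝ) ≤ KK := tsum_nonneg (fun j => by positivity)
  have normV : ∀ x : ℕ, ‖V x‖ ≤ (‖q‖ * ‖s⁻¹‖) ^ x * ‖s⁻¹‖ ^ (2 * L) * KK := by
    intro x
    have h1 : ‖V x‖ ≤ ∑' j, ‖((wc (cc L) j : ℕ) : ℍ) * hh q s L x j‖ :=
      norm_tsum_le_tsum_norm (summable_oneD_norm h L (wc (cc L)) hwle x 0)
    refine h1.trans ?_
    have h2 : ∑' j, ‖((wc (cc L) j : ℕ) : ℍ) * hh q s L x j‖ ≤
        ∑' j, ((‖q‖ * ‖s⁻¹‖) ^ x * ‖s⁻¹‖ ^ (2 * L)) * ((cc L j : ℝ) * (‖q‖ * ‖s⁻¹‖) ^ j) := by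
      refine Summable.tsum_le_tsum (fun j => ?_) (summable_oneD_norm h L (wc (cc L)) hwle x 0)
        ((summable_base h L).mul_left _)
      have heq : ‖((wc (cc L) j : ℕ) : ℍ) * hh q s L x j‖ =
          ((‖q‖ * ‖s⁻¹‖) ^ x * ‖s⁻¹‖ ^ (2 * L)) * ((wc (cc L) j : ℝ) * (‖q‖ * ‖s⁻¹‖) ^ j) := by
        rw [norm_mul, norm_ncast, norm_hh, mul_pow, mul_pow]
        ring
      rw [heq]
      have hle : (wc (cc L) j : ℝ) ≤ (cc L j : ℝ) := by exact_mod_cast hwle j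
      gcongr
    refine h2.trans ?_
    rw [tsum_mul_left]
  have SccV : ∀ d : ℕ, Summable fun a => ((cc L a : ℕ) : ℍ) * V (a + d) := by
    intro d
    refine Summable.of_norm_bounded
      (g := fun a => (‖s⁻¹‖ ^ (2 * L) * KK) * ((cc L a : ℝ) * (‖q‖ * ‖s⁻¹‖) ^ a))
      ((summable_base h L).mul_left _) (fun a => ?_)
    rw [norm_mul, norm_ncast]
    have hrd : (‖q‖ * ‖s⁻¹‖) ^ (a + d) ≤ (‖q‖ * ‖s⁻¹‖) ^ a := by
      rw [pow_add]
      exact mul_le_of_le_one_right (by positivity)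
        (pow_le_one₀ (by positivity) (le_of_lt (rr_lt_one h)))
    calc (cc L a : ℝ) * ‖V (a + d)‖
        ≤ (cc L a : ℝ) * ((‖q‖ * ‖s⁻¹‖) ^ (a + d) * ‖s⁻¹‖ ^ (2 * L) * KK) :=
          mul_le_mul_of_nonneg_left (normV (a + d)) (by positivity)
      _ ≤ (cc L a : ℝ) * ((‖q‖ * ‖s⁻¹‖) ^ a * ‖s⁻¹‖ ^ (2 * L) * KK) := by gcongr
      _ = (‖s⁻¹‖ ^ (2 * L) * KK) * ((cc L a : ℝ) * (‖q‖ * ‖s⁻¹‖) ^ a) := by ring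
  have perterm : ∀ a j : ℕ, FF q s L (a, j) * Qq q s =
      ((cc L j : ℕ) : ℍ) *
        ((((cc L a : ℕ) : ℍ) * (hh q s L a j - hh q s L (a + 1) j)) -
          (((cc L a : ℕ) : ℍ) * (hh q s L a (j + 1) - hh q s L (a + 1) (j + 1)))) := by
    intro a j
    show ((cc L a * cc L j : ℕ) : ℍ) * hh q s (L + 1) a j * Qq q s = _
    rw [mul_assoc, hh_mul_Q h L a j, Nat.cast_mul]
    simp only [mul_sub, mul_add, sub_mul, mul_assoc]
    simp only [cast_swap (cc L j) (cc L a)]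
    abel
  calc ∑' p : ℕ × ℕ, (FF q s L p * Qq q s)
      = ∑' a, ∑' j, (FF q s L (a, j) * Qq q s) :=
        Summable.tsum_prod' SFQ (fun a => SFQ.prod_factor a)
    _ = ∑' a, ((cc L a : ℕ) : ℍ) * (V a - V (a + 1)) := by
        refine tsum_congr fun a => ?_
        have hY1 : Summable fun j => ((cc L j : ℕ) : ℍ) *
            (((cc L a : ℕ) : ℍ) * (hh q s L a j - hh q s L (a + 1) j)) := by
          refine (((summable_oneD h L (cc L) hcle a 0).sub
            (summable_oneD h L (cc L) hcle (a + 1) 0)).mul_left ((cc L a : ℕ) : ℍ)).congr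
            fun j => ?_
          rw [← mul_sub, cast_swap]
          rfl
        have hY2 : Summable fun j => ((cc L j : ℕ) : ℍ) *
            (((cc L a : ℕ) : ℍ) * (hh q s L a (j + 1) - hh q s L (a + 1) (j + 1))) := by
          refine (((summable_oneD h L (cc L) hcle a 1).sub
            (summable_oneD h L (cc L) hcle (a + 1) 1)).mul_left ((cc L a : ℕ) : ℍ)).congr
            fun j => ?_
          rw [← mul_sub, cast_swap]
        calc ∑' j, FF q s L (a, j) * Qq q s
            = ∑' j, ((cc L j : ℕ) : ℍ) *
                ((fun y => ((cc L a : ℕ) : ℍ) * (hh q s L a y - hh q s L (a + 1) y)) j -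
                 (fun y => ((cc L a : ℕ) : ℍ) * (hh q s L a y - hh q s L (a + 1) y)) (j + 1)) :=
              tsum_congr fun j => perterm a j
          _ = ∑' j, ((wc (cc L) j : ℕ) : ℍ) *
                ((cc L a : ℕ) : ℍ) * (hh q s L a j - hh q s L (a + 1) j) := by
              rw [tel (cc L) (cc_mono L)
                (fun y => ((cc L a : ℕ) : ℍ) * (hh q s L a y - hh q s L (a + 1) y)) hY1 hY2]
              exact tsum_congr fun j => (mul_assoc _ _ _).symm
          _ = ((cc L a : ℕ) : ℍ) * ∑' j, ((wc (cc L) j : ℕ) : ℍ) *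
                (hh q s L a j - hh q s L (a + 1) j) := by
              rw [← tsum_mul_left]
              exact tsum_congr fun j => by rw [mul_assoc, cast_swap, ← mul_assoc]
          _ = ((cc L a : ℕ) : ℍ) * (V a - V (a + 1)) := by
              congr 1
              calc ∑' j, ((wc (cc L) j : ℕ) : ℍ) * (hh q s L a j - hh q s L (a + 1) j)
                  = ∑' j, (((wc (cc L) j : ℕ) : ℍ) * hh q s L a j -
                      ((wc (cc L) j : ℕ) : ℍ) * hh q s L (a + 1) j) := by
                    simp only [mul_sub]
                _ = V a - V (a + 1) := Summable.tsum_sub (SVj a 0) (SVj (a + 1) 0)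
    _ = ∑' a, ((wc (cc L) a : ℕ) : ℍ) * V a := tel (cc L) (cc_mono L) V (SccV 0) (SccV 1)
    _ = ∑' a, ∑' j, GG q s L (a, j) := by
        refine tsum_congr fun a => ?_
        rw [← tsum_mul_left]
        refine tsum_congr fun j => ?_
        show ((wc (cc L) a : ℕ) : ℍ) * (((wc (cc L) j : ℕ) : ℍ) * hh q s L a j) =
          ((wc (cc L) a * wc (cc L) j : ℕ) : ℍ) * hh q s L a j
        rw [Nat.cast_mul, mul_assoc]
    _ = ∑' p : ℕ × ℕ, GG q s L p := (Summable.tsum_prod' SG (fun a => SG.prod_factor a)).symm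


lemma GG_zero_eq_one (h : ‖q‖ < ‖s‖) : ∑' p : ℕ × ℕ, GG q s 0 p = 1 := by
  have hvan : ∀ p : ℕ × ℕ, p ≠ (0, 0) → GG q s 0 p = 0 := by
    rintro ⟨a, b⟩ hp
    have : wc (cc 0) a * wc (cc 0) b = 0 := by
      rcases Nat.eq_zero_or_pos a with ha | ha
      · rcases Nat.eq_zero_or_pos b with hb | hb
        · exact absurd (by simp [ha, hb]) hp
        · obtain ⟨b', rfl⟩ : ∃ b', b = b' + 1 := ⟨b - 1, by omega⟩
          simp [wc_cc_zero_succ]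
      · obtain ⟨a', rfl⟩ : ∃ a', a = a' + 1 := ⟨a - 1, by omega⟩
        simp [wc_cc_zero_succ]
    simp [GG, this]
  rw [tsum_eq_single (0, 0) hvan]
  simp [GG, wc_cc_zero_zero, hh]

lemma GG_succ_eq_FF (M : ℕ) : GG q s (M + 1) = FF q s M := by
  funext p
  simp [GG, FF, wc_cc_succ]

lemma FF_mul_pow (h : ‖q‖ < ‖s‖) : ∀ L, (∑' p : ℕ × ℕ, FF q s L p) * Qq q s ^ (L + 1) = 1 := by
  intro L
  induction L with
  | zero =>
    rw [pow_one, ← tsum_mul_right, keyQ h 0, GG_zero_eq_one h]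
  | succ M ih =>
    rw [pow_succ' (Qq q s) (M + 1), ← mul_assoc, ← tsum_mul_right, keyQ h (M + 1),
      GG_succ_eq_FF M, ih]

-- series rearrangement
lemma Hpoly_mul_eq (L n : ℕ) :
    Hpoly (L + 1) (n + (2 * L + 1)) q * (s⁻¹) ^ ((n + (2 * L + 1)) + 1) =
      ∑ p ∈ Finset.HasAntidiagonal.antidiagonal n, FF q s L p := by
  rw [Hpoly]
  have e1 : n + (2 * L + 1) + 2 - 2 * (L + 1) = n + 1 := by omega
  rw [e1, Finset.sum_mul, Finset.Nat.sum_antidiagonal_eq_sum_range_succ_mk]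
  conv_rhs => rw [← Finset.sum_range_reflect]
  refine Finset.sum_congr rfl fun j hj => ?_
  rw [Finset.mem_range] at hj
  have e2 : n + 1 - 1 - j = n - j := by omega
  have e3 : n - (n - j) = j := by omega
  have e4 : L + 1 - 1 + j = L + j := by omega
  have e5 : n + (2 * L + 1) - (L + 1) - j = L + (n - j) := by omega
  have e6 : n + (2 * L + 1) + 1 - 2 * (L + 1) - j = n - j := by omega
  have e7 : (n - j) + j + 2 * (L + 1) = n + (2 * L + 1) + 1 := by omega
  have e8 : L + 1 - 1 = L := by omega
  rw [e2, e3]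
  show _ = ((cc L (n - j) * cc L j : ℕ) : ℍ) * hh q s (L + 1) (n - j) j
  unfold hh cc
  rw [e4, e5, e6, e7, e8]
  rw [Nat.mul_comm ((L + j).choose L) ((L + (n - j)).choose L)]
  simp only [mul_assoc]

lemma Hpoly_vanish (L k : ℕ) (hk : k < 2 * L + 1) : Hpoly (L + 1) k q = 0 := by
  have : k + 2 - 2 * (L + 1) = 0 := by omega
  rw [Hpoly, this]
  simp

lemma summable_H (h : ‖q‖ < ‖s‖) (L : ℕ) :
    Summable (fun k : ℕ => ‖Hpoly (L + 1) k q * (s⁻¹) ^ (k + 1)‖) := by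
  have SN : Summable (fun p : ℕ × ℕ => ‖FF q s L p‖) :=
    summable_twoD_norm h L (cc L) (cc L) (fun _ => le_rfl) (fun _ => le_rfl) (L + 1)
  have SNe : Summable (fun x : (Σ n : ℕ, Finset.HasAntidiagonal.antidiagonal n) => ‖FF q s L x.2‖) :=
    (Equiv.summable_iff Finset.HasAntidiagonal.sigmaAntidiagonalEquivProd).2 SN
  have Sfib : Summable (fun n : ℕ => ∑' c : Finset.HasAntidiagonal.antidiagonal n, ‖FF q s L (c : ℕ × ℕ)‖) :=
    SNe.sigma
  have SB0 : Summable (fun n : ℕ => ∑ p ∈ Finset.HasAntidiagonal.antidiagonal n, ‖FF q s L p‖) :=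
    Sfib.congr fun n => Finset.tsum_subtype (Finset.HasAntidiagonal.antidiagonal n) (fun p => ‖FF q s L p‖)
  set B : ℕ → ℝ := fun k =>
    if 2 * L + 1 ≤ k then ∑ p ∈ Finset.HasAntidiagonal.antidiagonal (k - (2 * L + 1)), ‖FF q s L p‖ else 0
    with hB
  have SB : Summable B := by
    rw [← summable_nat_add_iff (2 * L + 1)]
    refine SB0.congr fun n => ?_
    simp [hB, Nat.add_sub_cancel]
    intro; omega
  refine Summable.of_nonneg_of_le (fun k => norm_nonneg _) (fun k => ?_) SB
  by_cases hk : 2 * L + 1 ≤ k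
  · obtain ⟨n, rfl⟩ : ∃ n, k = n + (2 * L + 1) := ⟨k - (2 * L + 1), by omega⟩
    rw [Hpoly_mul_eq]
    have : B (n + (2 * L + 1)) = ∑ p ∈ Finset.HasAntidiagonal.antidiagonal n, ‖FF q s L p‖ := by
      simp [hB, Nat.add_sub_cancel]
      intro; omega
    rw [this]
    exact norm_sum_le _ _
  · rw [Hpoly_vanish L k (by omega), zero_mul, norm_zero]
    simp [hB, hk, show ¬ 2 * L < k by omega]

lemma tsum_H_eq (h : ‖q‖ < ‖s‖) (L : ℕ) :
    ∑' k : ℕ, Hpoly (L + 1) k q * (s⁻¹) ^ (k + 1) = ∑' p : ℕ × ℕ, FF q s L p := by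
  have SF : Summable (FF q s L) :=
    (summable_twoD_norm h L (cc L) (cc L) (fun _ => le_rfl) (fun _ => le_rfl) (L + 1)).of_norm
  have hinj : Function.Injective (fun n : ℕ => n + (2 * L + 1)) := add_left_injective _
  have hsupp : Function.support (fun k : ℕ => Hpoly (L + 1) k q * (s⁻¹) ^ (k + 1)) ⊆
      Set.range (fun n : ℕ => n + (2 * L + 1)) := by
    intro k hk
    rcases le_or_gt (2 * L + 1) k with h1 | h1
    · exact ⟨k - (2 * L + 1), by simp; omega⟩
    · exfalso
      apply hk
      show Hpoly (L + 1) k q * (s⁻¹) ^ (k + 1) = 0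
      rw [Hpoly_vanish L k (by omega), zero_mul]
  calc ∑' k : ℕ, Hpoly (L + 1) k q * (s⁻¹) ^ (k + 1)
      = ∑' n : ℕ, Hpoly (L + 1) (n + (2 * L + 1)) q * (s⁻¹) ^ ((n + (2 * L + 1)) + 1) :=
        (hinj.tsum_eq hsupp).symm
    _ = ∑' n : ℕ, ∑ p ∈ Finset.HasAntidiagonal.antidiagonal n, FF q s L p :=
        tsum_congr fun n => Hpoly_mul_eq L n
    _ = ∑' n : ℕ, ∑' c : Finset.HasAntidiagonal.antidiagonal n, FF q s L (c : ℕ × ℕ) :=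
        tsum_congr fun n => (Finset.tsum_subtype _ _).symm
    _ = ∑' x : (Σ n : ℕ, Finset.HasAntidiagonal.antidiagonal n), FF q s L x.2 :=
        (Summable.tsum_sigma' (fun n => Summable.of_finite)
          ((Equiv.summable_iff Finset.HasAntidiagonal.sigmaAntidiagonalEquivProd).2 SF)).symm
    _ = ∑' p : ℕ × ℕ, FF q s L p :=
        Equiv.tsum_eq Finset.HasAntidiagonal.sigmaAntidiagonalEquivProd (FF q s L)


end QcsAux

open QcsAux in
/-- **Theorem 5.10.** For `‖q‖ < ‖s‖` the pseudo-Cauchy kernel `Q_{c,s}(q) = s² - 2 (re q) s + ‖q‖²`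
is nonzero, and its `ℓ`-th inverse power admits the absolutely convergent series expansion
`Q_{c,s}^{-ℓ}(q) = ∑_{k=2ℓ-1}^∞ H_ℓ^k(q) s^{-k-1}` (the terms with `k < 2ℓ-1` vanish). -/
theorem Qcs_inv_pow_series (q s : Quaternion ℝ) (ℓ : ℕ) (hℓ : 1 ≤ ℓ) (h : ‖q‖ < ‖s‖) :
    s ^ 2 - ((2 * q.re : ℝ) : Quaternion ℝ) * s + ((‖q‖ ^ 2 : ℝ) : Quaternion ℝ) ≠ 0 ∧
    Summable (fun k : ℕ => ‖Hpoly ℓ k q * (s⁻¹) ^ (k + 1)‖) ∧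
    ∑' k : ℕ, Hpoly ℓ k q * (s⁻¹) ^ (k + 1) =
      ((s ^ 2 - ((2 * q.re : ℝ) : Quaternion ℝ) * s + ((‖q‖ ^ 2 : ℝ) : Quaternion ℝ))⁻¹) ^ ℓ := by
  obtain ⟨L, rfl⟩ : ∃ L, ℓ = L + 1 := ⟨ℓ - 1, by omega⟩
  have hQ0 : Qq q s ≠ 0 := by
    intro h0
    have h1 := FF_mul_pow h 0
    rw [h0] at h1
    simp at h1
  refine ⟨hQ0, summable_H h L, ?_⟩
  rw [tsum_H_eq h L]
  show _ = ((Qq q s)⁻¹) ^ (L + 1)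
  rw [inv_pow]
  exact eq_inv_of_mul_eq_one_left (FF_mul_pow h L)
end

section
/- Let q be a real quaternion and let ℓ ≥ 1, k ≥ 2ℓ be integers. Then P_ℓ^k(q) = H_{ℓ+1}^{k+1}(q) − (star q)·H_{ℓ+1}^{k}(q), where P_ℓ^k(q) := Σ_{j=0}^{k−2ℓ} C(ℓ+j−1, ℓ−1)·C(k−ℓ−j, ℓ)·q^{k−2ℓ−j}·(star q)^j. (Proposition 5.13 of the paper: the relation between the axially Analytic-Harmonic polynomials P_ℓ^k and the polynomials H_ℓ^k.) -/
/-- The axially Analytic-Harmonic polynomials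
`P_ℓ^k(q) = ∑_{j=0}^{k-2ℓ} C(ℓ+j-1,ℓ-1) C(k-ℓ-j,ℓ) q^{k-2ℓ-j} q̄^j` (for `k ≥ 2ℓ`). -/
noncomputable def Ppoly (ℓ k : ℕ) (q : Quaternion ℝ) : Quaternion ℝ :=
  ∑ j ∈ Finset.range (k + 1 - 2 * ℓ),
    ((Nat.choose (ℓ - 1 + j) (ℓ - 1) * Nat.choose (k - ℓ - j) ℓ : ℕ) : Quaternion ℝ) *
      q ^ (k - 2 * ℓ - j) * (star q) ^ j

open Finset Finset.Nat

section HomogSum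

variable {R : Type*} [Semiring R]

def homogSum (c : ℕ → ℕ → ℕ) (x y : R) (n : ℕ) : R :=
  ∑ p ∈ antidiagonal n, (c p.1 p.2 : R) * x ^ p.1 * y ^ p.2

theorem homogSum_eq_sum_range (c : ℕ → ℕ → ℕ) (x y : R) (n : ℕ) :
    homogSum c x y n = ∑ j ∈ range (n + 1), (c (n - j) j : R) * x ^ (n - j) * y ^ j := by
  rw [homogSum, ← sum_antidiagonal_swap]
  exact sum_antidiagonal_eq_sum_range_succ (fun j i => (c i j : R) * x ^ i * y ^ j) n

theorem homogSum_add_coeff (c d : ℕ → ℕ → ℕ) (x y : R) (n : ℕ) :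
    homogSum (fun i j => c i j + d i j) x y n = homogSum c x y n + homogSum d x y n := by
  simp only [homogSum, Nat.cast_add, add_mul, sum_add_distrib]

theorem homogSum_succ_of_coeff_zero {c : ℕ → ℕ → ℕ} (hc : ∀ i, c i 0 = 0) {x y : R}
    (hxy : Commute x y) (n : ℕ) :
    homogSum c x y (n + 1) = y * homogSum (fun i j => c i (j + 1)) x y n := by
  rw [homogSum, sum_antidiagonal_succ', hc, Nat.cast_zero, zero_mul, zero_mul, zero_add,
    homogSum, mul_sum]
  refine sum_congr rfl fun p _ => ?_
  have hy : Commute ((c p.1 (p.2 + 1) : R) * x ^ p.1) y :=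
    (Nat.cast_commute _ y).mul_left (hxy.pow_left p.1)
  rw [pow_succ', ← mul_assoc, hy.eq, mul_assoc y]

theorem homogSum_choose_succ_add (m : ℕ) (b : ℕ → ℕ) (x y : R) (n : ℕ) :
    homogSum (fun i j => (m + 1 + j).choose (m + 1) * b i) x y n =
      homogSum (fun i j => (m + j).choose m * b i) x y n +
        homogSum (fun i j => (m + j).choose (m + 1) * b i) x y n := by
  rw [← homogSum_add_coeff]
  congr with i j
  rw [← add_mul, add_right_comm, Nat.choose_succ_succ']

theorem homogSum_choose_succ {m : ℕ} (b : ℕ → ℕ) {x y : R} (hxy : Commute x y) (n : ℕ) :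
    homogSum (fun i j => (m + j).choose (m + 1) * b i) x y (n + 1) =
      y * homogSum (fun i j => (m + 1 + j).choose (m + 1) * b i) x y n := by
  rw [homogSum_succ_of_coeff_zero (fun i => by simp) hxy]
  simp only [← add_assoc, add_right_comm m _ 1]

end HomogSum

theorem Ppoly_eq_homogSum (m n : ℕ) (q : Quaternion ℝ) :
    Ppoly (m + 1) (2 * (m + 1) + n) q =
      homogSum (fun i j => (m + j).choose m * (m + 1 + i).choose (m + 1)) q (star q) n := by
  rw [Ppoly, homogSum_eq_sum_range, show 2 * (m + 1) + n + 1 - 2 * (m + 1) = n + 1 by omega]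
  refine sum_congr rfl fun j hj => ?_
  have hjn : j ≤ n := Nat.lt_succ_iff.mp (mem_range.mp hj)
  rw [show 2 * (m + 1) + n - 2 * (m + 1) - j = n - j by omega,
    show 2 * (m + 1) + n - (m + 1) - j = m + 1 + (n - j) by omega, Nat.add_sub_cancel]

theorem Hpoly_eq_homogSum (ℓ n : ℕ) (q : Quaternion ℝ) :
    Hpoly (ℓ + 1) (2 * ℓ + 1 + n) q =
      homogSum (fun i j => (ℓ + j).choose ℓ * (ℓ + i).choose ℓ) q (star q) n := by
  rw [Hpoly, homogSum_eq_sum_range, show 2 * ℓ + 1 + n + 2 - 2 * (ℓ + 1) = n + 1 by omega]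
  refine sum_congr rfl fun j hj => ?_
  have hjn : j ≤ n := Nat.lt_succ_iff.mp (mem_range.mp hj)
  rw [show 2 * ℓ + 1 + n + 1 - 2 * (ℓ + 1) - j = n - j by omega,
    show 2 * ℓ + 1 + n - (ℓ + 1) - j = ℓ + (n - j) by omega, Nat.add_sub_cancel]

theorem star_mul_Hpoly_eq_homogSum (m n : ℕ) (q : Quaternion ℝ) :
    star q * Hpoly (m + 2) (2 * (m + 1) + n) q =
      homogSum (fun i j => (m + j).choose (m + 1) * (m + 1 + i).choose (m + 1)) q (star q) n := by
  cases n with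
  | zero =>
    rw [Hpoly, show 2 * (m + 1) + 0 + 2 - 2 * (m + 2) = 0 by omega]
    simp [homogSum]
  | succ n =>
    rw [homogSum_choose_succ _ (star_comm_self (x := q)).symm, ← Hpoly_eq_homogSum,
      show 2 * (m + 1) + (n + 1) = 2 * (m + 1) + 1 + n by ring]

/-- **Proposition 5.13.** The relation `P_ℓ^k(q) = H_{ℓ+1}^{k+1}(q) - q̄ · H_{ℓ+1}^k(q)`. -/
theorem Ppoly_eq_Hpoly_sub (q : Quaternion ℝ) (ℓ k : ℕ) (hℓ : 1 ≤ ℓ) (hk : 2 * ℓ ≤ k) :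
    Ppoly ℓ k q = Hpoly (ℓ + 1) (k + 1) q - star q * Hpoly (ℓ + 1) k q := by
  obtain ⟨m, rfl⟩ := Nat.exists_eq_add_of_le' hℓ
  obtain ⟨n, rfl⟩ := Nat.exists_eq_add_of_le hk
  rw [eq_sub_iff_add_eq, Ppoly_eq_homogSum, star_mul_Hpoly_eq_homogSum,
    show 2 * (m + 1) + n + 1 = 2 * (m + 1) + 1 + n by ring, Hpoly_eq_homogSum,
    homogSum_choose_succ_add]
end

section
/- Let q, s be real quaternions with ‖q‖ < ‖s‖ and let ℓ ≥ 1 be an integer. Then, with Q := s² − 2·(re q)·s + ‖q‖² (which is nonzero since ‖q‖ < ‖s‖), the series Σ_{k=2ℓ}^{∞} P_ℓ^k(q)·(s⁻¹)^{k+1} converges absolutely and its sum equals (s − star q)·(Q⁻¹)^{ℓ+1}. -/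
def cc (ℓ k j : ℕ) : ℕ := Nat.choose (ℓ - 1 + j) (ℓ - 1) * Nat.choose (k - ℓ - j) ℓ

def cmm (ℓ k : ℕ) : ℕ → ℕ
  | 0 => 0
  | j + 1 => cc ℓ k j

lemma cc_eq_zero {ℓ k j : ℕ} (hℓ : 1 ≤ ℓ) (h : k < 2 * ℓ + j) : cc ℓ k j = 0 := by
  have h1 : k - ℓ - j < ℓ := by omega
  simp [cc, Nat.choose_eq_zero_of_lt h1]

lemma coeff_id {ℓ : ℕ} (hℓ : 2 ≤ ℓ) (k j : ℕ) :
    cc ℓ (k + 2) j + cmm ℓ k j = cc ℓ (k + 1) j + cmm ℓ (k + 1) j + cc (ℓ - 1) k j := by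
  obtain ⟨a, rfl⟩ : ∃ a, ℓ = a + 2 := ⟨ℓ - 2, by omega⟩
  cases j with
  | zero =>
    simp only [cmm, cc, Nat.add_zero, Nat.sub_zero, add_zero]
    rw [show a + 2 - 1 = a + 1 from by omega, show a + 1 - 1 = a from by omega,
      Nat.choose_self, Nat.choose_self, one_mul, one_mul, one_mul]
    by_cases hk : a + 1 ≤ k
    · rw [show k + 2 - (a + 2) = (k - (a + 1)) + 1 from by omega,
        show k + 1 - (a + 2) = k - (a + 1) from by omega,
        show a + 2 = (a + 1) + 1 from by omega,
        Nat.choose_succ_succ (k - (a + 1)) (a + 1)]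
      simp only [Nat.succ_eq_add_one]
      omega
    · rw [show k + 2 - (a + 2) = 0 from by omega,
        show k + 1 - (a + 2) = 0 from by omega,
        show k - (a + 1) = 0 from by omega,
        Nat.choose_eq_zero_of_lt (by omega : 0 < a + 2),
        Nat.choose_eq_zero_of_lt (by omega : 0 < a + 1)]
  | succ i =>
    simp only [cmm, cc]
    rw [show a + 2 - 1 = a + 1 from by omega, show a + 1 - 1 = a from by omega]
    rw [show a + 1 + (i + 1) = (a + 1 + i) + 1 from by omega,
      show a + (i + 1) = a + 1 + i from by omega,
      show k + 2 - (a + 2) - (i + 1) = k + 1 - (a + 2) - i from by omega,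
      show k - (a + 1) - (i + 1) = k - (a + 2) - i from by omega,
      show k + 1 - (a + 2) - (i + 1) = k - (a + 2) - i from by omega,
      Nat.choose_succ_succ (a + 1 + i) a]
    set A := Nat.choose (a + 1 + i) (a + 1) with hA
    set B := Nat.choose (a + 1 + i) a with hB
    set U := Nat.choose (k + 1 - (a + 2) - i) (a + 2) with hU
    set V := Nat.choose (k - (a + 2) - i) (a + 2) with hV
    set W := Nat.choose (k - (a + 2) - i) (a + 1) with hW
    have hUVW : U = W + V := by
      by_cases hk : a + 2 + i ≤ k
      · rw [hU, hV, hW, show k + 1 - (a + 2) - i = (k - (a + 2) - i) + 1 from by omega,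
          show a + 2 = (a + 1) + 1 from by omega,
          Nat.choose_succ_succ (k - (a + 2) - i) (a + 1)]
      · rw [hU, hV, hW, show k + 1 - (a + 2) - i = 0 from by omega,
          show k - (a + 2) - i = 0 from by omega,
          Nat.choose_eq_zero_of_lt (by omega : 0 < a + 2),
          Nat.choose_eq_zero_of_lt (by omega : 0 < a + 1)]
    rw [hUVW]
    ring

lemma coeff_id1 (k j : ℕ) :
    cc 1 (k + 2) j + cmm 1 k j = cc 1 (k + 1) j + cmm 1 (k + 1) j + (if j = 0 then 1 else 0) := by
  cases j with
  | zero => simp [cc, cmm, Nat.choose_one_right]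
  | succ i => simp [cc, cmm, Nat.choose_one_right]; omega

lemma Ppoly_eq_sum (q : Quaternion ℝ) {ℓ : ℕ} (hℓ : 1 ≤ ℓ) (k N : ℕ) (hN : k + 1 - 2 * ℓ ≤ N) :
    Ppoly ℓ k q = ∑ j ∈ Finset.range N, cc ℓ k j • (q ^ (k - 2 * ℓ - j) * (star q) ^ j) := by
  rw [Ppoly]
  have h1 : ∀ j ∈ Finset.range (k + 1 - 2 * ℓ),
      ((Nat.choose (ℓ - 1 + j) (ℓ - 1) * Nat.choose (k - ℓ - j) ℓ : ℕ) : Quaternion ℝ) *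
        q ^ (k - 2 * ℓ - j) * (star q) ^ j
      = cc ℓ k j • (q ^ (k - 2 * ℓ - j) * (star q) ^ j) := by
    intro j _
    rw [nsmul_eq_mul, cc, mul_assoc]
  rw [Finset.sum_congr rfl h1]
  refine Finset.sum_subset (Finset.range_subset_range.mpr hN) ?_
  intro j _ hj
  have hj' : k < 2 * ℓ + j := by
    simp only [Finset.mem_range, not_lt] at hj; omega
  rw [cc_eq_zero hℓ hj', zero_smul]

lemma Ppoly_small (q : Quaternion ℝ) {ℓ k : ℕ} (hk : k + 1 ≤ 2 * ℓ) : Ppoly ℓ k q = 0 := by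
  rw [Ppoly, show k + 1 - 2 * ℓ = 0 from by omega, Finset.sum_range_zero]

section RingLemmas
variable {R : Type*} [Ring R] {x y : R}

lemma mul_term_x (c a b : ℕ) : x * (c • (x ^ a * y ^ b)) = c • (x ^ (a + 1) * y ^ b) := by
  rw [mul_smul_comm, ← mul_assoc, ← pow_succ']

lemma mul_term_y (hxy : Commute x y) (c a b : ℕ) :
    y * (c • (x ^ a * y ^ b)) = c • (x ^ a * y ^ (b + 1)) := by
  rw [mul_smul_comm, ← mul_assoc, (hxy.symm.pow_right a).eq, mul_assoc, ← pow_succ']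

lemma mul_term_xy (hxy : Commute x y) (c a b : ℕ) :
    (x * y) * (c • (x ^ a * y ^ b)) = c • (x ^ (a + 1) * y ^ (b + 1)) := by
  rw [mul_assoc, mul_term_y hxy, mul_term_x]

end RingLemmas

lemma key_general (q : Quaternion ℝ) {ℓ : ℕ} (hℓ : 1 ≤ ℓ) (k : ℕ) (e : ℕ → ℕ)
    (hco : ∀ j, cc ℓ (k + 2) j + cmm ℓ k j = cc ℓ (k + 1) j + cmm ℓ (k + 1) j + e j) :
    Ppoly ℓ (k + 2) q + ((‖q‖ ^ 2 : ℝ) : Quaternion ℝ) * Ppoly ℓ k q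
      = ((2 * q.re : ℝ) : Quaternion ℝ) * Ppoly ℓ (k + 1) q
        + ∑ j ∈ Finset.range (k + 4), e j • (q ^ (k + 2 - 2 * ℓ - j) * (star q) ^ j) := by
  have hxy : Commute q (star q) := by
    unfold Commute SemiconjBy
    rw [Quaternion.self_mul_star, Quaternion.star_mul_self]
  have hn : ((‖q‖ ^ 2 : ℝ) : Quaternion ℝ) = q * star q := by
    rw [Quaternion.self_mul_star, Quaternion.normSq_eq_norm_mul_self, sq]
  have ht : ((2 * q.re : ℝ) : Quaternion ℝ) = q + star q := (Quaternion.self_add_star' q).symm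
  have hA : ((‖q‖ ^ 2 : ℝ) : Quaternion ℝ) * Ppoly ℓ k q
      = ∑ j ∈ Finset.range (k + 4), cmm ℓ k j • (q ^ (k + 2 - 2 * ℓ - j) * (star q) ^ j) := by
    rw [hn, Ppoly_eq_sum q hℓ k (k + 3) (by omega), Finset.mul_sum,
      Finset.sum_range_succ' (fun j => cmm ℓ k j • (q ^ (k + 2 - 2 * ℓ - j) * (star q) ^ j)) (k + 3)]
    simp only [cmm, zero_smul, add_zero]
    refine Finset.sum_congr rfl fun j _ => ?_
    rw [mul_term_xy hxy]
    by_cases hc : k < 2 * ℓ + j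
    · rw [cc_eq_zero hℓ hc, zero_smul, zero_smul]
    · rw [show (k - 2 * ℓ - j) + 1 = k + 2 - 2 * ℓ - (j + 1) from by omega]
  have hB : ((2 * q.re : ℝ) : Quaternion ℝ) * Ppoly ℓ (k + 1) q
      = (∑ j ∈ Finset.range (k + 4), cc ℓ (k + 1) j • (q ^ (k + 2 - 2 * ℓ - j) * (star q) ^ j))
        + ∑ j ∈ Finset.range (k + 4), cmm ℓ (k + 1) j • (q ^ (k + 2 - 2 * ℓ - j) * (star q) ^ j) := by
    rw [ht, add_mul]
    congr 1
    · rw [Ppoly_eq_sum q hℓ (k + 1) (k + 4) (by omega), Finset.mul_sum]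
      refine Finset.sum_congr rfl fun j _ => ?_
      rw [mul_term_x]
      by_cases hc : k + 1 < 2 * ℓ + j
      · rw [cc_eq_zero hℓ hc, zero_smul, zero_smul]
      · rw [show (k + 1 - 2 * ℓ - j) + 1 = k + 2 - 2 * ℓ - j from by omega]
    · rw [Ppoly_eq_sum q hℓ (k + 1) (k + 3) (by omega), Finset.mul_sum,
        Finset.sum_range_succ'
          (fun j => cmm ℓ (k + 1) j • (q ^ (k + 2 - 2 * ℓ - j) * (star q) ^ j)) (k + 3)]
      simp only [cmm, zero_smul, add_zero]
      refine Finset.sum_congr rfl fun j _ => ?_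
      rw [mul_term_y hxy]
      rw [show k + 1 - 2 * ℓ - j = k + 2 - 2 * ℓ - (j + 1) from by omega]
  rw [Ppoly_eq_sum q hℓ (k + 2) (k + 4) (by omega), hA, hB, ← Finset.sum_add_distrib,
    ← Finset.sum_add_distrib, ← Finset.sum_add_distrib]
  refine Finset.sum_congr rfl fun j _ => ?_
  rw [show k + 2 - 2 * ℓ - j = k + 2 - 2 * ℓ - j from rfl, ← add_smul, ← add_smul, ← add_smul,
    hco j]

lemma key_step (q : Quaternion ℝ) {ℓ : ℕ} (hℓ : 2 ≤ ℓ) (k : ℕ) :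
    Ppoly ℓ (k + 2) q + ((‖q‖ ^ 2 : ℝ) : Quaternion ℝ) * Ppoly ℓ k q
      = ((2 * q.re : ℝ) : Quaternion ℝ) * Ppoly ℓ (k + 1) q + Ppoly (ℓ - 1) k q := by
  rw [key_general q (by omega) k (cc (ℓ - 1) k) (coeff_id hℓ k)]
  congr 1
  rw [Ppoly_eq_sum q (show 1 ≤ ℓ - 1 by omega) k (k + 4) (by omega)]
  refine (Finset.sum_congr rfl fun j _ => ?_).symm
  rw [show k - 2 * (ℓ - 1) - j = k + 2 - 2 * ℓ - j from by omega]

lemma key_step1 (q : Quaternion ℝ) (k : ℕ) :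
    Ppoly 1 (k + 2) q + ((‖q‖ ^ 2 : ℝ) : Quaternion ℝ) * Ppoly 1 k q
      = ((2 * q.re : ℝ) : Quaternion ℝ) * Ppoly 1 (k + 1) q + q ^ k := by
  rw [key_general q le_rfl k (fun j => if j = 0 then 1 else 0) (coeff_id1 k)]
  congr 1
  have h1 : ∀ j ∈ Finset.range (k + 4),
      (if j = 0 then 1 else 0 : ℕ) • (q ^ (k + 2 - 2 * 1 - j) * (star q) ^ j)
      = if j = 0 then q ^ k else 0 := by
    intro j _
    rcases Nat.eq_zero_or_pos j with rfl | hj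
    · simp [show k + 2 - 2 * 1 - 0 = k from by omega]
    · rw [if_neg (by omega), if_neg (by omega), zero_smul]
  rw [Finset.sum_congr rfl h1, Finset.sum_ite_eq' (Finset.range (k + 4)) 0 (fun _ => q ^ k),
    if_pos (Finset.mem_range.mpr (by omega))]

-- summability
lemma cc_le {ℓ : ℕ} (hℓ : 1 ≤ ℓ) (m j : ℕ) (hj : j ≤ m) : cc ℓ m j ≤ (m + ℓ) ^ (2 * ℓ) := by
  calc cc ℓ m j ≤ (ℓ - 1 + j) ^ (ℓ - 1) * (m - ℓ - j) ^ ℓ :=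
        Nat.mul_le_mul (Nat.choose_le_pow _ _) (Nat.choose_le_pow _ _)
    _ ≤ (m + ℓ) ^ (ℓ - 1) * (m + ℓ) ^ ℓ :=
        Nat.mul_le_mul (Nat.pow_le_pow_left (by omega) _) (Nat.pow_le_pow_left (by omega) _)
    _ = (m + ℓ) ^ (ℓ - 1 + ℓ) := (pow_add _ _ _).symm
    _ ≤ (m + ℓ) ^ (2 * ℓ) := Nat.pow_le_pow_right (by omega) (by omega)

lemma norm_Ppoly_le (q : Quaternion ℝ) {ℓ : ℕ} (hℓ : 1 ≤ ℓ) (k : ℕ) :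
    ‖Ppoly ℓ (k + 2 * ℓ) q‖ ≤ (k + 1) * ((k + 3 * ℓ : ℕ) : ℝ) ^ (2 * ℓ) * ‖q‖ ^ k := by
  rw [Ppoly, show k + 2 * ℓ + 1 - 2 * ℓ = k + 1 from by omega]
  refine le_trans (norm_sum_le _ _) ?_
  have hterm : ∀ j ∈ Finset.range (k + 1),
      ‖((Nat.choose (ℓ - 1 + j) (ℓ - 1) * Nat.choose (k + 2 * ℓ - ℓ - j) ℓ : ℕ) : Quaternion ℝ) *
          q ^ (k + 2 * ℓ - 2 * ℓ - j) * (star q) ^ j‖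
        ≤ ((k + 3 * ℓ : ℕ) : ℝ) ^ (2 * ℓ) * ‖q‖ ^ k := by
    intro j hj
    have hjk : j ≤ k := by simpa using Nat.lt_succ_iff.mp (Finset.mem_range.mp hj)
    rw [norm_mul, norm_mul, norm_pow, norm_pow, norm_star]
    have hcast : ‖((Nat.choose (ℓ - 1 + j) (ℓ - 1) * Nat.choose (k + 2 * ℓ - ℓ - j) ℓ : ℕ) :
        Quaternion ℝ)‖ = ((cc ℓ (k + 2 * ℓ) j : ℕ) : ℝ) := by
      rw [show ((Nat.choose (ℓ - 1 + j) (ℓ - 1) * Nat.choose (k + 2 * ℓ - ℓ - j) ℓ : ℕ) :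
          Quaternion ℝ) = (((cc ℓ (k + 2 * ℓ) j : ℕ) : ℝ) : Quaternion ℝ) from by
        rw [cc]; push_cast; ring]
      rw [Quaternion.norm_coe, Real.norm_eq_abs, abs_of_nonneg (by positivity)]
    rw [hcast, show k + 2 * ℓ - 2 * ℓ - j = k - j from by omega]
    have h1 : ((cc ℓ (k + 2 * ℓ) j : ℕ) : ℝ) ≤ ((k + 3 * ℓ : ℕ) : ℝ) ^ (2 * ℓ) := by
      have := cc_le hℓ (k + 2 * ℓ) j (by omega)
      calc ((cc ℓ (k + 2 * ℓ) j : ℕ) : ℝ) ≤ (((k + 2 * ℓ + ℓ) ^ (2 * ℓ) : ℕ) : ℝ) := by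
            exact_mod_cast this
        _ = ((k + 3 * ℓ : ℕ) : ℝ) ^ (2 * ℓ) := by push_cast; ring
    have h2 : ‖q‖ ^ (k - j) * ‖q‖ ^ j = ‖q‖ ^ k := by
      rw [← pow_add, show k - j + j = k from by omega]
    calc ((cc ℓ (k + 2 * ℓ) j : ℕ) : ℝ) * ‖q‖ ^ (k - j) * ‖q‖ ^ j
        = ((cc ℓ (k + 2 * ℓ) j : ℕ) : ℝ) * ‖q‖ ^ k := by rw [mul_assoc, h2]
      _ ≤ ((k + 3 * ℓ : ℕ) : ℝ) ^ (2 * ℓ) * ‖q‖ ^ k := by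
          have : (0:ℝ) ≤ ‖q‖ ^ k := by positivity
          exact mul_le_mul_of_nonneg_right h1 this
  calc ∑ j ∈ Finset.range (k + 1), ‖_‖ ≤ ∑ j ∈ Finset.range (k + 1),
        ((k + 3 * ℓ : ℕ) : ℝ) ^ (2 * ℓ) * ‖q‖ ^ k := Finset.sum_le_sum hterm
    _ = (k + 1) * ((k + 3 * ℓ : ℕ) : ℝ) ^ (2 * ℓ) * ‖q‖ ^ k := by
        rw [Finset.sum_const, Finset.card_range]
        push_cast; ring

lemma aux_poly_geom (d : ℕ) {r : ℝ} (h0 : 0 ≤ r) (h1 : r < 1) :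
    Summable (fun n : ℕ => ((n : ℝ) + 1) ^ d * r ^ n) := by
  have hs : Summable (fun n : ℕ => (n : ℝ) ^ d * r ^ n) :=
    summable_pow_mul_geometric_of_norm_lt_one d (by rwa [Real.norm_eq_abs, abs_of_nonneg h0])
  rw [← summable_nat_add_iff 1]
  have hs2 : Summable (fun n : ℕ => (2 : ℝ) ^ d * (((n : ℝ) + 1) ^ d * r ^ (n + 1))) := by
    have := (summable_nat_add_iff (f := fun n : ℕ => (n : ℝ) ^ d * r ^ n) 1).mpr hs
    refine (this.congr ?_).mul_left _
    intro n; push_cast; ring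
  refine Summable.of_nonneg_of_le (fun n => by positivity) (fun n => ?_) hs2
  push_cast
  have hb : ((n : ℝ) + 1 + 1) ^ d ≤ (2 : ℝ) ^ d * ((n : ℝ) + 1) ^ d := by
    rw [← mul_pow]
    refine pow_le_pow_left₀ (by positivity) (by nlinarith [Nat.cast_nonneg (α := ℝ) n]) d
  calc ((n : ℝ) + 1 + 1) ^ d * r ^ (n + 1)
      ≤ ((2 : ℝ) ^ d * ((n : ℝ) + 1) ^ d) * r ^ (n + 1) := by
        exact mul_le_mul_of_nonneg_right hb (by positivity)
    _ = (2 : ℝ) ^ d * (((n : ℝ) + 1) ^ d * r ^ (n + 1)) := by ring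

lemma summable_norm_Ppoly (q s : Quaternion ℝ) {ℓ : ℕ} (hℓ : 1 ≤ ℓ) (h : ‖q‖ < ‖s‖) :
    Summable (fun k : ℕ => ‖Ppoly ℓ k q * (s⁻¹) ^ (k + 1)‖) := by
  have hs0 : (0 : ℝ) < ‖s‖ := lt_of_le_of_lt (norm_nonneg q) h
  set r : ℝ := ‖q‖ / ‖s‖ with hr
  have hr0 : 0 ≤ r := by positivity
  have hr1 : r < 1 := (div_lt_one hs0).mpr h
  rw [← summable_nat_add_iff (2 * ℓ)]
  set C : ℝ := ((3 * ℓ + 1 : ℕ) : ℝ) ^ (2 * ℓ + 1) * (‖s‖⁻¹) ^ (2 * ℓ + 1) with hC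
  refine Summable.of_nonneg_of_le (fun k => norm_nonneg _) (fun k => ?_)
    (((aux_poly_geom (2 * ℓ + 1) hr0 hr1).mul_left C).congr (fun k => rfl))
  rw [norm_mul, norm_pow, norm_inv]
  have h1 : ‖Ppoly ℓ (k + 2 * ℓ) q‖ ≤ (k + 1) * ((k + 3 * ℓ : ℕ) : ℝ) ^ (2 * ℓ) * ‖q‖ ^ k :=
    norm_Ppoly_le q hℓ k
  have key : ((k:ℝ) + 1) * ((k + 3 * ℓ : ℕ) : ℝ) ^ (2 * ℓ) * ‖q‖ ^ k * (‖s‖⁻¹) ^ (k + 2 * ℓ + 1)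
      ≤ C * (((k : ℝ) + 1) ^ (2 * ℓ + 1) * r ^ k) := by
    have hq : ‖q‖ ^ k * (‖s‖⁻¹) ^ (k + 2 * ℓ + 1) = r ^ k * (‖s‖⁻¹) ^ (2 * ℓ + 1) := by
      rw [show k + 2 * ℓ + 1 = k + (2 * ℓ + 1) from by omega, pow_add, hr, div_eq_mul_inv,
        mul_pow]
      ring
    have hkl : ((k + 3 * ℓ : ℕ) : ℝ) ^ (2 * ℓ) ≤ (((3 * ℓ + 1 : ℕ) : ℝ) * ((k : ℝ) + 1)) ^ (2 * ℓ) := by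
      refine pow_le_pow_left₀ (by positivity) ?_ _
      push_cast
      nlinarith [Nat.cast_nonneg (α := ℝ) k, Nat.cast_nonneg (α := ℝ) ℓ]
    have hk1 : ((k:ℝ) + 1) ≤ ((3 * ℓ + 1 : ℕ) : ℝ) * ((k : ℝ) + 1) := by
      have h3 : (1:ℝ) ≤ ((3 * ℓ + 1 : ℕ) : ℝ) := by
        have h4 : (1:ℕ) ≤ 3 * ℓ + 1 := by omega
        exact_mod_cast h4
      nlinarith [Nat.cast_nonneg (α := ℝ) k]
    calc ((k:ℝ) + 1) * ((k + 3 * ℓ : ℕ) : ℝ) ^ (2 * ℓ) * ‖q‖ ^ k * (‖s‖⁻¹) ^ (k + 2 * ℓ + 1)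
        = (((k:ℝ) + 1) * ((k + 3 * ℓ : ℕ) : ℝ) ^ (2 * ℓ)) * (‖q‖ ^ k * (‖s‖⁻¹) ^ (k + 2 * ℓ + 1)) := by
          ring
      _ = (((k:ℝ) + 1) * ((k + 3 * ℓ : ℕ) : ℝ) ^ (2 * ℓ)) * (r ^ k * (‖s‖⁻¹) ^ (2 * ℓ + 1)) := by
          rw [hq]
      _ ≤ ((((3 * ℓ + 1 : ℕ) : ℝ) * ((k : ℝ) + 1)) * (((3 * ℓ + 1 : ℕ) : ℝ) * ((k : ℝ) + 1)) ^ (2 * ℓ))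
            * (r ^ k * (‖s‖⁻¹) ^ (2 * ℓ + 1)) := by
          refine mul_le_mul_of_nonneg_right (mul_le_mul hk1 hkl (by positivity) (by positivity))
            (by positivity)
      _ = C * (((k : ℝ) + 1) ^ (2 * ℓ + 1) * r ^ k) := by
          rw [hC, mul_pow]
          ring
  calc ‖Ppoly ℓ (k + 2 * ℓ) q‖ * ‖s‖⁻¹ ^ (k + 2 * ℓ + 1)
      ≤ ((k:ℝ) + 1) * ((k + 3 * ℓ : ℕ) : ℝ) ^ (2 * ℓ) * ‖q‖ ^ k * (‖s‖⁻¹) ^ (k + 2 * ℓ + 1) :=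
        mul_le_mul_of_nonneg_right h1 (by positivity)
    _ ≤ C * (((k : ℝ) + 1) ^ (2 * ℓ + 1) * r ^ k) := key

section Series

variable (q s : Quaternion ℝ)

lemma inv_pow_mul_s (hs : s ≠ 0) (m : ℕ) : (s⁻¹) ^ (m + 1) * s = (s⁻¹) ^ m := by
  rw [pow_succ, mul_assoc, inv_mul_cancel₀ hs, mul_one]

lemma inv_pow_mul_s' (hs : s ≠ 0) {m1 m2 : ℕ} (h : m1 = m2 + 1) :
    (s⁻¹) ^ m1 * s = (s⁻¹) ^ m2 := by subst h; exact inv_pow_mul_s s hs m2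

lemma inv_pow_mul_s2' (hs : s ≠ 0) {m1 m2 : ℕ} (h : m1 = m2 + 2) :
    (s⁻¹) ^ m1 * s ^ 2 = (s⁻¹) ^ m2 := by
  subst h
  rw [sq, ← mul_assoc, inv_pow_mul_s' s hs (by omega : m2 + 2 = (m2 + 1) + 1),
    inv_pow_mul_s s hs m2]

lemma series_mul_Q (hs : s ≠ 0) {ℓ : ℕ} (hℓ : 1 ≤ ℓ)
    (hsum : Summable (fun k : ℕ => Ppoly ℓ k q * (s⁻¹) ^ (k + 1))) :
    (∑' k : ℕ, Ppoly ℓ k q * (s⁻¹) ^ (k + 1)) *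
        (s ^ 2 - ((2 * q.re : ℝ) : Quaternion ℝ) * s + ((‖q‖ ^ 2 : ℝ) : Quaternion ℝ))
      = ∑' k : ℕ, (Ppoly ℓ (k + 2) q + ((‖q‖ ^ 2 : ℝ) : Quaternion ℝ) * Ppoly ℓ k q
          - ((2 * q.re : ℝ) : Quaternion ℝ) * Ppoly ℓ (k + 1) q) * (s⁻¹) ^ (k + 1) := by
  have expand : ∀ X : Quaternion ℝ,
      X * (s ^ 2 - ((2 * q.re : ℝ) : Quaternion ℝ) * s + ((‖q‖ ^ 2 : ℝ) : Quaternion ℝ))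
      = X * s ^ 2 - ((2 * q.re : ℝ) : Quaternion ℝ) * (X * s)
        + ((‖q‖ ^ 2 : ℝ) : Quaternion ℝ) * X := by
    intro X
    rw [mul_add, mul_sub,
      show X * (((2 * q.re : ℝ) : Quaternion ℝ) * s)
          = ((2 * q.re : ℝ) : Quaternion ℝ) * (X * s) from by
        rw [← mul_assoc, ← Quaternion.coe_commutes, mul_assoc],
      show X * ((‖q‖ ^ 2 : ℝ) : Quaternion ℝ) = ((‖q‖ ^ 2 : ℝ) : Quaternion ℝ) * X from
        (Quaternion.coe_commutes _ _).symm]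
  have hP0 : Ppoly ℓ 0 q = 0 := Ppoly_small q (by omega)
  have hP1 : Ppoly ℓ 1 q = 0 := Ppoly_small q (by omega)
  have hsw : Summable (fun k : ℕ => Ppoly ℓ k q * (s⁻¹) ^ (k + 1) * s ^ 2) := hsum.mul_right _
  have hsv : Summable (fun k : ℕ => Ppoly ℓ k q * (s⁻¹) ^ (k + 1) * s) := hsum.mul_right _
  have hA : (∑' k : ℕ, Ppoly ℓ k q * (s⁻¹) ^ (k + 1) * s ^ 2)
      = ∑' k : ℕ, Ppoly ℓ (k + 2) q * (s⁻¹) ^ (k + 1) := by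
    rw [Summable.tsum_eq_zero_add hsw, Summable.tsum_eq_zero_add ((summable_nat_add_iff 1).mpr hsw)]
    simp only [hP0, hP1, zero_mul, zero_add]
    refine tsum_congr fun k => ?_
    rw [mul_assoc, inv_pow_mul_s2' s hs (by omega : k + 1 + 1 + 1 = (k + 1) + 2),
      show k + 1 + 1 = k + 2 from by omega]
  have hB : (∑' k : ℕ, Ppoly ℓ k q * (s⁻¹) ^ (k + 1) * s)
      = ∑' k : ℕ, Ppoly ℓ (k + 1) q * (s⁻¹) ^ (k + 1) := by
    rw [Summable.tsum_eq_zero_add hsv]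
    simp only [hP0, zero_mul, zero_add]
    refine tsum_congr fun k => ?_
    rw [mul_assoc, inv_pow_mul_s' s hs (by omega : k + 1 + 1 = (k + 1) + 1)]
  have hsa : Summable (fun k : ℕ => Ppoly ℓ (k + 2) q * (s⁻¹) ^ (k + 1)) := by
    refine ((summable_nat_add_iff 2).mpr hsw).congr fun k => ?_
    show Ppoly ℓ (k + 2) q * (s⁻¹) ^ (k + 2 + 1) * s ^ 2 = _
    rw [mul_assoc, inv_pow_mul_s2' s hs (by omega : k + 2 + 1 = (k + 1) + 2)]
  have hsb : Summable (fun k : ℕ => Ppoly ℓ (k + 1) q * (s⁻¹) ^ (k + 1)) := by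
    refine ((summable_nat_add_iff 1).mpr hsv).congr fun k => ?_
    show Ppoly ℓ (k + 1) q * (s⁻¹) ^ (k + 1 + 1) * s = _
    rw [mul_assoc, inv_pow_mul_s' s hs (by omega : k + 1 + 1 = (k + 1) + 1)]
  have hrhs : ∀ k : ℕ, (Ppoly ℓ (k + 2) q + ((‖q‖ ^ 2 : ℝ) : Quaternion ℝ) * Ppoly ℓ k q
        - ((2 * q.re : ℝ) : Quaternion ℝ) * Ppoly ℓ (k + 1) q) * (s⁻¹) ^ (k + 1)
      = Ppoly ℓ (k + 2) q * (s⁻¹) ^ (k + 1)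
          + ((‖q‖ ^ 2 : ℝ) : Quaternion ℝ) * (Ppoly ℓ k q * (s⁻¹) ^ (k + 1))
        - ((2 * q.re : ℝ) : Quaternion ℝ) * (Ppoly ℓ (k + 1) q * (s⁻¹) ^ (k + 1)) := by
    intro k
    rw [sub_mul, add_mul, mul_assoc ((‖q‖ ^ 2 : ℝ) : Quaternion ℝ),
      mul_assoc ((2 * q.re : ℝ) : Quaternion ℝ)]
  calc (∑' k : ℕ, Ppoly ℓ k q * (s⁻¹) ^ (k + 1)) *
        (s ^ 2 - ((2 * q.re : ℝ) : Quaternion ℝ) * s + ((‖q‖ ^ 2 : ℝ) : Quaternion ℝ))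
      = ∑' k : ℕ, (Ppoly ℓ k q * (s⁻¹) ^ (k + 1)) *
          (s ^ 2 - ((2 * q.re : ℝ) : Quaternion ℝ) * s + ((‖q‖ ^ 2 : ℝ) : Quaternion ℝ)) :=
        (tsum_mul_right).symm
    _ = ∑' k : ℕ, (Ppoly ℓ k q * (s⁻¹) ^ (k + 1) * s ^ 2
          - ((2 * q.re : ℝ) : Quaternion ℝ) * (Ppoly ℓ k q * (s⁻¹) ^ (k + 1) * s)
          + ((‖q‖ ^ 2 : ℝ) : Quaternion ℝ) * (Ppoly ℓ k q * (s⁻¹) ^ (k + 1))) :=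
        tsum_congr fun k => expand _
    _ = (∑' k : ℕ, (Ppoly ℓ k q * (s⁻¹) ^ (k + 1) * s ^ 2
          - ((2 * q.re : ℝ) : Quaternion ℝ) * (Ppoly ℓ k q * (s⁻¹) ^ (k + 1) * s)))
          + ∑' k : ℕ, ((‖q‖ ^ 2 : ℝ) : Quaternion ℝ) * (Ppoly ℓ k q * (s⁻¹) ^ (k + 1)) :=
        Summable.tsum_add (hsw.sub (hsv.mul_left _)) (hsum.mul_left _)
    _ = ((∑' k : ℕ, Ppoly ℓ k q * (s⁻¹) ^ (k + 1) * s ^ 2)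
          - ∑' k : ℕ, ((2 * q.re : ℝ) : Quaternion ℝ) * (Ppoly ℓ k q * (s⁻¹) ^ (k + 1) * s))
          + ∑' k : ℕ, ((‖q‖ ^ 2 : ℝ) : Quaternion ℝ) * (Ppoly ℓ k q * (s⁻¹) ^ (k + 1)) := by
        rw [Summable.tsum_sub hsw (hsv.mul_left _)]
    _ = ((∑' k : ℕ, Ppoly ℓ (k + 2) q * (s⁻¹) ^ (k + 1))
          - ((2 * q.re : ℝ) : Quaternion ℝ) * ∑' k : ℕ, Ppoly ℓ (k + 1) q * (s⁻¹) ^ (k + 1))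
          + ((‖q‖ ^ 2 : ℝ) : Quaternion ℝ) * ∑' k : ℕ, Ppoly ℓ k q * (s⁻¹) ^ (k + 1) := by
        rw [tsum_mul_left, tsum_mul_left, hA, hB]
    _ = ∑' k : ℕ, (Ppoly ℓ (k + 2) q + ((‖q‖ ^ 2 : ℝ) : Quaternion ℝ) * Ppoly ℓ k q
          - ((2 * q.re : ℝ) : Quaternion ℝ) * Ppoly ℓ (k + 1) q) * (s⁻¹) ^ (k + 1) := by
        rw [tsum_congr hrhs, Summable.tsum_sub (hsa.add (hsum.mul_left _)) (hsb.mul_left _),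
          Summable.tsum_add hsa (hsum.mul_left _), tsum_mul_left, tsum_mul_left]
        abel

end Series

lemma summable_geom_q (q s : Quaternion ℝ) (h : ‖q‖ < ‖s‖) :
    Summable (fun k : ℕ => q ^ k * (s⁻¹) ^ (k + 1)) := by
  have hs0 : (0 : ℝ) < ‖s‖ := lt_of_le_of_lt (norm_nonneg q) h
  apply Summable.of_norm
  have he : (fun k : ℕ => ‖q ^ k * (s⁻¹) ^ (k + 1)‖)
      = fun k : ℕ => (‖q‖ * ‖s‖⁻¹) ^ k * ‖s‖⁻¹ := by
    funext k
    rw [norm_mul, norm_pow, norm_pow, norm_inv, mul_pow, pow_succ]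
    ring
  rw [he]
  exact Summable.mul_right _ (summable_geometric_of_lt_one (by positivity)
    (by rwa [← div_eq_mul_inv, div_lt_one hs0]))

lemma geom_mul_Q (q s : Quaternion ℝ) (h : ‖q‖ < ‖s‖) :
    (∑' k : ℕ, q ^ k * (s⁻¹) ^ (k + 1)) *
        (s ^ 2 - ((2 * q.re : ℝ) : Quaternion ℝ) * s + ((‖q‖ ^ 2 : ℝ) : Quaternion ℝ))
      = s - star q := by
  have hs0 : (0 : ℝ) < ‖s‖ := lt_of_le_of_lt (norm_nonneg q) h
  have hs : s ≠ 0 := by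
    intro h0; rw [h0, norm_zero] at hs0; exact lt_irrefl _ hs0
  have hxy : Commute q (star q) := by
    unfold Commute SemiconjBy
    rw [Quaternion.self_mul_star, Quaternion.star_mul_self]
  have hn : ((‖q‖ ^ 2 : ℝ) : Quaternion ℝ) = q * star q := by
    rw [Quaternion.self_mul_star, Quaternion.normSq_eq_norm_mul_self, sq]
  have ht : ((2 * q.re : ℝ) : Quaternion ℝ) = q + star q := (Quaternion.self_add_star' q).symm
  have hgs := summable_geom_q q s h
  have hf : Summable (fun k : ℕ => q ^ k * (s⁻¹) ^ (k + 1) *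
      (s ^ 2 - ((2 * q.re : ℝ) : Quaternion ℝ) * s + ((‖q‖ ^ 2 : ℝ) : Quaternion ℝ))) :=
    hgs.mul_right _
  set g : ℕ → Quaternion ℝ :=
    fun k => q ^ k * ((s⁻¹) ^ k * s) - q ^ k * (star q * (s⁻¹) ^ k) with hg
  have hfg : ∀ k : ℕ, q ^ k * (s⁻¹) ^ (k + 1) *
      (s ^ 2 - ((2 * q.re : ℝ) : Quaternion ℝ) * s + ((‖q‖ ^ 2 : ℝ) : Quaternion ℝ))
      = g k - g (k + 1) := by
    intro k
    have e1 : q ^ k * (s⁻¹) ^ (k + 1) * s ^ 2 = q ^ k * ((s⁻¹) ^ k * s) := by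
      rw [mul_assoc]
      congr 1
      rw [sq, ← mul_assoc, inv_pow_mul_s s hs k]
    have e2 : q ^ k * (s⁻¹) ^ (k + 1) * (((2 * q.re : ℝ) : Quaternion ℝ) * s)
        = q ^ (k + 1) * (s⁻¹) ^ k + q ^ k * (star q * (s⁻¹) ^ k) := by
      rw [← mul_assoc, ← Quaternion.coe_commutes, ht, mul_assoc, mul_assoc,
        inv_pow_mul_s s hs k, add_mul]
      congr 1
      · rw [← mul_assoc, ← pow_succ']
      · rw [← mul_assoc, (hxy.symm.pow_right k).eq, mul_assoc]
    have e3 : q ^ k * (s⁻¹) ^ (k + 1) * ((‖q‖ ^ 2 : ℝ) : Quaternion ℝ)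
        = q ^ (k + 1) * (star q * (s⁻¹) ^ (k + 1)) := by
      rw [← Quaternion.coe_commutes, hn, mul_assoc q (star q)]
      rw [show star q * (q ^ k * (s⁻¹) ^ (k + 1)) = q ^ k * (star q * (s⁻¹) ^ (k + 1)) from by
        rw [← mul_assoc, (hxy.symm.pow_right k).eq, mul_assoc]]
      rw [← mul_assoc, ← pow_succ']
    rw [mul_add, mul_sub, e1, e2, e3]
    simp only [hg]
    have e4 : q ^ (k + 1) * ((s⁻¹) ^ (k + 1) * s) = q ^ (k + 1) * (s⁻¹) ^ k := by
      rw [inv_pow_mul_s s hs k]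
    rw [e4]
    abel
  have hT : Filter.Tendsto (fun n : ℕ => ∑ i ∈ Finset.range n,
      (q ^ i * (s⁻¹) ^ (i + 1) *
        (s ^ 2 - ((2 * q.re : ℝ) : Quaternion ℝ) * s + ((‖q‖ ^ 2 : ℝ) : Quaternion ℝ))))
      Filter.atTop (nhds (∑' k : ℕ, q ^ k * (s⁻¹) ^ (k + 1) *
        (s ^ 2 - ((2 * q.re : ℝ) : Quaternion ℝ) * s + ((‖q‖ ^ 2 : ℝ) : Quaternion ℝ)))) :=
    hf.hasSum.tendsto_sum_nat
  have hps : ∀ n : ℕ, (∑ i ∈ Finset.range n,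
      (q ^ i * (s⁻¹) ^ (i + 1) *
        (s ^ 2 - ((2 * q.re : ℝ) : Quaternion ℝ) * s + ((‖q‖ ^ 2 : ℝ) : Quaternion ℝ))))
      = g 0 - g n := by
    intro n
    rw [Finset.sum_congr rfl (fun i _ => hfg i)]
    exact Finset.sum_range_sub' g n
  have hgz : Filter.Tendsto g Filter.atTop (nhds 0) := by
    apply squeeze_zero_norm (a := fun k : ℕ => (‖s‖ + ‖q‖) * (‖q‖ * ‖s‖⁻¹) ^ k)
    · intro k
      have h1 : ‖g k‖ ≤ ‖q ^ k * ((s⁻¹) ^ k * s)‖ + ‖q ^ k * (star q * (s⁻¹) ^ k)‖ :=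
        norm_sub_le _ _
      have h2 : ‖q ^ k * ((s⁻¹) ^ k * s)‖ = ‖s‖ * (‖q‖ * ‖s‖⁻¹) ^ k := by
        rw [norm_mul, norm_mul, norm_pow, norm_pow, norm_inv, mul_pow]
        ring
      have h3 : ‖q ^ k * (star q * (s⁻¹) ^ k)‖ = ‖q‖ * (‖q‖ * ‖s‖⁻¹) ^ k := by
        rw [norm_mul, norm_mul, norm_pow, norm_pow, norm_inv, norm_star, mul_pow]
        ring
      rw [h2, h3] at h1
      calc ‖g k‖ ≤ ‖s‖ * (‖q‖ * ‖s‖⁻¹) ^ k + ‖q‖ * (‖q‖ * ‖s‖⁻¹) ^ k := h1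
        _ = (‖s‖ + ‖q‖) * (‖q‖ * ‖s‖⁻¹) ^ k := by ring
    · have hr1 : ‖q‖ * ‖s‖⁻¹ < 1 := by rwa [← div_eq_mul_inv, div_lt_one hs0]
      have := tendsto_pow_atTop_nhds_zero_of_lt_one (by positivity) hr1
      simpa using this.const_mul (‖s‖ + ‖q‖)
  have hT2 : Filter.Tendsto (fun n : ℕ => g 0 - g n) Filter.atTop (nhds (g 0 - 0)) :=
    Filter.Tendsto.sub tendsto_const_nhds hgz
  have hsum_eq : (∑' k : ℕ, q ^ k * (s⁻¹) ^ (k + 1) *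
      (s ^ 2 - ((2 * q.re : ℝ) : Quaternion ℝ) * s + ((‖q‖ ^ 2 : ℝ) : Quaternion ℝ)))
      = g 0 - 0 := by
    apply tendsto_nhds_unique hT
    have : (fun n : ℕ => ∑ i ∈ Finset.range n,
        (q ^ i * (s⁻¹) ^ (i + 1) *
          (s ^ 2 - ((2 * q.re : ℝ) : Quaternion ℝ) * s + ((‖q‖ ^ 2 : ℝ) : Quaternion ℝ))))
        = fun n : ℕ => g 0 - g n := funext hps
    rw [this]
    exact hT2
  rw [← tsum_mul_right, hsum_eq, sub_zero, hg]
  simp only [pow_zero, one_mul, mul_one, inv_mul_cancel₀ hs]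

/-- **Equation (5.17).** For `‖q‖ < ‖s‖`, with `Q = s² - 2 (re q) s + ‖q‖²` (nonzero), the series
`∑_{k=2ℓ}^∞ P_ℓ^k(q) s^{-k-1}` converges absolutely and equals `(s - q̄) Q^{-(ℓ+1)}`
(the terms with `k < 2ℓ` vanish). -/

theorem sub_star_mul_Qcs_inv_pow_series (q s : Quaternion ℝ) (ℓ : ℕ) (hℓ : 1 ≤ ℓ)
    (h : ‖q‖ < ‖s‖) :
    Summable (fun k : ℕ => ‖Ppoly ℓ k q * (s⁻¹) ^ (k + 1)‖) ∧
    ∑' k : ℕ, Ppoly ℓ k q * (s⁻¹) ^ (k + 1) =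
      (s - star q) *
        ((s ^ 2 - ((2 * q.re : ℝ) : Quaternion ℝ) * s + ((‖q‖ ^ 2 : ℝ) : Quaternion ℝ))⁻¹) ^
          (ℓ + 1) := by
  have hs0 : (0 : ℝ) < ‖s‖ := lt_of_le_of_lt (norm_nonneg q) h
  have hs : s ≠ 0 := by
    intro h0; rw [h0, norm_zero] at hs0; exact lt_irrefl _ hs0
  refine ⟨summable_norm_Ppoly q s hℓ h, ?_⟩
  set Q : Quaternion ℝ :=
    s ^ 2 - ((2 * q.re : ℝ) : Quaternion ℝ) * s + ((‖q‖ ^ 2 : ℝ) : Quaternion ℝ) with hQdef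
  have husum : ∀ m : ℕ, 1 ≤ m → Summable (fun k : ℕ => Ppoly m k q * (s⁻¹) ^ (k + 1)) :=
    fun m hm => (summable_norm_Ppoly q s hm h).of_norm
  have hstep : ∀ m : ℕ, 2 ≤ m →
      (∑' k : ℕ, Ppoly m k q * (s⁻¹) ^ (k + 1)) * Q
        = ∑' k : ℕ, Ppoly (m - 1) k q * (s⁻¹) ^ (k + 1) := by
    intro m hm
    rw [hQdef, series_mul_Q q s hs (by omega) (husum m (by omega))]
    refine tsum_congr fun k => ?_
    congr 1
    rw [key_step q hm k, add_sub_cancel_left]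
  have hstep1 : (∑' k : ℕ, Ppoly 1 k q * (s⁻¹) ^ (k + 1)) * Q
      = ∑' k : ℕ, q ^ k * (s⁻¹) ^ (k + 1) := by
    rw [hQdef, series_mul_Q q s hs le_rfl (husum 1 le_rfl)]
    refine tsum_congr fun k => ?_
    congr 1
    rw [key_step1 q k, add_sub_cancel_left]
  have hind : ∀ m : ℕ, 1 ≤ m →
      (∑' k : ℕ, Ppoly m k q * (s⁻¹) ^ (k + 1)) * Q ^ m
        = ∑' k : ℕ, q ^ k * (s⁻¹) ^ (k + 1) := by
    intro m hm
    induction m, hm using Nat.le_induction with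
    | base => rw [pow_one]; exact hstep1
    | succ p hp ih =>
      rw [pow_succ', ← mul_assoc, hstep (p + 1) (by omega),
        show p + 1 - 1 = p from by omega]
      exact ih
  have hQfin : (∑' k : ℕ, Ppoly ℓ k q * (s⁻¹) ^ (k + 1)) * Q ^ (ℓ + 1) = s - star q := by
    rw [pow_succ, ← mul_assoc, hind ℓ hℓ, hQdef, geom_mul_Q q s h]
  have hsne : s - star q ≠ 0 := by
    intro h0
    rw [sub_eq_zero] at h0
    rw [h0, norm_star] at h
    exact lt_irrefl _ h
  have hQne : Q ^ (ℓ + 1) ≠ 0 := by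
    intro h0
    rw [h0, mul_zero] at hQfin
    exact hsne hQfin.symm
  rw [inv_pow]
  exact (eq_mul_inv_iff_mul_eq₀ hQne).mpr hQfin
end

section
/- Let q, s be real quaternions with ‖q‖ < ‖s‖, let ℓ ≥ 1 and ν ≥ 0 be integers, and set Q := s² − 2·(re q)·s + ‖q‖² (nonzero since ‖q‖ < ‖s‖). Then (s − star q)·(s − re q)^ν·(Q⁻¹)^{ℓ+1} = Σ_{k=2ℓ}^{∞} Σ_{j=0}^{ν} C(ν, j)·(−re q)^j·P_ℓ^k(q)·s^{ν−j}·(s⁻¹)^{k+1}, where the series over k converges absolutely. -/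
set_option maxHeartbeats 1000000


open Quaternion Finset Filter

noncomputable section
namespace K1aux

local notation "H" => Quaternion ℝ

theorem hasSum_of_tendsto {f : ℕ → H} {a : H} (hf : Summable f)
    (h : Tendsto (fun N => ∑ i ∈ Finset.range N, f i) atTop (nhds a)) :
    HasSum f a := by
  have h3 := hf.hasSum
  rwa [tendsto_nhds_unique h3.tendsto_sum_nat h] at h3

variable (q s : H)

/-- the quadratic `Q`. -/
def QQ : H := s^2 - ((2 * q.re : ℝ) : H) * s + ((‖q‖^2 : ℝ) : H)

/-- telescoping term for the resolvent series. -/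
def A (n : ℕ) : H := q^n * (s⁻¹)^n * s - q^n * star q * (s⁻¹)^n

variable {q s}

section
variable (h : ‖q‖ < ‖s‖)
include h

theorem hs0 : s ≠ 0 := by
  intro hs; rw [hs, norm_zero] at h; have : (0:ℝ) ≤ ‖q‖ := norm_nonneg q; linarith

theorem hx0 : (0:ℝ) ≤ ‖q‖ * ‖s‖⁻¹ := by positivity

theorem hx1 : ‖q‖ * ‖s‖⁻¹ < 1 := by
  rw [mul_inv_lt_iff₀ (lt_of_le_of_lt (norm_nonneg q) h), one_mul]; exact h

theorem ht (n : ℕ) : (s⁻¹)^(n+1) * s = (s⁻¹)^n := by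
  rw [pow_succ, mul_assoc, inv_mul_cancel₀ (hs0 h), mul_one]

theorem key1 (n : ℕ) : q^n * (s⁻¹)^(n+1) * QQ q s = A q s n - A q s (n+1) := by
  have hd : ((‖q‖^2 : ℝ) : H) = q * star q := by
    rw [Quaternion.self_mul_star, Quaternion.normSq_eq_norm_mul_self, sq]
  have h1 : (s⁻¹)^(n+1) * s^2 = (s⁻¹)^n * s := by
    rw [sq, ← mul_assoc, ht h n]
  have h2 : (s⁻¹)^(n+1) * (((2 * q.re : ℝ) : H) * s) = ((2 * q.re : ℝ) : H) * (s⁻¹)^n := by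
    rw [← mul_assoc, ← Quaternion.coe_commutes, mul_assoc, ht h n]
  have h3 : (s⁻¹)^(n+1) * ((‖q‖^2 : ℝ) : H) = ((‖q‖^2 : ℝ) : H) * (s⁻¹)^(n+1) :=
    (Quaternion.coe_commutes _ _).symm
  have h4 : q^(n+1) * (s⁻¹)^(n+1) * s = q^(n+1) * (s⁻¹)^n := by
    rw [mul_assoc, ht h n]
  calc q^n * (s⁻¹)^(n+1) * QQ q s
      = q^n * ((s⁻¹)^(n+1) * s^2) - q^n * ((s⁻¹)^(n+1) * (((2 * q.re : ℝ) : H) * s))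
        + q^n * ((s⁻¹)^(n+1) * ((‖q‖^2 : ℝ) : H)) := by
        simp only [QQ, mul_sub, mul_add, mul_assoc]
    _ = q^n * (s⁻¹)^n * s - (q^n * ((2 * q.re : ℝ) : H)) * (s⁻¹)^n
        + (q^n * ((‖q‖^2 : ℝ) : H)) * (s⁻¹)^(n+1) := by
        rw [h1, h2, h3]; noncomm_ring
    _ = q^n * (s⁻¹)^n * s - (q^(n+1) + q^n * star q) * (s⁻¹)^n
        + (q^(n+1) * star q) * (s⁻¹)^(n+1) := by
        rw [← Quaternion.self_add_star' q, hd]; noncomm_ring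
    _ = A q s n - A q s (n+1) := by
        rw [A, A, sub_sub_sub_eq, h4]
        noncomm_ring

theorem partial1 (N : ℕ) :
    (∑ k ∈ range N, q^k * (s⁻¹)^(k+1)) * QQ q s = (s - star q) - A q s N := by
  have hA0 : A q s 0 = s - star q := by simp [A]
  rw [Finset.sum_mul, ← hA0]
  calc (∑ k ∈ range N, q^k * (s⁻¹)^(k+1) * QQ q s)
      = ∑ k ∈ range N, (A q s k - A q s (k+1)) := by
        exact Finset.sum_congr rfl fun k _ => key1 h k
    _ = A q s 0 - A q s N := Finset.sum_range_sub' (A q s) N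

theorem normA_le (n : ℕ) : ‖A q s n‖ ≤ (‖s‖ + ‖q‖) * (‖q‖ * ‖s‖⁻¹)^n := by
  have h1 : ‖q^n * (s⁻¹)^n * s‖ = (‖q‖ * ‖s‖⁻¹)^n * ‖s‖ := by
    rw [norm_mul, norm_mul, norm_pow, norm_pow, norm_inv, mul_pow]
  have h2 : ‖q^n * star q * (s⁻¹)^n‖ = (‖q‖ * ‖s‖⁻¹)^n * ‖q‖ := by
    rw [norm_mul, norm_mul, norm_pow, norm_pow, norm_inv, Quaternion.norm_star, mul_pow]; ring
  calc ‖A q s n‖ ≤ ‖q^n * (s⁻¹)^n * s‖ + ‖q^n * star q * (s⁻¹)^n‖ := norm_sub_le _ _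
    _ = (‖s‖ + ‖q‖) * (‖q‖ * ‖s‖⁻¹)^n := by rw [h1, h2]; ring

theorem tendstoA : Tendsto (A q s) atTop (nhds 0) := by
  apply squeeze_zero_norm (normA_le h)
  rw [show (0:ℝ) = (‖s‖ + ‖q‖) * 0 by ring]
  exact (tendsto_pow_atTop_nhds_zero_of_lt_one (hx0 h) (hx1 h)).const_mul _

theorem hQQ : QQ q s ≠ 0 := by
  intro h0
  have h1 : ∀ N : ℕ, A q s N = s - star q := by
    intro N
    have := partial1 h N
    rw [h0, mul_zero] at this
    exact (sub_eq_zero.mp this.symm).symm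
  have h2 : Tendsto (A q s) atTop (nhds (s - star q)) := by
    rw [show A q s = fun _ => s - star q from funext h1]; exact tendsto_const_nhds
  have h3 : s - star q = 0 := tendsto_nhds_unique h2 (tendstoA h)
  have h4 : s = star q := sub_eq_zero.mp h3
  have h5 : ‖s‖ = ‖q‖ := by rw [h4, Quaternion.norm_star]
  rw [h5] at h
  exact absurd h (lt_irrefl _)

theorem summable_geo1 : Summable fun k : ℕ => ‖q^k * (s⁻¹)^(k+1)‖ := by
  have heq : ∀ k : ℕ, ‖q^k * (s⁻¹)^(k+1)‖ = ‖s‖⁻¹ * (‖q‖ * ‖s‖⁻¹)^k := by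
    intro k
    rw [norm_mul, norm_pow, norm_pow, norm_inv, mul_pow, pow_succ]; ring
  simp only [heq]
  exact (summable_geometric_of_lt_one (hx0 h) (hx1 h)).mul_left _

/-- The left resolvent series. -/
theorem L1 : HasSum (fun k : ℕ => q^k * (s⁻¹)^(k+1)) ((s - star q) * (QQ q s)⁻¹) := by
  apply hasSum_of_tendsto (summable_geo1 h).of_norm
  have hps : ∀ N : ℕ, (∑ k ∈ range N, q^k * (s⁻¹)^(k+1))
      = ((s - star q) - A q s N) * (QQ q s)⁻¹ := by
    intro N
    rw [← partial1 h N, mul_assoc, mul_inv_cancel₀ (hQQ h), mul_one]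
  simp only [hps]
  have : Tendsto (fun N => ((s - star q) - A q s N) * (QQ q s)⁻¹) atTop
      (nhds (((s - star q) - 0) * (QQ q s)⁻¹)) :=
    ((tendsto_const_nhds.sub (tendstoA h)).mul tendsto_const_nhds)
  simpa using this

end

variable (q s : H)

/-- complete homogeneous sums `e_m = ∑ q^i q̄^(m-i)`. -/
def e (m : ℕ) : H := ∑ i ∈ Finset.range (m+1), q^i * (star q)^(m-i)

theorem e_zero : e q 0 = 1 := by simp [e]

theorem e_one : e q 1 = ((2 * q.re : ℝ) : H) := by
  have h1 : e q 1 = star q + q := by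
    rw [e, Finset.sum_range_succ, Finset.sum_range_one]
    simp
  rw [h1, Quaternion.star_add_self']

theorem e_rec (m : ℕ) : e q (m+1) = q * e q m + (star q)^(m+1) := by
  rw [e, Finset.sum_range_succ', e, Finset.mul_sum]
  congr 1
  · exact Finset.sum_congr rfl fun i _ => by
      rw [Nat.succ_sub_succ, pow_succ']; noncomm_ring
  · simp

theorem e_star (m : ℕ) : star (e q m) = e q m := by
  have h2 : e q m = ∑ i ∈ Finset.range (m+1), q^(m-i) * (star q)^i := by
    rw [e, ← Finset.sum_range_reflect]
    apply Finset.sum_congr rfl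
    intro j hj
    have hj' : j ≤ m := Nat.lt_succ_iff.mp (Finset.mem_range.mp hj)
    rw [Nat.add_sub_cancel, Nat.sub_sub_self hj']
  calc star (e q m) = ∑ i ∈ Finset.range (m+1), q^(m-i) * (star q)^i := by
        rw [e, star_sum]
        exact Finset.sum_congr rfl fun i hi => by
          rw [star_mul, star_pow, star_pow, star_star]
    _ = e q m := h2.symm

theorem e_coe (m : ℕ) : e q m = (((e q m).re : ℝ) : H) :=
  Quaternion.star_eq_self.mp (e_star q m)

theorem e_comm (m : ℕ) (a : H) : e q m * a = a * e q m := by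
  rw [e_coe q m, Quaternion.coe_commutes]

theorem e_norm (m : ℕ) : ‖e q m‖ ≤ (m+1) * ‖q‖^m := by
  calc ‖e q m‖ ≤ ∑ i ∈ Finset.range (m+1), ‖q^i * (star q)^(m-i)‖ := norm_sum_le _ _
    _ = ∑ i ∈ Finset.range (m+1), ‖q‖^m := by
        apply Finset.sum_congr rfl
        intro i hi
        have hi' : i ≤ m := Nat.lt_succ_iff.mp (Finset.mem_range.mp hi)
        rw [norm_mul, norm_pow, norm_pow, Quaternion.norm_star, ← pow_add,
          Nat.add_sub_cancel' hi']
    _ = (m+1) * ‖q‖^m := by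
        rw [Finset.sum_const, Finset.card_range]; push_cast; ring

theorem e_recur (m : ℕ) : ((2 * q.re : ℝ) : H) * e q (m+1)
    = e q (m+2) + ((‖q‖^2 : ℝ) : H) * e q m := by
  have hd : ((‖q‖^2 : ℝ) : H) = star q * q := by
    rw [Quaternion.star_mul_self, Quaternion.normSq_eq_norm_mul_self, sq]
  rw [← Quaternion.self_add_star' q, hd]
  have h1 : e q (m+2) = q * e q (m+1) + (star q)^(m+2) := e_rec q (m+1)
  have h2 : e q (m+1) = q * e q m + (star q)^(m+1) := e_rec q m
  calc (q + star q) * e q (m+1) = q * e q (m+1) + star q * (q * e q m + (star q)^(m+1)) := by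
        rw [← h2]; noncomm_ring
    _ = (q * e q (m+1) + (star q)^(m+2)) + (star q * q) * e q m := by
        rw [mul_assoc (star q) q (e q m),
          show (star q)^(m+2) = star q * (star q)^(m+1) from pow_succ' _ _]
        noncomm_ring
    _ = e q (m+2) + (star q * q) * e q m := by rw [← h1]

variable {q s}

section
variable (h : ‖q‖ < ‖s‖)
include h

theorem tpow_mul_QQ (n : ℕ) : (s⁻¹)^(n+2) * QQ q s
    = (s⁻¹)^n - ((2*q.re:ℝ):H) * (s⁻¹)^(n+1) + ((‖q‖^2:ℝ):H) * (s⁻¹)^(n+2) := by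
  have hts : s⁻¹ * s = 1 := inv_mul_cancel₀ (hs0 h)
  have hcst : Commute s⁻¹ s := (Commute.refl s).inv_left₀
  have h20 : (s⁻¹)^2 * s^2 = 1 := by rw [← hcst.mul_pow, hts, one_pow]
  have e1 : (s⁻¹)^(n+2) * s^2 = (s⁻¹)^n := by rw [pow_add, mul_assoc, h20, mul_one]
  have e2 : (s⁻¹)^(n+2) * (((2*q.re:ℝ):H) * s) = ((2*q.re:ℝ):H) * (s⁻¹)^(n+1) := by
    rw [← mul_assoc, ← Quaternion.coe_commutes, mul_assoc,
      show n+2 = (n+1)+1 by omega, ht h (n+1)]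
  have e3 : (s⁻¹)^(n+2) * ((‖q‖^2 : ℝ) : H) = ((‖q‖^2 : ℝ) : H) * (s⁻¹)^(n+2) :=
    (Quaternion.coe_commutes _ _).symm
  calc (s⁻¹)^(n+2) * QQ q s
      = (s⁻¹)^(n+2) * s^2 - (s⁻¹)^(n+2) * (((2*q.re:ℝ):H) * s)
        + (s⁻¹)^(n+2) * ((‖q‖^2:ℝ):H) := by
        simp only [QQ, mul_sub, mul_add]
    _ = _ := by rw [e1, e2, e3]

theorem key2 (n : ℕ) : e q (n+1) * (s⁻¹)^(n+1+2) * QQ q s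
    = e q (n+1) * (s⁻¹)^(n+1) - ((2*q.re:ℝ):H) * e q (n+1) * (s⁻¹)^(n+2)
      + ((‖q‖^2:ℝ):H) * e q (n+1) * (s⁻¹)^(n+3) := by
  have hc : e q (n+1) * ((2*q.re:ℝ):H) = ((2*q.re:ℝ):H) * e q (n+1) := e_comm q _ _
  have hdc : e q (n+1) * ((‖q‖^2:ℝ):H) = ((‖q‖^2:ℝ):H) * e q (n+1) := e_comm q _ _
  calc e q (n+1) * (s⁻¹)^(n+1+2) * QQ q s
      = e q (n+1) * ((s⁻¹)^(n+1+2) * QQ q s) := by rw [mul_assoc]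
    _ = e q (n+1) * ((s⁻¹)^(n+1) - ((2*q.re:ℝ):H) * (s⁻¹)^(n+1+1)
        + ((‖q‖^2:ℝ):H) * (s⁻¹)^(n+1+2)) := by rw [tpow_mul_QQ h (n+1)]
    _ = e q (n+1) * (s⁻¹)^(n+1) - (e q (n+1) * ((2*q.re:ℝ):H)) * (s⁻¹)^(n+1+1)
        + (e q (n+1) * ((‖q‖^2:ℝ):H)) * (s⁻¹)^(n+1+2) := by
        simp only [mul_sub, mul_add, mul_assoc]
    _ = _ := by
        rw [hc, hdc, show n+1+1 = n+2 by omega, show n+1+2 = n+3 by omega]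

theorem claimT (N : ℕ) : (∑ m ∈ Finset.range (N+1), e q m * (s⁻¹)^(m+2)) * QQ q s
    = 1 - e q (N+1) * (s⁻¹)^(N+1) + ((‖q‖^2:ℝ):H) * e q N * (s⁻¹)^(N+2) := by
  induction N with
  | zero =>
      simp only [zero_add, Finset.sum_range_one, e_zero, e_one, one_mul, mul_one, pow_one]
      have h0 := tpow_mul_QQ h 0
      simp only [zero_add, pow_one, pow_zero] at h0
      rw [h0]
  | succ n ih =>
      rw [Finset.sum_range_succ, add_mul, ih, key2 h n]
      have hrec := e_recur q n
      calc 1 - e q (n+1) * (s⁻¹)^(n+1) + ((‖q‖^2:ℝ):H) * e q n * (s⁻¹)^(n+2)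
            + (e q (n+1) * (s⁻¹)^(n+1) - ((2*q.re:ℝ):H) * e q (n+1) * (s⁻¹)^(n+2)
              + ((‖q‖^2:ℝ):H) * e q (n+1) * (s⁻¹)^(n+3)) =
          1 + (((‖q‖^2:ℝ):H) * e q n - ((2*q.re:ℝ):H) * e q (n+1)) * (s⁻¹)^(n+2)
            + ((‖q‖^2:ℝ):H) * e q (n+1) * (s⁻¹)^(n+3) := by noncomm_ring
        _ = 1 - e q (n+2) * (s⁻¹)^(n+2) + ((‖q‖^2:ℝ):H) * e q (n+1) * (s⁻¹)^(n+3) := by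
            have : ((‖q‖^2:ℝ):H) * e q n - ((2*q.re:ℝ):H) * e q (n+1) = - e q (n+2) := by
              rw [hrec]; noncomm_ring
            rw [this]; noncomm_ring
        _ = _ := by rw [show n+1+1 = n+2 by omega, show n+1+2 = n+3 by omega]

theorem summable_e_aux : Summable (fun m : ℕ => ((m:ℝ)+1) * (‖q‖*‖s‖⁻¹)^m) := by
  have h1 := summable_pow_mul_geometric_of_norm_lt_one (R := ℝ) 1 (r := ‖q‖*‖s‖⁻¹)
    (by rw [Real.norm_eq_abs, abs_of_nonneg (hx0 h)]; exact hx1 h)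
  have h2 := summable_geometric_of_lt_one (hx0 h) (hx1 h)
  have h3 := h1.add h2
  apply h3.congr
  intro m
  simp [pow_one]; ring

theorem e_term_norm (m : ℕ) : ‖e q m * (s⁻¹)^m‖ ≤ ((m:ℝ)+1) * (‖q‖*‖s‖⁻¹)^m := by
  rw [norm_mul, norm_pow, norm_inv]
  calc ‖e q m‖ * ‖s‖⁻¹^m ≤ ((m:ℝ)+1)*‖q‖^m * ‖s‖⁻¹^m := by
        apply mul_le_mul_of_nonneg_right _ (by positivity)
        have := e_norm q m
        push_cast at this ⊢
        convert this using 2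
    _ = ((m:ℝ)+1) * (‖q‖*‖s‖⁻¹)^m := by rw [mul_pow]; ring

theorem summable_geo2 : Summable fun m : ℕ => ‖e q m * (s⁻¹)^(m+2)‖ := by
  apply Summable.of_nonneg_of_le (fun m => norm_nonneg _) _
    (((summable_e_aux h).mul_left (‖s‖⁻¹^2)))
  intro m
  have h1 : e q m * (s⁻¹)^(m+2) = e q m * (s⁻¹)^m * (s⁻¹)^2 := by
    rw [pow_add, mul_assoc]
  rw [h1, norm_mul]
  calc ‖e q m * (s⁻¹)^m‖ * ‖(s⁻¹)^2‖ ≤ (((m:ℝ)+1) * (‖q‖*‖s‖⁻¹)^m) * ‖(s⁻¹)^2‖ :=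
        mul_le_mul_of_nonneg_right (e_term_norm h m) (norm_nonneg _)
    _ = ‖s‖⁻¹^2 * (((m:ℝ)+1) * (‖q‖*‖s‖⁻¹)^m) := by
        rw [norm_pow, norm_inv]; ring

theorem tendsto_eN : Tendsto (fun N => e q N * (s⁻¹)^N) atTop (nhds 0) :=
  squeeze_zero_norm (e_term_norm h) (summable_e_aux h).tendsto_atTop_zero

theorem tendstoT : Tendsto (fun N => (∑ m ∈ Finset.range N, e q m * (s⁻¹)^(m+2)) * QQ q s)
    atTop (nhds 1) := by
  rw [← tendsto_add_atTop_iff_nat 1]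
  simp only [claimT h]
  have h1 : Tendsto (fun N => e q (N+1) * (s⁻¹)^(N+1)) atTop (nhds 0) :=
    (tendsto_eN h).comp (tendsto_add_atTop_nat 1)
  have h2 : Tendsto (fun N => ((‖q‖^2:ℝ):H) * e q N * (s⁻¹)^(N+2)) atTop (nhds 0) := by
    have heq : ∀ N : ℕ, ((‖q‖^2:ℝ):H) * e q N * (s⁻¹)^(N+2)
        = ((‖q‖^2:ℝ):H) * (e q N * (s⁻¹)^N) * (s⁻¹)^2 := by
      intro N; rw [pow_add]; noncomm_ring
    simp only [heq]
    have := ((tendsto_eN h).const_mul (((‖q‖^2:ℝ):H))).mul_const ((s⁻¹)^2)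
    simpa using this
  have h3 := ((tendsto_const_nhds : Tendsto (fun _ : ℕ => (1:H)) atTop (nhds 1)).sub h1).add h2
  simpa using h3

theorem L3 : HasSum (fun m : ℕ => e q m * (s⁻¹)^(m+2)) ((QQ q s)⁻¹) := by
  apply hasSum_of_tendsto (summable_geo2 h).of_norm
  have heq : (fun N => ∑ m ∈ Finset.range N, e q m * (s⁻¹)^(m+2))
      = fun N => ((∑ m ∈ Finset.range N, e q m * (s⁻¹)^(m+2)) * QQ q s) * (QQ q s)⁻¹ := by
    funext N; rw [mul_assoc, mul_inv_cancel₀ (hQQ h), mul_one]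
  rw [heq]
  have := (tendstoT h).mul_const ((QQ q s)⁻¹)
  rwa [one_mul] at this

end

/-! ### Power series combinatorics -/

open PowerSeries

variable (q) in
def G1 : PowerSeries H := PowerSeries.mk (fun a => q^a)

variable (q) in
def G2 : PowerSeries H := PowerSeries.mk (fun b => (star q)^b)

theorem commute_qstar : Commute q (star q) := (star_comm_self' q).symm

theorem hG : Commute (G1 q) (G2 q) := by
  show G1 q * G2 q = G2 q * G1 q
  refine PowerSeries.ext fun n => ?_
  rw [PowerSeries.coeff_mul, PowerSeries.coeff_mul, ← Finset.Nat.sum_antidiagonal_swap]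
  apply Finset.sum_congr rfl
  intro p _
  simp only [G1, G2, Prod.fst_swap, Prod.snd_swap, PowerSeries.coeff_mk]
  exact (commute_qstar (q := q)).pow_pow p.2 p.1

theorem coeff_mk_pow (x : H) (n a : ℕ) :
    PowerSeries.coeff (R := H) a ((PowerSeries.mk (fun i => x^i))^(n+1))
      = ((Nat.choose (n+a) n : ℕ) : H) * x^a := by
  induction n generalizing a with
  | zero => simp [PowerSeries.coeff_mk]
  | succ n ih =>
      rw [pow_succ, PowerSeries.coeff_mul, Finset.Nat.sum_antidiagonal_eq_sum_range_succ_mk]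
      have h1 : ∀ i ∈ Finset.range (a+1),
          PowerSeries.coeff (R := H) i ((PowerSeries.mk (fun i => x^i))^(n+1))
            * PowerSeries.coeff (R := H) (a-i) (PowerSeries.mk (fun i => x^i))
          = ((Nat.choose (n+i) n : ℕ) : H) * x^a := by
        intro i hi
        have hi' : i ≤ a := Nat.lt_succ_iff.mp (Finset.mem_range.mp hi)
        rw [ih i, PowerSeries.coeff_mk, mul_assoc, ← pow_add, Nat.add_sub_cancel' hi']
      rw [Finset.sum_congr rfl h1, ← Finset.sum_mul, ← Nat.cast_sum]
      congr 2
      have h2 : ∑ i ∈ Finset.range (a+1), Nat.choose (n+i) n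
          = Nat.choose (a+n+1) (n+1) := by
        rw [← Nat.sum_range_add_choose a n]
        exact Finset.sum_congr rfl fun i _ => by rw [Nat.add_comm]
      rw [h2]
      congr 1
      omega

theorem coeff_G1_pow (n a : ℕ) :
    PowerSeries.coeff (R := H) a ((G1 q)^(n+1)) = ((Nat.choose (n+a) n : ℕ) : H) * q^a :=
  coeff_mk_pow q n a

theorem coeff_G2_pow (n a : ℕ) :
    PowerSeries.coeff (R := H) a ((G2 q)^(n+1)) = ((Nat.choose (n+a) n : ℕ) : H) * (star q)^a :=
  coeff_mk_pow (star q) n a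

variable (q) in
def P' (ℓ K : ℕ) : H := ∑ j ∈ Finset.range (K+1),
  ((Nat.choose (ℓ-1+j) (ℓ-1) * Nat.choose (ℓ+(K-j)) ℓ : ℕ) : H) * q^(K-j) * (star q)^j

theorem aux_reorder (a b : H) (hab : b * a = a * b) (c1 c2 : ℕ) :
    (c1:H) * b * ((c2:H) * a) = ((c1*c2 : ℕ):H) * a * b := by
  have h1 : (c2:H) * b = b * (c2:H) := (Nat.cast_commute c2 b).eq
  calc (c1:H) * b * ((c2:H) * a) = (c1:H) * ((b * (c2:H)) * a) := by noncomm_ring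
    _ = (c1:H) * (((c2:H) * b) * a) := by rw [← h1]
    _ = ((c1:H) * (c2:H)) * (b * a) := by noncomm_ring
    _ = ((c1*c2:ℕ):H) * (a * b) := by rw [hab, Nat.cast_mul]
    _ = ((c1*c2:ℕ):H) * a * b := by rw [mul_assoc]

theorem P'_coeff (ℓ : ℕ) (hℓ : 1 ≤ ℓ) (K : ℕ) :
    P' q ℓ K = PowerSeries.coeff (R := H) K ((G2 q)^ℓ * (G1 q)^(ℓ+1)) := by
  obtain ⟨L, rfl⟩ : ∃ L, ℓ = L+1 := ⟨ℓ-1, by omega⟩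
  rw [PowerSeries.coeff_mul, Finset.Nat.sum_antidiagonal_eq_sum_range_succ_mk, P']
  apply Finset.sum_congr rfl
  intro j hj
  have hj' : j ≤ K := Nat.lt_succ_iff.mp (Finset.mem_range.mp hj)
  rw [coeff_G2_pow, coeff_G1_pow, Nat.add_sub_cancel]
  exact (aux_reorder (q^(K-j)) ((star q)^j)
    (((commute_qstar (q:=q)).symm.pow_pow j (K-j)).eq) _ _).symm

theorem e_flip (m : ℕ) : e q m = ∑ i ∈ Finset.range (m+1), q^(m-i) * (star q)^i := by
  rw [e, ← Finset.sum_range_reflect]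
  apply Finset.sum_congr rfl
  intro j hj
  have hj' : j ≤ m := Nat.lt_succ_iff.mp (Finset.mem_range.mp hj)
  rw [Nat.add_sub_cancel, Nat.sub_sub_self hj']

theorem e_coeff (m : ℕ) : e q m = PowerSeries.coeff (R := H) m (G2 q * G1 q) := by
  rw [PowerSeries.coeff_mul, Finset.Nat.sum_antidiagonal_eq_sum_range_succ_mk, e_flip]
  apply Finset.sum_congr rfl
  intro j hj
  simp only [G1, G2, PowerSeries.coeff_mk]
  exact ((commute_qstar (q:=q)).symm.pow_pow j (m-j)).eq.symm

theorem conv0 (n : ℕ) : ∑ k ∈ Finset.range (n+1), q^k * e q (n-k) = P' q 1 n := by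
  have h1 : ∀ k ∈ Finset.range (n+1), q^k * e q (n-k)
      = PowerSeries.coeff (R := H) k (G1 q) * PowerSeries.coeff (R := H) (n-k) (G2 q * G1 q) := by
    intro k _
    rw [e_coeff]
    simp only [G1, PowerSeries.coeff_mk]
  have h2 : PowerSeries.coeff (R := H) n (G1 q * (G2 q * G1 q))
      = ∑ k ∈ Finset.range (n+1),
        PowerSeries.coeff (R := H) k (G1 q) * PowerSeries.coeff (R := H) (n-k) (G2 q * G1 q) := by
    rw [PowerSeries.coeff_mul, Finset.Nat.sum_antidiagonal_eq_sum_range_succ_mk]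
  rw [Finset.sum_congr rfl h1, ← h2, P'_coeff 1 le_rfl n]
  congr 1
  calc G1 q * (G2 q * G1 q) = (G1 q * G2 q) * G1 q := by rw [mul_assoc]
    _ = (G2 q * G1 q) * G1 q := by rw [(hG (q:=q)).eq]
    _ = (G2 q)^1 * (G1 q)^(1+1) := by
        rw [pow_one, pow_succ, pow_one, mul_assoc]

theorem conv (ℓ : ℕ) (hℓ : 1 ≤ ℓ) (n : ℕ) :
    ∑ k ∈ Finset.range (n+1), P' q ℓ k * e q (n-k) = P' q (ℓ+1) n := by
  have h1 : ∀ k ∈ Finset.range (n+1), P' q ℓ k * e q (n-k)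
      = PowerSeries.coeff (R := H) k ((G2 q)^ℓ * (G1 q)^(ℓ+1))
        * PowerSeries.coeff (R := H) (n-k) (G2 q * G1 q) := by
    intro k _
    rw [e_coeff, P'_coeff ℓ hℓ]
  have h2 : PowerSeries.coeff (R := H) n ((G2 q)^ℓ * (G1 q)^(ℓ+1) * (G2 q * G1 q))
      = ∑ k ∈ Finset.range (n+1),
        PowerSeries.coeff (R := H) k ((G2 q)^ℓ * (G1 q)^(ℓ+1))
          * PowerSeries.coeff (R := H) (n-k) (G2 q * G1 q) := by
    rw [PowerSeries.coeff_mul, Finset.Nat.sum_antidiagonal_eq_sum_range_succ_mk]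
  rw [Finset.sum_congr rfl h1, ← h2, P'_coeff (ℓ+1) (by omega) n]
  congr 1
  calc (G2 q)^ℓ * (G1 q)^(ℓ+1) * (G2 q * G1 q)
      = (G2 q)^ℓ * ((G1 q)^(ℓ+1) * G2 q) * G1 q := by noncomm_ring
    _ = (G2 q)^ℓ * (G2 q * (G1 q)^(ℓ+1)) * G1 q := by
        rw [((hG (q:=q)).pow_left (ℓ+1)).eq]
    _ = (G2 q)^(ℓ+1) * (G1 q)^(ℓ+1+1) := by
        rw [pow_succ, pow_succ]; noncomm_ring

section
variable (h : ‖q‖ < ‖s‖)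
include h

theorem step_mul (F : ℕ → H) (c : ℕ) (S : H)
    (hF : HasSum (fun K => F K * (s⁻¹)^(K+c)) S)
    (hFn : Summable (fun K => ‖F K * (s⁻¹)^(K+c)‖)) :
    HasSum (fun n => (∑ k ∈ Finset.range (n+1), F k * e q (n-k)) * (s⁻¹)^(n+c+2))
        (S * (QQ q s)⁻¹)
    ∧ Summable (fun n => ‖(∑ k ∈ Finset.range (n+1), F k * e q (n-k)) * (s⁻¹)^(n+c+2)‖) := by
  have hterm : ∀ n : ℕ, (∑ k ∈ Finset.range (n+1),
      (F k * (s⁻¹)^(k+c)) * (e q (n-k) * (s⁻¹)^(n-k+2)))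
      = (∑ k ∈ Finset.range (n+1), F k * e q (n-k)) * (s⁻¹)^(n+c+2) := by
    intro n
    rw [Finset.sum_mul]
    apply Finset.sum_congr rfl
    intro k hk
    have hk' : k ≤ n := Nat.lt_succ_iff.mp (Finset.mem_range.mp hk)
    have hexp : (k+c)+(n-k+2) = n+c+2 := by omega
    calc F k * (s⁻¹)^(k+c) * (e q (n-k) * (s⁻¹)^(n-k+2))
        = F k * (((s⁻¹)^(k+c) * e q (n-k)) * (s⁻¹)^(n-k+2)) := by noncomm_ring
      _ = F k * ((e q (n-k) * (s⁻¹)^(k+c)) * (s⁻¹)^(n-k+2)) := by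
          rw [← e_comm q (n-k) ((s⁻¹)^(k+c))]
      _ = (F k * e q (n-k)) * (s⁻¹)^(n+c+2) := by
          rw [← hexp]
          simp only [pow_add, pow_succ, pow_zero, one_mul, mul_assoc]
  have hnorm := summable_norm_sum_mul_range_of_summable_norm hFn (summable_geo2 h)
  simp only [hterm] at hnorm
  refine ⟨?_, hnorm⟩
  have hsummable : Summable (fun n => (∑ k ∈ Finset.range (n+1), F k * e q (n-k))
      * (s⁻¹)^(n+c+2)) := hnorm.of_norm
  rw [hsummable.hasSum_iff]
  have htsum := tsum_mul_tsum_eq_tsum_sum_range_of_summable_norm hFn (summable_geo2 h)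
  simp only [hterm] at htsum
  rw [← htsum, hF.tsum_eq, (L3 h).tsum_eq]

theorem Main (ℓ : ℕ) (hℓ : 1 ≤ ℓ) :
    HasSum (fun K => P' q ℓ K * (s⁻¹)^(K+2*ℓ+1)) ((s - star q) * ((QQ q s)⁻¹)^(ℓ+1))
    ∧ Summable (fun K => ‖P' q ℓ K * (s⁻¹)^(K+2*ℓ+1)‖) := by
  induction ℓ, hℓ using Nat.le_induction with
  | base =>
      have hbase := step_mul h (fun k => q^k) 1 ((s - star q) * (QQ q s)⁻¹) (L1 h)
        (summable_geo1 h)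
      have hexp : ∀ n : ℕ, n+1+2 = n+2*1+1 := by omega
      simp only [conv0, hexp] at hbase
      have hval : (s - star q) * (QQ q s)⁻¹ * (QQ q s)⁻¹
          = (s - star q) * ((QQ q s)⁻¹)^(1+1) := by
        rw [pow_succ, pow_one, mul_assoc]
      rwa [hval] at hbase
  | succ ℓ hℓ ih =>
      have hstep := step_mul h (P' q ℓ) (2*ℓ+1) ((s - star q) * ((QQ q s)⁻¹)^(ℓ+1))
        (by simpa only [← add_assoc] using ih.1) (by simpa only [← add_assoc] using ih.2)
      have hexp : ∀ n : ℕ, n+(2*ℓ+1)+2 = n+2*(ℓ+1)+1 := by omega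
      simp only [conv ℓ hℓ, hexp] at hstep
      have hval : (s - star q) * ((QQ q s)⁻¹)^(ℓ+1) * (QQ q s)⁻¹
          = (s - star q) * ((QQ q s)⁻¹)^(ℓ+1+1) := by
        rw [pow_succ ((QQ q s)⁻¹) (ℓ+1), mul_assoc]
      rwa [hval] at hstep

end

section Final
variable {q s : H} (h : ‖q‖ < ‖s‖)
include h

theorem sum_binom (ν k : ℕ) (X : H) :
    ∑ j ∈ Finset.range (ν+1), ((Nat.choose ν j : ℕ) : H) * (((-q.re)^j : ℝ) : H)
      * X * s^(ν-j) * (s⁻¹)^(k+1)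
    = X * (s - ((q.re : ℝ) : H))^ν * (s⁻¹)^(k+1) := by
  have hcomm : Commute (((-q.re : ℝ)) : H) s := Quaternion.coe_commute _ _
  have hpow := hcomm.add_pow ν
  have hx : (((-q.re : ℝ)) : H) + s = s - ((q.re:ℝ):H) := by
    rw [show ((-q.re : ℝ) : H) = -((q.re : ℝ) : H) by push_cast; ring, neg_add_eq_sub]
  rw [← hx, hpow, Finset.mul_sum, Finset.sum_mul]
  apply Finset.sum_congr rfl
  intro j _
  simp only [← Quaternion.coe_natCast, ← Quaternion.coe_pow, Quaternion.coe_mul_eq_smul,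
    Quaternion.mul_coe_eq_smul, smul_mul_assoc, mul_smul_comm, smul_smul, mul_assoc]

omit h in
theorem Ppoly_eq (ℓ K : ℕ) : Ppoly ℓ (K + 2*ℓ) q = P' q ℓ K := by
  rw [Ppoly, P', show K + 2*ℓ + 1 - 2*ℓ = K + 1 by omega]
  apply Finset.sum_congr rfl
  intro j hj
  have hj' : j ≤ K := Nat.lt_succ_iff.mp (Finset.mem_range.mp hj)
  rw [show K + 2*ℓ - ℓ - j = ℓ + (K - j) by omega, show K + 2*ℓ - 2*ℓ - j = K - j by omega]

omit h in
theorem Ppoly_zero (ℓ k : ℕ) (hk : k < 2*ℓ) : Ppoly ℓ k q = 0 := by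
  rw [Ppoly, show k + 1 - 2*ℓ = 0 by omega]
  simp

omit h in
theorem commute_D_inv (ν ℓ : ℕ) :
    Commute ((s - ((q.re : ℝ) : H))^ν) (((QQ q s)⁻¹)^(ℓ+1)) := by
  have h1 : Commute s (QQ q s) := by
    have a1 : Commute s (s^2) := (Commute.refl s).pow_right 2
    have a2 : Commute s (((2 * q.re : ℝ) : H) * s) :=
      ((Quaternion.coe_commute _ s).symm).mul_right (Commute.refl s)
    have a3 : Commute s ((‖q‖^2 : ℝ) : H) := (Quaternion.coe_commute _ s).symm
    exact (a1.sub_right a2).add_right a3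
  have h2 : Commute (s - ((q.re : ℝ) : H)) (QQ q s) :=
    h1.sub_left (Quaternion.coe_commute _ _)
  exact (h2.inv_right₀.pow_pow ν (ℓ+1))

omit h in
theorem commute_D_t (ν m : ℕ) : Commute ((s - ((q.re : ℝ) : H))^ν) ((s⁻¹)^m) := by
  have h1 : Commute (s - ((q.re : ℝ) : H)) s⁻¹ :=
    ((Commute.refl s).sub_left (Quaternion.coe_commute _ _)).inv_right₀
  exact h1.pow_pow ν m

/-- the main assembly -/
theorem final (ℓ ν : ℕ) (hℓ : 1 ≤ ℓ) :
    HasSum (fun k : ℕ => Ppoly ℓ k q * (s - ((q.re : ℝ) : H))^ν * (s⁻¹)^(k+1))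
      ((s - star q) * (s - ((q.re : ℝ) : H))^ν * ((QQ q s)⁻¹)^(ℓ+1)) := by
  have hMain := (Main h ℓ hℓ).1
  have h1 : HasSum (fun K => P' q ℓ K * (s⁻¹)^(K+2*ℓ+1) * ((s - ((q.re : ℝ) : H))^ν))
      ((s - star q) * ((QQ q s)⁻¹)^(ℓ+1) * ((s - ((q.re : ℝ) : H))^ν)) := hMain.mul_right ((s - ((q.re : ℝ) : H))^ν)
  have hterm : ∀ K : ℕ, P' q ℓ K * (s⁻¹)^(K+2*ℓ+1) * ((s - ((q.re : ℝ) : H))^ν)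
      = Ppoly ℓ (K + 2*ℓ) q * ((s - ((q.re : ℝ) : H))^ν) * (s⁻¹)^((K+2*ℓ)+1) := by
    intro K
    rw [Ppoly_eq ℓ K, mul_assoc, mul_assoc, (commute_D_t ν (K+2*ℓ+1)).eq]
  simp only [hterm] at h1
  have h2 : (s - star q) * ((QQ q s)⁻¹)^(ℓ+1) * ((s - ((q.re : ℝ) : H))^ν) = (s - star q) * ((s - ((q.re : ℝ) : H))^ν) * ((QQ q s)⁻¹)^(ℓ+1) := by
    rw [mul_assoc, mul_assoc, ← (commute_D_inv ν ℓ).eq]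
  rw [h2] at h1
  have hinj : Function.Injective (fun K : ℕ => K + 2*ℓ) := fun a b hab => Nat.add_right_cancel hab
  refine (Function.Injective.hasSum_iff hinj ?_).mp ?_
  · intro k hk
    have hk' : k < 2*ℓ := by
      by_contra hc
      exact hk ⟨k - 2*ℓ, by show k - 2*ℓ + 2*ℓ = k; omega⟩
    rw [Ppoly_zero ℓ k hk', zero_mul, zero_mul]
  · exact h1

theorem final_summable (ℓ ν : ℕ) (hℓ : 1 ≤ ℓ) :
    Summable (fun k : ℕ =>
      ‖Ppoly ℓ k q * ((s - ((q.re : ℝ) : H))^ν) * (s⁻¹)^(k+1)‖) := by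
  have hinj : Function.Injective (fun K : ℕ => K + 2*ℓ) := fun a b hab => Nat.add_right_cancel hab
  refine (Function.Injective.summable_iff hinj ?_).mp ?_
  · intro k hk
    have hk' : k < 2*ℓ := by
      by_contra hc
      exact hk ⟨k - 2*ℓ, by show k - 2*ℓ + 2*ℓ = k; omega⟩
    rw [Ppoly_zero ℓ k hk', zero_mul, zero_mul, norm_zero]
  · have h1 : Summable (fun K => ‖P' q ℓ K * (s⁻¹)^(K+2*ℓ+1)‖ * ‖(s - ((q.re : ℝ) : H))^ν‖) :=
      (Main h ℓ hℓ).2.mul_right _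
    apply h1.congr
    intro K
    show ‖P' q ℓ K * (s⁻¹)^(K+2*ℓ+1)‖ * ‖(s - ((q.re : ℝ) : H))^ν‖
        = ‖Ppoly ℓ (K+2*ℓ) q * ((s - ((q.re : ℝ) : H))^ν) * (s⁻¹)^((K+2*ℓ)+1)‖
    rw [← norm_mul, Ppoly_eq ℓ K, mul_assoc, mul_assoc, (commute_D_t ν (K+2*ℓ+1)).eq]

end Final
end K1aux
end

/-- **Equation (5.18).** For `‖q‖ < ‖s‖`, with `Q = s² - 2 (re q) s + ‖q‖²` (nonzero), the
kernel `K_{ν,ℓ+1}^{1,L}(s,q) = (s - q̄)(s - re q)^ν Q^{-(ℓ+1)}` admits the absolutely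
convergent series expansion
`∑_{k=2ℓ}^∞ ∑_{j=0}^ν C(ν,j) (-re q)^j P_ℓ^k(q) s^{ν-j} s^{-k-1}`
(the terms with `k < 2ℓ` vanish). -/
theorem K1_series (q s : Quaternion ℝ) (ℓ ν : ℕ) (hℓ : 1 ≤ ℓ) (h : ‖q‖ < ‖s‖) :
    Summable (fun k : ℕ => ‖∑ j ∈ Finset.range (ν + 1),
      ((Nat.choose ν j : ℕ) : Quaternion ℝ) * (((-q.re) ^ j : ℝ) : Quaternion ℝ) *
        Ppoly ℓ k q * s ^ (ν - j) * (s⁻¹) ^ (k + 1)‖) ∧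
    (s - star q) * (s - ((q.re : ℝ) : Quaternion ℝ)) ^ ν *
        ((s ^ 2 - ((2 * q.re : ℝ) : Quaternion ℝ) * s + ((‖q‖ ^ 2 : ℝ) : Quaternion ℝ))⁻¹) ^
          (ℓ + 1) =
      ∑' k : ℕ, ∑ j ∈ Finset.range (ν + 1),
        ((Nat.choose ν j : ℕ) : Quaternion ℝ) * (((-q.re) ^ j : ℝ) : Quaternion ℝ) *
          Ppoly ℓ k q * s ^ (ν - j) * (s⁻¹) ^ (k + 1) := by
  have hfun : ∀ k : ℕ, (∑ j ∈ Finset.range (ν + 1),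
      ((Nat.choose ν j : ℕ) : Quaternion ℝ) * (((-q.re) ^ j : ℝ) : Quaternion ℝ) *
        Ppoly ℓ k q * s ^ (ν - j) * (s⁻¹) ^ (k + 1))
      = Ppoly ℓ k q * (s - ((q.re : ℝ) : Quaternion ℝ))^ν * (s⁻¹)^(k+1) :=
    fun k => K1aux.sum_binom h ν k (Ppoly ℓ k q)
  constructor
  · simp only [hfun]
    exact K1aux.final_summable h ℓ ν hℓ
  · simp only [hfun]
    rw [(K1aux.final h ℓ ν hℓ).tsum_eq]
    rfl
end

section
/- Let q, s be real quaternions with ‖q‖ < ‖s‖, let ℓ ≥ 1 and ν ≥ 0 be integers, and set Q := s² − 2·(re q)·s + ‖q‖² (nonzero since ‖q‖ < ‖s‖). Then (s − re q)^ν·(Q⁻¹)^{ℓ} = Σ_{k=2ℓ−1}^{∞} Σ_{j=0}^{ν} C(ν, j)·(−re q)^j·H_ℓ^k(q)·s^{ν−j}·(s⁻¹)^{k+1}, where the series over k converges absolutely. -/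
noncomputable def Hc (ℓ k : ℕ) (c : ℂ) : ℂ :=
  ∑ j ∈ Finset.range (k + 2 - 2 * ℓ),
    ((Nat.choose (ℓ - 1 + j) (ℓ - 1) * Nat.choose (k - ℓ - j) (ℓ - 1) : ℕ) : ℂ) *
      c ^ (k + 1 - 2 * ℓ - j) * ((starRingEnd ℂ) c) ^ j

/-- For every quaternion `x` there is a real-algebra hom `ℂ →ₐ[ℝ] ℍ` sending the complex
number `⟨x.re, ‖x.im‖⟩` to `x`, compatible with conjugation, and isometric. -/
lemma exists_algHom (x : Quaternion ℝ) :
    ∃ φ : ℂ →ₐ[ℝ] Quaternion ℝ,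
      φ ⟨x.re, ‖x.im‖⟩ = x ∧ (∀ w, φ ((starRingEnd ℂ) w) = star (φ w)) ∧
      ∀ w, ‖φ w‖ = ‖w‖ := by
  obtain ⟨u, hu, hre, him⟩ : ∃ u : Quaternion ℝ, u * u = -1 ∧ u.re = 0 ∧ ‖x.im‖ • u = x.im := by
    by_cases hx : x.im = 0
    · refine ⟨(⟨0, 1, 0, 0⟩ : Quaternion ℝ), ?_, rfl, by simp only [hx, norm_zero]; exact zero_smul ℝ _⟩
      show (⟨0, 1, 0, 0⟩ : Quaternion ℝ) * ⟨0, 1, 0, 0⟩ = -1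
      ext <;> simp
    · have hn : ‖x.im‖ ≠ 0 := norm_ne_zero_iff.2 hx
      refine ⟨‖x.im‖⁻¹ • x.im, ?_, ?_, ?_⟩
      · have h1 : x.im * x.im = -((‖x.im‖ * ‖x.im‖ : ℝ) : Quaternion ℝ) := by
          have := Quaternion.im_sq x
          rw [sq] at this
          rw [this, Quaternion.normSq_eq_norm_mul_self]
        rw [smul_mul_smul_comm, h1, smul_neg, Quaternion.smul_coe]
        norm_cast
        rw [show ‖x.im‖⁻¹ * ‖x.im‖⁻¹ * (‖x.im‖ * ‖x.im‖) = 1 by field_simp]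
        simp
      · simp [Quaternion.re_smul, Quaternion.re_im]
      · rw [smul_smul, mul_inv_cancel₀ hn, one_smul]
  have hstaru : star u = -u := Quaternion.star_eq_neg.2 hre
  refine ⟨Complex.liftAux u hu, ?_, ?_, ?_⟩
  · rw [Complex.liftAux_apply]
    show algebraMap ℝ (Quaternion ℝ) x.re + ‖x.im‖ • u = x
    rw [Quaternion.algebraMap_def, him]
    exact x.re_add_im
  · intro w
    rw [Complex.liftAux_apply, Complex.liftAux_apply, star_add, Quaternion.star_smul, hstaru]
    simp [Complex.conj_re, Complex.conj_im, Quaternion.algebraMap_def, smul_neg]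
  · intro w
    have hnsq : Quaternion.normSq u = 1 := by
      have h2 : Quaternion.normSq u * Quaternion.normSq u = 1 := by
        rw [← map_mul, hu]; simp
      nlinarith [Quaternion.normSq_nonneg (a := u)]
    have him2 : u.imI ^ 2 + u.imJ ^ 2 + u.imK ^ 2 = 1 := by
      have := Quaternion.normSq_def' u
      rw [hnsq] at this
      change (1 : ℝ) = u.re ^ 2 + u.imI ^ 2 + u.imJ ^ 2 + u.imK ^ 2 at this
      rw [hre] at this; nlinarith
    have key : ‖Complex.liftAux u hu w‖ * ‖Complex.liftAux u hu w‖ = ‖w‖ * ‖w‖ := by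
      rw [← Quaternion.normSq_eq_norm_mul_self]
      rw [Complex.liftAux_apply, Quaternion.normSq_def']
      simp only [Quaternion.algebraMap_def, Quaternion.re_add, Quaternion.imI_add,
        Quaternion.imJ_add, Quaternion.imK_add, Quaternion.re_coe, Quaternion.imI_coe,
        Quaternion.imJ_coe, Quaternion.imK_coe, Quaternion.re_smul, Quaternion.imI_smul,
        Quaternion.imJ_smul, Quaternion.imK_smul, smul_eq_mul, hre, mul_zero, add_zero, zero_add]
      have hw : ‖w‖ * ‖w‖ = w.re ^ 2 + w.im ^ 2 := by
        rw [← sq, ← Complex.normSq_eq_norm_sq, Complex.normSq_apply, sq, sq]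
      rw [hw]; ring_nf; nlinarith [him2]
    nlinarith [norm_nonneg (Complex.liftAux u hu w), norm_nonneg w, key]

lemma Hc_conj (ℓ k : ℕ) (hℓ : 1 ≤ ℓ) (c : ℂ) :
    (starRingEnd ℂ) (Hc ℓ k c) = Hc ℓ k c := by
  unfold Hc
  rw [map_sum]
  simp only [map_mul, map_pow, map_natCast, Complex.conj_conj]
  rcases le_or_gt (2 * ℓ - 1) k with hk | hk
  · have hrange : k + 2 - 2 * ℓ = (k + 1 - 2 * ℓ) + 1 := by omega
    rw [hrange]
    conv_lhs => rw [← Finset.sum_range_reflect]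
    refine Finset.sum_congr rfl fun j hj => ?_
    simp only [Finset.mem_range] at hj
    have e1 : k + 1 - 2 * ℓ + 1 - 1 - j = k + 1 - 2 * ℓ - j := by omega
    rw [e1]
    have e2 : ℓ - 1 + (k + 1 - 2 * ℓ - j) = k - ℓ - j := by omega
    have e3 : k - ℓ - (k + 1 - 2 * ℓ - j) = ℓ - 1 + j := by omega
    have e4 : k + 1 - 2 * ℓ - (k + 1 - 2 * ℓ - j) = j := by omega
    rw [e2, e3, e4]
    push_cast
    ring
  · have : k + 2 - 2 * ℓ = 0 := by omega
    simp [this]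

lemma Hc_real (ℓ k : ℕ) (hℓ : 1 ≤ ℓ) (c : ℂ) :
    Hc ℓ k c = ((Hc ℓ k c).re : ℂ) :=
  (Complex.conj_eq_iff_re.1 (Hc_conj ℓ k hℓ c)).symm

lemma map_Hc (φ : ℂ →ₐ[ℝ] Quaternion ℝ)
    (hstar : ∀ w, φ ((starRingEnd ℂ) w) = star (φ w)) (ℓ k : ℕ) (c : ℂ) :
    φ (Hc ℓ k c) = Hpoly ℓ k (φ c) := by
  unfold Hc Hpoly
  rw [map_sum]
  refine Finset.sum_congr rfl fun j _ => ?_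
  rw [map_mul, map_mul, map_pow, map_pow, map_natCast, hstar]

lemma main_c (ℓ ν : ℕ) (hℓ : 1 ≤ ℓ) (c z : ℂ) (h : ‖c‖ < ‖z‖) :
    Summable (fun k : ℕ => ‖∑ j ∈ Finset.range (ν + 1),
      ((Nat.choose ν j : ℕ) : ℂ) * (((-c.re) ^ j : ℝ) : ℂ) * Hc ℓ k c * z ^ (ν - j) *
        (z⁻¹) ^ (k + 1)‖) ∧
    HasSum (fun k : ℕ => ∑ j ∈ Finset.range (ν + 1),
      ((Nat.choose ν j : ℕ) : ℂ) * (((-c.re) ^ j : ℝ) : ℂ) * Hc ℓ k c * z ^ (ν - j) *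
        (z⁻¹) ^ (k + 1))
      ((z - ((c.re : ℝ) : ℂ)) ^ ν *
        ((z ^ 2 - ((2 * c.re : ℝ) : ℂ) * z + ((‖c‖ ^ 2 : ℝ) : ℂ))⁻¹) ^ ℓ) := by
  have hz0 : (0 : ℝ) < ‖z‖ := lt_of_le_of_lt (norm_nonneg c) h
  have hz : z ≠ 0 := norm_pos_iff.1 hz0
  set d := ℓ - 1 with hd
  have hℓd : ℓ = d + 1 := by omega
  set w : ℂ := z⁻¹ with hw
  set c' := (starRingEnd ℂ) c with hc'
  have hwnorm : ‖c‖ * ‖w‖ < 1 := by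
    rw [hw, norm_inv, ← div_eq_mul_inv]
    exact (div_lt_one hz0).2 h
  have hr1 : ‖c * w‖ < 1 := by rw [norm_mul]; exact hwnorm
  have hr2 : ‖c' * w‖ < 1 := by
    rw [norm_mul, hc', RCLike.norm_conj]; exact hwnorm
  set F : ℕ → ℂ := fun i => ((i + d).choose d : ℂ) * (c * w) ^ i with hF_def
  set G : ℕ → ℂ := fun j => ((j + d).choose d : ℂ) * (c' * w) ^ j with hG_def
  have hF : HasSum F (1 / (1 - c * w) ^ (d + 1)) :=
    hasSum_choose_mul_geometric_of_norm_lt_one d hr1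
  have hG : HasSum G (1 / (1 - c' * w) ^ (d + 1)) :=
    hasSum_choose_mul_geometric_of_norm_lt_one d hr2
  have hFn : Summable fun i => ‖F i‖ := by
    have h1 : Summable fun n : ℕ => ((n + d).choose d : ℝ) * ‖c * w‖ ^ n :=
      summable_choose_mul_geometric_of_norm_lt_one d
        (by rwa [Real.norm_eq_abs, abs_of_nonneg (norm_nonneg _)])
    exact h1.congr fun i => by
      simp [hF_def, norm_mul, norm_pow, Complex.norm_natCast]
  have hGn : Summable fun j => ‖G j‖ := by
    have h1 : Summable fun n : ℕ => ((n + d).choose d : ℝ) * ‖c' * w‖ ^ n :=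
      summable_choose_mul_geometric_of_norm_lt_one d
        (by rwa [Real.norm_eq_abs, abs_of_nonneg (norm_nonneg _)])
    exact h1.congr fun i => by
      simp [hG_def, norm_mul, norm_pow, Complex.norm_natCast]
  set P : ℂ := (1 / (1 - c * w) ^ (d + 1)) * (1 / (1 - c' * w) ^ (d + 1)) with hP
  have hprod : Summable fun m => ‖∑ kl ∈ Finset.HasAntidiagonal.antidiagonal m, F kl.1 * G kl.2‖ :=
    summable_norm_sum_mul_antidiagonal_of_summable_norm hFn hGn
  have hS : HasSum (fun m => ∑ kl ∈ Finset.HasAntidiagonal.antidiagonal m, F kl.1 * G kl.2) P := by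
    have h2 := hprod.of_norm.hasSum
    rwa [← tsum_mul_tsum_eq_tsum_sum_antidiagonal_of_summable_norm hFn hGn,
      hF.tsum_eq, hG.tsum_eq] at h2
  have hSterm : ∀ m, ∑ kl ∈ Finset.HasAntidiagonal.antidiagonal m, F kl.1 * G kl.2
      = Hc ℓ (m + (2 * ℓ - 1)) c * w ^ m := by
    intro m
    rw [Finset.Nat.sum_antidiagonal_eq_sum_range_succ (fun i j => F i * G j)]
    unfold Hc
    rw [← hc']
    have hrange : m + (2 * ℓ - 1) + 2 - 2 * ℓ = m + 1 := by omega
    rw [hrange, Finset.sum_mul]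
    conv_rhs => rw [← Finset.sum_range_reflect]
    refine Finset.sum_congr rfl fun j hj => ?_
    simp only [Finset.mem_range] at hj
    have e1 : m + 1 - 1 - j = m - j := by omega
    have e2 : ℓ - 1 + (m - j) = m - j + d := by omega
    have e3 : m + (2 * ℓ - 1) - ℓ - (m - j) = j + d := by omega
    have e4 : m + (2 * ℓ - 1) + 1 - 2 * ℓ - (m - j) = j := by omega
    rw [e1, e2, e3, e4]
    simp only [hF_def, hG_def]
    rw [mul_pow, mul_pow]
    have e5 : w ^ j * w ^ (m - j) = w ^ m := by rw [← pow_add]; congr 1; omega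
    push_cast
    rw [← e5]
    ring
  have hS' : HasSum (fun m => Hc ℓ (m + (2 * ℓ - 1)) c * w ^ m) P := by
    simpa only [hSterm] using hS
  have hS2 : HasSum (fun m => Hc ℓ (m + (2 * ℓ - 1)) c * w ^ (m + (2 * ℓ - 1) + 1))
      (P * w ^ (2 * ℓ)) := by
    refine (hS'.mul_right (w ^ (2 * ℓ))).congr_fun fun m => ?_
    rw [mul_assoc, ← pow_add]
    congr 2
    omega
  have hw0 : w ≠ 0 := inv_ne_zero hz
  have hA : (1 - c * w) ≠ 0 := by
    intro hzero
    rw [sub_eq_zero] at hzero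
    rw [← hzero] at hr1
    simp at hr1
  have hB : (1 - c' * w) ≠ 0 := by
    intro hzero
    rw [sub_eq_zero] at hzero
    rw [← hzero] at hr2
    simp at hr2
  set X : ℂ := z ^ 2 - ((2 * c.re : ℝ) : ℂ) * z + ((‖c‖ ^ 2 : ℝ) : ℂ) with hXdef
  have key : X * w ^ 2 = (1 - c * w) * (1 - c' * w) := by
    have h1 : (c + c' : ℂ) = ((2 * c.re : ℝ) : ℂ) := by
      rw [hc']; exact_mod_cast Complex.add_conj c
    have h2 : c * c' = ((‖c‖ ^ 2 : ℝ) : ℂ) := by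
      rw [hc', Complex.mul_conj]
      norm_cast
      rw [Complex.normSq_eq_norm_sq]
    have expand : (1 - c * w) * (1 - c' * w) = 1 - (c + c') * w + (c * c') * w ^ 2 := by ring
    rw [expand, h1, h2, hXdef, hw]
    field_simp
  have hX1 : X = (1 - c * w) * (1 - c' * w) * z ^ 2 := by
    rw [← key, hw]
    field_simp
  have hX : (X⁻¹) ^ ℓ = P * w ^ (2 * ℓ) := by
    rw [hX1, mul_inv, mul_inv, mul_pow, mul_pow, hP]
    simp only [one_div, inv_pow, ← hℓd]
    rw [hw, ← inv_pow]
    congr 1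
    rw [← pow_mul, ← inv_pow]
  set f : ℕ → ℂ := fun k => Hc ℓ k c * w ^ (k + 1) with hf
  have hinj : Function.Injective (fun m : ℕ => m + (2 * ℓ - 1)) := fun a b hab => by
    simpa using hab
  have hvanish : ∀ k ∉ Set.range (fun m : ℕ => m + (2 * ℓ - 1)), f k = 0 := by
    intro k hk
    have hk' : k < 2 * ℓ - 1 := by
      by_contra hcon
      exact hk ⟨k - (2 * ℓ - 1), by show k - (2 * ℓ - 1) + (2 * ℓ - 1) = k; omega⟩
    have hzr : k + 2 - 2 * ℓ = 0 := by omega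
    simp [hf, Hc, hzr]
  have hFull : HasSum f ((X⁻¹) ^ ℓ) := by
    rw [hX]
    exact (hinj.hasSum_iff hvanish).1 hS2
  have hnormf : Summable fun k => ‖f k‖ := by
    refine (hinj.summable_iff (g := fun m : ℕ => m + (2 * ℓ - 1))
      (f := fun k => ‖f k‖) ?_).1 ?_
    · intro k hk
      show ‖f k‖ = 0
      rw [hvanish k hk, norm_zero]
    · refine (hprod.mul_right ‖w ^ (2 * ℓ)‖).congr fun m => ?_
      rw [hSterm m, ← norm_mul, mul_assoc, ← pow_add]
      show ‖Hc ℓ (m + (2 * ℓ - 1)) c * w ^ (m + 2 * ℓ)‖ = ‖f (m + (2 * ℓ - 1))‖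
      rw [show m + 2 * ℓ = m + (2 * ℓ - 1) + 1 by omega]
  have hBinom : (z - ((c.re : ℝ) : ℂ)) ^ ν =
      ∑ j ∈ Finset.range (ν + 1),
        ((Nat.choose ν j : ℕ) : ℂ) * (((-c.re) ^ j : ℝ) : ℂ) * z ^ (ν - j) := by
    rw [sub_eq_add_neg, add_pow]
    conv_lhs => rw [← Finset.sum_range_reflect]
    refine Finset.sum_congr rfl fun j hj => ?_
    simp only [Finset.mem_range] at hj
    have e1 : ν + 1 - 1 - j = ν - j := by omega
    have e2 : ν - (ν - j) = j := by omega
    rw [e1, e2, Nat.choose_symm (by omega : j ≤ ν)]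
    push_cast
    ring
  have hterm : ∀ k, (z - ((c.re : ℝ) : ℂ)) ^ ν * f k
      = ∑ j ∈ Finset.range (ν + 1),
        ((Nat.choose ν j : ℕ) : ℂ) * (((-c.re) ^ j : ℝ) : ℂ) * Hc ℓ k c * z ^ (ν - j) *
          (z⁻¹) ^ (k + 1) := by
    intro k
    rw [hBinom, Finset.sum_mul]
    refine Finset.sum_congr rfl fun j _ => ?_
    rw [hf, ← hw]
    ring
  constructor
  · refine (hnormf.mul_left ‖(z - ((c.re : ℝ) : ℂ)) ^ ν‖).congr fun k => ?_
    rw [← norm_mul, hterm k]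
  · exact (hFull.mul_left ((z - ((c.re : ℝ) : ℂ)) ^ ν)).congr_fun fun k => (hterm k).symm

lemma hcoe_aux (χ : ℂ →ₐ[ℝ] Quaternion ℝ) (r : ℝ) :
    χ ((r : ℂ)) = ((r : ℝ) : Quaternion ℝ) := by
  have h1 := χ.commutes r
  rwa [Complex.coe_algebraMap, Quaternion.algebraMap_def] at h1


/-- **Equation (5.19).** For `‖q‖ < ‖s‖`, with `Q = s² - 2 (re q) s + ‖q‖²` (nonzero), the
kernel `K_{ν,ℓ}^{2}(s,q) = (s - re q)^ν Q^{-ℓ}` admits the absolutely convergent series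
expansion `∑_{k=2ℓ-1}^∞ ∑_{j=0}^ν C(ν,j) (-re q)^j H_ℓ^k(q) s^{ν-j} s^{-k-1}`
(the terms with `k < 2ℓ-1` vanish). -/
theorem K2_series (q s : Quaternion ℝ) (ℓ ν : ℕ) (hℓ : 1 ≤ ℓ) (h : ‖q‖ < ‖s‖) :
    Summable (fun k : ℕ => ‖∑ j ∈ Finset.range (ν + 1),
      ((Nat.choose ν j : ℕ) : Quaternion ℝ) * (((-q.re) ^ j : ℝ) : Quaternion ℝ) *
        Hpoly ℓ k q * s ^ (ν - j) * (s⁻¹) ^ (k + 1)‖) ∧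
    (s - ((q.re : ℝ) : Quaternion ℝ)) ^ ν *
        ((s ^ 2 - ((2 * q.re : ℝ) : Quaternion ℝ) * s + ((‖q‖ ^ 2 : ℝ) : Quaternion ℝ))⁻¹) ^ ℓ =
      ∑' k : ℕ, ∑ j ∈ Finset.range (ν + 1),
        ((Nat.choose ν j : ℕ) : Quaternion ℝ) * (((-q.re) ^ j : ℝ) : Quaternion ℝ) *
          Hpoly ℓ k q * s ^ (ν - j) * (s⁻¹) ^ (k + 1) := by
  obtain ⟨φ, hφq, hφstar, hφnorm⟩ := exists_algHom q
  obtain ⟨ψ, hψs, hψstar, hψnorm⟩ := exists_algHom s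
  set cq : ℂ := ⟨q.re, ‖q.im‖⟩ with hcq
  set cs : ℂ := ⟨s.re, ‖s.im‖⟩ with hcs
  have hcqnorm : ‖cq‖ = ‖q‖ := by rw [← hφnorm cq, hφq]
  have hcsnorm : ‖cs‖ = ‖s‖ := by rw [← hψnorm cs, hψs]
  have hre : cq.re = q.re := rfl
  obtain ⟨hsum, hhs⟩ := main_c ℓ ν hℓ cq cs (by rw [hcqnorm, hcsnorm]; exact h)
  have hψH : ∀ k, ψ (Hc ℓ k cq) = Hpoly ℓ k q := by
    intro k
    have e : ψ (Hc ℓ k cq) = φ (Hc ℓ k cq) := by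
      rw [Hc_real ℓ k hℓ cq, hcoe_aux ψ, hcoe_aux φ]
    rw [e, map_Hc φ hφstar, hφq]
  have hmapterm : ∀ k, ψ (∑ j ∈ Finset.range (ν + 1),
      ((Nat.choose ν j : ℕ) : ℂ) * (((-cq.re) ^ j : ℝ) : ℂ) * Hc ℓ k cq * cs ^ (ν - j) *
        (cs⁻¹) ^ (k + 1))
      = ∑ j ∈ Finset.range (ν + 1),
        ((Nat.choose ν j : ℕ) : Quaternion ℝ) * (((-q.re) ^ j : ℝ) : Quaternion ℝ) *
          Hpoly ℓ k q * s ^ (ν - j) * (s⁻¹) ^ (k + 1) := by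
    intro k
    rw [map_sum]
    refine Finset.sum_congr rfl fun j _ => ?_
    rw [map_mul, map_mul, map_mul, map_mul, map_pow, map_pow, map_inv₀, map_natCast,
      hψs, hψH, hre, hcoe_aux ψ]
  have hLHS : ψ ((cs - ((cq.re : ℝ) : ℂ)) ^ ν *
      ((cs ^ 2 - ((2 * cq.re : ℝ) : ℂ) * cs + ((‖cq‖ ^ 2 : ℝ) : ℂ))⁻¹) ^ ℓ)
      = (s - ((q.re : ℝ) : Quaternion ℝ)) ^ ν *
        ((s ^ 2 - ((2 * q.re : ℝ) : Quaternion ℝ) * s +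
          ((‖q‖ ^ 2 : ℝ) : Quaternion ℝ))⁻¹) ^ ℓ := by
    simp only [map_mul, map_pow, map_inv₀, map_sub, map_add, hψs, hre, hcoe_aux ψ]
    rw [hcqnorm]
  constructor
  · refine hsum.congr fun k => ?_
    rw [← hψnorm, hmapterm k]
  · have cont : Continuous (ψ : ℂ → Quaternion ℝ) :=
      ψ.toLinearMap.continuous_of_finiteDimensional
    have h2 := hhs.map ψ cont
    rw [hLHS] at h2
    exact (h2.congr_fun fun k => (hmapterm k).symm).tsum_eq.symm
end

section
/- Let A be a complex Banach algebra with unit, let a, b ∈ A commute (a·b = b·a), and let s ∈ ℂ satisfy ‖a‖ < |s| and ‖b‖ < |s|. Then the element Q := s²·1 − s·(a+b) + a·b is invertible in A, and for every integer ℓ ≥ 1 the series Σ_{k=2ℓ−1}^{∞} s^{−(k+1)} · H_ℓ^k(a,b) converges absolutely in A and its sum equals (Q⁻¹)^ℓ, where H_ℓ^k(a,b) := Σ_{j=0}^{k−2ℓ+1} C(ℓ+j−1, ℓ−1)·C(k−ℓ−j, ℓ−1)·a^{k−2ℓ+1−j}·b^j. (Proposition 6.9 of the paper: Q_{c,s}^{−ℓ}(T)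 = Σ_{k=2ℓ−1}^{∞} H_ℓ^k(T)·s^{−k−1} for a bounded paravector operator T with commuting components and ‖T‖ < |s|; here T, T̄ are the commuting elements a, b and s, which lies in a slice ℂ_I and commutes with the operators, is a complex scalar.) -/
/-!
Put `c = s⁻¹ • a` and `d = s⁻¹ • b`, so that `‖c‖, ‖d‖ < 1` and `Q = s² (1 - c)(1 - d)` with
commuting factors; hence `Q^(-ℓ) = s^(-2ℓ) (1 - c)^(-ℓ) (1 - d)^(-ℓ)`. Each factor is the negative
binomial series `∑ₙ C(n + ℓ - 1, ℓ - 1) xⁿ`, and the `n`-th term of their Cauchy product is exactly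
`H_ℓ^(n + 2ℓ - 1)(c, d)`. Since `H_ℓ^k` is homogeneous of degree `k + 1 - 2ℓ`, this term is
`s^(2ℓ) s^(-k-1) H_ℓ^k(a, b)` for `k = n + 2ℓ - 1`, while `H_ℓ^k = 0` for `k < 2ℓ - 1`.
-/

open Finset

section PolyHarmonic

variable {A : Type*} [Semiring A]

/-- The Poly-Harmonic polynomial `H_ℓ^k(a, b)`. -/
def polyHarmonic (ℓ k : ℕ) (a b : A) : A :=
  ∑ j ∈ range (k + 2 - 2 * ℓ),
    ((Nat.choose (ℓ - 1 + j) (ℓ - 1) * Nat.choose (k - ℓ - j) (ℓ - 1) : ℕ) : A) *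
      a ^ (k + 1 - 2 * ℓ - j) * b ^ j

lemma polyHarmonic_eq_zero {ℓ k : ℕ} (h : k + 2 ≤ 2 * ℓ) (a b : A) :
    polyHarmonic ℓ k a b = 0 := by
  rw [polyHarmonic, Nat.sub_eq_zero_of_le h, sum_range_zero]

lemma polyHarmonic_smul {R : Type*} [CommSemiring R] [Algebra R A] (ℓ k : ℕ) (r : R) (a b : A) :
    polyHarmonic ℓ k (r • a) (r • b) = r ^ (k + 1 - 2 * ℓ) • polyHarmonic ℓ k a b := by
  rw [polyHarmonic, polyHarmonic, smul_sum]
  refine sum_congr rfl fun j hj => ?_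
  have hj : j ≤ k + 1 - 2 * ℓ := by have := mem_range.1 hj; omega
  simp only [smul_pow, mul_smul_comm, smul_mul_assoc, smul_smul, ← pow_add]
  rw [Nat.add_sub_cancel' hj]

lemma polyHarmonic_add_two_mul_sub_one {ℓ : ℕ} (hℓ : 1 ≤ ℓ) (n : ℕ) (a b : A) :
    polyHarmonic ℓ (n + (2 * ℓ - 1)) a b =
      ∑ i ∈ range (n + 1), (((i + (ℓ - 1)).choose (ℓ - 1) : A) * a ^ i) *
        (((n - i + (ℓ - 1)).choose (ℓ - 1) : A) * b ^ (n - i)) := by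
  rw [polyHarmonic, show n + (2 * ℓ - 1) + 2 - 2 * ℓ = n + 1 by omega, ← sum_range_reflect]
  refine sum_congr rfl fun i hi => ?_
  have hi : i ≤ n := Nat.lt_succ_iff.1 (mem_range.1 hi)
  rw [show ℓ - 1 + (n + 1 - 1 - i) = n - i + (ℓ - 1) by omega,
    show n + (2 * ℓ - 1) - ℓ - (n + 1 - 1 - i) = i + (ℓ - 1) by omega,
    show n + (2 * ℓ - 1) + 1 - 2 * ℓ - (n + 1 - 1 - i) = i by omega,
    show n + 1 - 1 - i = n - i by omega]
  simp only [Nat.cast_mul, mul_assoc]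
  rw [(Nat.cast_commute _ _).left_comm, (Nat.cast_commute _ (a ^ i)).left_comm]

lemma pow_succ_smul_polyHarmonic {R : Type*} [CommSemiring R] [Algebra R A] {ℓ : ℕ} (hℓ : 1 ≤ ℓ)
    (n : ℕ) (r : R) (a b : A) :
    r ^ (n + (2 * ℓ - 1) + 1) • polyHarmonic ℓ (n + (2 * ℓ - 1)) a b =
      r ^ (2 * ℓ) • polyHarmonic ℓ (n + (2 * ℓ - 1)) (r • a) (r • b) := by
  rw [polyHarmonic_smul, smul_smul, ← pow_add]
  congr 2
  omega

end PolyHarmonic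

section Series

variable {R : Type*} [NormedRing R]

lemma summable_norm_choose_mul_geometric_of_norm_lt_one (m : ℕ) {x : R} (hx : ‖x‖ < 1) :
    Summable fun n : ℕ => ‖((n + m).choose m : R) * x ^ n‖ := by
  refine summable_norm_mul_geometric_of_norm_lt_one (k := m) hx
    (Asymptotics.isBigO_iff.2 ⟨2 ^ m, ?_⟩)
  filter_upwards [Filter.Ioi_mem_atTop m] with n (hn : m < n)
  simp only [Real.norm_eq_abs, Nat.abs_cast, Nat.cast_pow]
  norm_cast
  calc (n + m).choose m
    _ ≤ (2 * n).choose m := Nat.choose_le_choose m (by omega)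
    _ ≤ (2 * n) ^ m := Nat.choose_le_pow _ _
    _ = 2 ^ m * n ^ m := Nat.mul_pow 2 n m

variable {ℓ : ℕ} (hℓ : 1 ≤ ℓ) {x y : R} (hx : ‖x‖ < 1) (hy : ‖y‖ < 1)
include hℓ hx hy

lemma summable_norm_polyHarmonic :
    Summable fun n : ℕ => ‖polyHarmonic ℓ (n + (2 * ℓ - 1)) x y‖ := by
  refine (summable_norm_sum_mul_range_of_summable_norm
    (summable_norm_choose_mul_geometric_of_norm_lt_one (ℓ - 1) hx)
    (summable_norm_choose_mul_geometric_of_norm_lt_one (ℓ - 1) hy)).congr fun n => by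
    rw [polyHarmonic_add_two_mul_sub_one hℓ]

lemma hasSum_polyHarmonic [CompleteSpace R] :
    HasSum (fun n : ℕ => polyHarmonic ℓ (n + (2 * ℓ - 1)) x y)
      (Ring.inverse (1 - x) ^ ℓ * Ring.inverse (1 - y) ^ ℓ) := by
  have hsum (z : R) (hz : ‖z‖ < 1) :
      ∑' n : ℕ, ((n + (ℓ - 1)).choose (ℓ - 1) : R) * z ^ n = Ring.inverse (1 - z) ^ ℓ := by
    rw [tsum_choose_mul_geometric_of_norm_lt_one' _ hz, Nat.sub_add_cancel hℓ]
  rw [← hsum x hx, ← hsum y hy]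
  refine (hasSum_sum_range_mul_of_summable_norm
    (summable_norm_choose_mul_geometric_of_norm_lt_one (ℓ - 1) hx)
    (summable_norm_choose_mul_geometric_of_norm_lt_one (ℓ - 1) hy)).congr_fun fun n => by
    rw [polyHarmonic_add_two_mul_sub_one hℓ]

end Series

section Qcs

variable {𝕜 A : Type*} [Field 𝕜] [Ring A] [Algebra 𝕜 A]

/-- The paper's `Q_{c,s}(T)`, with `T` and `T̄` replaced by `a` and `b`. -/
def qcs (s : 𝕜) (a b : A) : A := algebraMap 𝕜 A (s ^ 2) - algebraMap 𝕜 A s * (a + b) + a * b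

lemma qcs_eq_smul {s : 𝕜} (hs : s ≠ 0) (a b : A) :
    qcs s a b = s ^ 2 • ((1 - s⁻¹ • a) * (1 - s⁻¹ • b)) := by
  have h1 : s ^ 2 • s⁻¹ • a = s • a := by rw [smul_smul, sq, mul_inv_cancel_right₀ hs]
  have h2 : s ^ 2 • s⁻¹ • b = s • b := by rw [smul_smul, sq, mul_inv_cancel_right₀ hs]
  have h3 : s ^ 2 • (s⁻¹ • a * s⁻¹ • b) = a * b := by
    rw [smul_mul_smul_comm, smul_smul, sq, mul_mul_mul_comm, mul_inv_cancel₀ hs, one_mul, one_smul]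
  rw [qcs, Algebra.algebraMap_eq_smul_one, ← Algebra.smul_def, mul_one_sub, sub_mul, one_mul,
    smul_sub, smul_sub, smul_sub, h1, h2, h3, smul_add]
  abel

lemma Ring.inverse_smul {r : 𝕜} (hr : r ≠ 0) (x : A) :
    Ring.inverse (r • x) = r⁻¹ • Ring.inverse x := by
  have hrx : IsUnit (r • x) ↔ IsUnit x := isUnit_smul_iff (Units.mk0 r hr) x
  by_cases hx : IsUnit x
  · rw [← one_mul (Ring.inverse (r • x)), eq_comm, Ring.eq_mul_inverse_iff_mul_eq _ _ _ (hrx.2 hx),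
      smul_mul_smul_comm, inv_mul_cancel₀ hr, one_smul, Ring.inverse_mul_cancel _ hx]
  · rw [Ring.inverse_non_unit _ hx, Ring.inverse_non_unit _ (hrx.not.2 hx), smul_zero]

lemma inverse_qcs_pow {s : 𝕜} (hs : s ≠ 0) {a b : A} (hab : Commute a b) (ℓ : ℕ) :
    Ring.inverse (qcs s a b) ^ ℓ =
      s⁻¹ ^ (2 * ℓ) • (Ring.inverse (1 - s⁻¹ • a) ^ ℓ * Ring.inverse (1 - s⁻¹ • b) ^ ℓ) := by
  have hcd : Commute (1 - s⁻¹ • a) (1 - s⁻¹ • b) :=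
    (Commute.one_left _).sub_left ((Commute.one_right _).sub_right ((hab.smul_left _).smul_right _))
  rw [qcs_eq_smul hs, Ring.inverse_smul (pow_ne_zero 2 hs), Ring.mul_inverse_rev' hcd,
    hcd.ringInverse_ringInverse.symm.eq, smul_pow, hcd.ringInverse_ringInverse.mul_pow, inv_pow,
    ← pow_mul, inv_pow]

end Qcs

/-- **Proposition 6.9.** Let `A` be a complex unital Banach algebra, let `a b ∈ A` commute and
let `s ∈ ℂ` satisfy `‖a‖ < |s|` and `‖b‖ < |s|`. Then `Q = s²·1 - s·(a+b) + a·b` is invertible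
and `Q^{-ℓ} = ∑_{k=2ℓ-1}^∞ s^{-k-1} H_ℓ^k(a,b)`, where
`H_ℓ^k(a,b) = ∑_{j=0}^{k-2ℓ+1} C(ℓ+j-1,ℓ-1) C(k-ℓ-j,ℓ-1) a^{k-2ℓ+1-j} b^j`
(terms with `k < 2ℓ-1` vanish), the series converging absolutely. -/
theorem Qcs_inv_pow_series_operator (A : Type*) [NormedRing A] [NormedAlgebra ℂ A]
    [CompleteSpace A] (a b : A) (hab : a * b = b * a) (s : ℂ)
    (ha : ‖a‖ < ‖s‖) (hb : ‖b‖ < ‖s‖) (ℓ : ℕ) (hℓ : 1 ≤ ℓ) :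
    IsUnit (algebraMap ℂ A (s ^ 2) - algebraMap ℂ A s * (a + b) + a * b) ∧
    Summable (fun k : ℕ => ‖(s⁻¹) ^ (k + 1) •
      ∑ j ∈ Finset.range (k + 2 - 2 * ℓ),
        ((Nat.choose (ℓ - 1 + j) (ℓ - 1) * Nat.choose (k - ℓ - j) (ℓ - 1) : ℕ) : A) *
          a ^ (k + 1 - 2 * ℓ - j) * b ^ j‖) ∧
    ∑' k : ℕ, (s⁻¹) ^ (k + 1) •
      ∑ j ∈ Finset.range (k + 2 - 2 * ℓ),
        ((Nat.choose (ℓ - 1 + j) (ℓ - 1) * Nat.choose (k - ℓ - j) (ℓ - 1) : ℕ) : A) *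
          a ^ (k + 1 - 2 * ℓ - j) * b ^ j =
      Ring.inverse (algebraMap ℂ A (s ^ 2) - algebraMap ℂ A s * (a + b) + a * b) ^ ℓ := by
  change IsUnit (qcs s a b) ∧ Summable (fun k => ‖s⁻¹ ^ (k + 1) • polyHarmonic ℓ k a b‖) ∧
    ∑' k, s⁻¹ ^ (k + 1) • polyHarmonic ℓ k a b = Ring.inverse (qcs s a b) ^ ℓ
  have hs : s ≠ 0 := norm_pos_iff.1 ((norm_nonneg a).trans_lt ha)
  have hsa : ‖s⁻¹ • a‖ < 1 := by
    rwa [norm_smul, norm_inv, inv_mul_lt_one₀ (norm_pos_iff.2 hs)]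
  have hsb : ‖s⁻¹ • b‖ < 1 := by
    rwa [norm_smul, norm_inv, inv_mul_lt_one₀ (norm_pos_iff.2 hs)]
  have hunit : IsUnit (qcs s a b) := by
    rw [qcs_eq_smul hs]
    exact ((Units.oneSub _ hsa).isUnit.mul (Units.oneSub _ hsb).isUnit).smul
      (Units.mk0 _ (pow_ne_zero 2 hs))
  have hshift (n : ℕ) := pow_succ_smul_polyHarmonic hℓ n s⁻¹ a b
  have hhead : ∑ k ∈ range (2 * ℓ - 1), s⁻¹ ^ (k + 1) • polyHarmonic ℓ k a b = 0 :=
    sum_eq_zero fun k hk => by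
      rw [polyHarmonic_eq_zero (by have := mem_range.1 hk; omega), smul_zero]
  refine ⟨hunit, ?_, HasSum.tsum_eq ?_⟩
  · refine (summable_nat_add_iff (2 * ℓ - 1)).1
      (((summable_norm_polyHarmonic hℓ hsa hsb).mul_left ‖s⁻¹ ^ (2 * ℓ)‖).congr fun n => ?_)
    rw [hshift, norm_smul]
  · rw [← hasSum_nat_add_iff' (2 * ℓ - 1), hhead, sub_zero, inverse_qcs_pow hs hab]
    exact ((hasSum_polyHarmonic hℓ hsa hsb).const_smul _).congr_fun hshift
end

section
/- Let ℓ ≥ 1 and k ≥ 1 be integers, and let x₀, v be real numbers with x₀² + v² ≠ 0. Then the (k−1)-st derivative at x₀ of the function t ↦ (t² + v²)^{−ℓ} (from ℝ to ℝ) equals (k−1)!·(−1)^{k+1}·h·(x₀² + v²)^{−(k+ℓ−1)}, where h is the real number h = Re( Σ_{j=0}^{k−1} C(ℓ+j−1, ℓ−1)·C(k+ℓ−2−j, ℓ−1)·(x₀+iv)^{k−1−j}·(x₀−iv)^{j} ) computed in ℂ. (Proposition 5.4 of the paper: ∂_{x₀}^{k−1}(|x|^{−2ℓ}) = (k−1)!·(−1)^{k+1}·H_ℓ^{k−2+2ℓ}(x)·|x|^{−2k−2ℓ+2}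 for x ∈ ℝ^{n+1}∖{0}, written with x₀ = Re(x) and v = |x̱|.) -/
/-!
Over `ℂ` the function factors as `t ↦ (t + iv)^{-ℓ} (t - iv)^{-ℓ}`. The `j`-th derivative of
`(z + c)^{-ℓ}` is `(-1)^j ℓ(ℓ+1)⋯(ℓ+j-1) (z + c)^{-ℓ-j}`, so the Leibniz rule gives the
`(k-1)`-st derivative as a sum whose terms, over the common denominator `(x₀² + v²)^{k+ℓ-1}`,
are the terms of `H_ℓ^{k-2+2ℓ}`. On the real axis the real derivative is the real part of the
complex one, since the complex function is holomorphic near `x₀`.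
-/

open Finset Complex

theorem iteratedDeriv_ofReal_re {F : ℂ → ℂ} {f : ℝ → ℝ} {U : Set ℂ} (hU : IsOpen U)
    (hF : DifferentiableOn ℂ F U) (hf : ∀ t : ℝ, (t : ℂ) ∈ U → f t = (F t).re) (n : ℕ) {x : ℝ}
    (hx : (x : ℂ) ∈ U) :
    iteratedDeriv n f x = (iteratedDeriv n F x).re := by
  induction n generalizing x with
  | zero => simpa using hf x hx
  | succ n ih =>
    have hUreal : {t : ℝ | (t : ℂ) ∈ U} ∈ nhds x :=
      (hU.preimage continuous_ofReal).mem_nhds hx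
    have hderiv : HasDerivAt (iteratedDeriv n F) (iteratedDeriv (n + 1) F x) x := by
      rw [iteratedDeriv_succ, iteratedDeriv_eq_iterate]
      exact (((hF.analyticOnNhd hU).iterated_deriv n) x hx).differentiableAt.hasDerivAt
    rw [iteratedDeriv_succ, (Filter.eventuallyEq_of_mem hUreal fun t ht => ih ht).deriv_eq]
    exact hderiv.real_of_complex.deriv

theorem prod_neg_natCast_sub_natCast {R : Type*} [CommRing R] (ℓ k : ℕ) :
    ∏ i ∈ range k, (((-ℓ : ℤ) : R) - i) = (-1) ^ k * ℓ.ascFactorial k := by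
  induction k with
  | zero => simp
  | succ k ih =>
    rw [prod_range_succ, ih, Nat.ascFactorial_succ]
    push_cast
    ring

theorem iteratedDeriv_inv_pow_add_const {𝕜 : Type*} [NontriviallyNormedField 𝕜]
    (ℓ k : ℕ) (c z : 𝕜) :
    iteratedDeriv k (fun z => ((z + c) ^ ℓ)⁻¹) z =
      (-1) ^ k * ℓ.ascFactorial k * ((z + c) ^ (ℓ + k))⁻¹ := by
  have hzpow : (fun z => ((z + c) ^ ℓ)⁻¹) = fun z => (fun y => y ^ (-(ℓ : ℤ))) (z + c) := by
    simp [zpow_neg]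
  rw [hzpow, iteratedDeriv_comp_add_const k (fun y : 𝕜 => y ^ (-(ℓ : ℤ))) c,
    iteratedDeriv_eq_iterate]
  beta_reduce
  rw [iter_deriv_zpow, prod_neg_natCast_sub_natCast, ← neg_add', ← Nat.cast_add, zpow_neg,
    zpow_natCast]

theorem iteratedDeriv_inv_pow_mul_inv_pow {𝕜 : Type*} [NontriviallyNormedField 𝕜] (ℓ n : ℕ)
    {a b z : 𝕜} (ha : z + a ≠ 0) (hb : z + b ≠ 0) :
    iteratedDeriv n (fun z => ((z + a) ^ ℓ)⁻¹ * ((z + b) ^ ℓ)⁻¹) z =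
      (-1) ^ n * ∑ j ∈ range (n + 1),
        ((n.choose j * ℓ.ascFactorial j * ℓ.ascFactorial (n - j) : ℕ) : 𝕜) *
          ((z + a) ^ (ℓ + j))⁻¹ * ((z + b) ^ (ℓ + (n - j)))⁻¹ := by
  have hcont {c : 𝕜} (hc : z + c ≠ 0) : ContDiffAt 𝕜 n (fun z => ((z + c) ^ ℓ)⁻¹) z :=
    ((contDiffAt_id.add contDiffAt_const).pow ℓ).inv (pow_ne_zero ℓ hc)
  rw [iteratedDeriv_fun_mul (hcont ha) (hcont hb), mul_sum]
  refine sum_congr rfl fun j hj => ?_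
  have hsign : (-1 : 𝕜) ^ n = (-1) ^ j * (-1) ^ (n - j) := by
    rw [← pow_add, Nat.add_sub_cancel' (Nat.lt_succ_iff.mp (mem_range.mp hj))]
  rw [iteratedDeriv_inv_pow_add_const, iteratedDeriv_inv_pow_add_const, hsign]
  push_cast
  ring

theorem ofReal_add_mul_I_mul_ofReal_sub_mul_I (x v : ℝ) :
    ((x : ℂ) + v * I) * (x - v * I) = ((x ^ 2 + v ^ 2 : ℝ) : ℂ) := by
  push_cast
  linear_combination (-(v : ℂ) ^ 2) * I_sq

theorem iteratedDeriv_inv_sq_add_sq_pow (ℓ n : ℕ) (v : ℝ) {x : ℝ} (h : x ^ 2 + v ^ 2 ≠ 0) :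
    iteratedDeriv n (fun t : ℝ => ((t ^ 2 + v ^ 2) ^ ℓ)⁻¹) x =
      (iteratedDeriv n (fun z : ℂ => ((z + v * I) ^ ℓ)⁻¹ * ((z - v * I) ^ ℓ)⁻¹) x).re := by
  have hU : IsOpen {z : ℂ | (z + v * I) * (z - v * I) ≠ 0} :=
    isOpen_ne_fun (by fun_prop) continuous_const
  refine iteratedDeriv_ofReal_re hU ?_ ?_ n ?_
  · intro z hz
    obtain ⟨ha, hb⟩ := mul_ne_zero_iff.mp hz
    have hinv {c : ℂ} (hc : z + c ≠ 0) : DifferentiableAt ℂ (fun z => ((z + c) ^ ℓ)⁻¹) z :=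
      ((differentiableAt_id.add_const c).pow ℓ).inv (pow_ne_zero ℓ hc)
    simp only [sub_eq_add_neg] at hb ⊢
    exact ((hinv ha).mul (hinv hb)).differentiableWithinAt
  · intro t _
    rw [← mul_inv, ← mul_pow, ofReal_add_mul_I_mul_ofReal_sub_mul_I]
    norm_cast
  · rw [Set.mem_ofPred_eq, ofReal_add_mul_I_mul_ofReal_sub_mul_I]
    exact ofReal_ne_zero.mpr h

theorem choose_mul_ascFactorial_mul_ascFactorial {m n j : ℕ} (hj : j ≤ n) :
    n.choose j * (m + 1).ascFactorial j * (m + 1).ascFactorial (n - j) =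
      n.factorial * ((m + j).choose m * (m + (n - j)).choose m) := by
  rw [Nat.ascFactorial_eq_factorial_mul_choose, Nat.ascFactorial_eq_factorial_mul_choose,
    Nat.choose_symm_add, Nat.choose_symm_add, ← Nat.choose_mul_factorial_mul_factorial hj]
  ring

theorem choose_mul_ascFactorial_mul_inv_pow_mul_inv_pow {K : Type*} [Field K] {X Y : K}
    (hX : X ≠ 0) (hY : Y ≠ 0) {m n j : ℕ} (hj : j ≤ n) :
    ((n.choose j * (m + 1).ascFactorial j * (m + 1).ascFactorial (n - j) : ℕ) : K) *
        (X ^ (m + 1 + j))⁻¹ * (Y ^ (m + 1 + (n - j)))⁻¹ =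
      n.factorial * (((m + j).choose m * (m + n - j).choose m : ℕ) * X ^ (n - j) * Y ^ j) *
        ((X * Y) ^ (n + (m + 1)))⁻¹ := by
  rw [choose_mul_ascFactorial_mul_ascFactorial hj, Nat.add_sub_assoc hj]
  obtain ⟨d, rfl⟩ := Nat.exists_eq_add_of_le hj
  rw [Nat.add_sub_cancel_left]
  field_simp
  push_cast
  ring

/-- **Proposition 5.4.** For integers `ℓ ≥ 1`, `k ≥ 1` and reals `x₀, v` with `x₀² + v² ≠ 0`,
the `(k-1)`-st derivative at `x₀` of `t ↦ (t² + v²)^{-ℓ}` equals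
`(k-1)! (-1)^{k+1} H_ℓ^{k-2+2ℓ}(x) (x₀² + v²)^{-(k+ℓ-1)}`, where the real number
`H_ℓ^{k-2+2ℓ}(x)` is computed by substituting `x₀ + iv` for `x` and `x₀ - iv` for `x̄`
and taking the real part. -/
theorem iteratedDeriv_rieszPotential (ℓ k : ℕ) (hℓ : 1 ≤ ℓ) (hk : 1 ≤ k) (x₀ v : ℝ)
    (h : x₀ ^ 2 + v ^ 2 ≠ 0) :
    iteratedDeriv (k - 1) (fun t : ℝ => ((t ^ 2 + v ^ 2) ^ ℓ)⁻¹) x₀ =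
      (Nat.factorial (k - 1) : ℝ) * (-1) ^ (k + 1) *
        (∑ j ∈ Finset.range k,
          ((Nat.choose (ℓ - 1 + j) (ℓ - 1) * Nat.choose (k + ℓ - 2 - j) (ℓ - 1) : ℕ) : ℂ) *
            ((x₀ : ℂ) + (v : ℂ) * Complex.I) ^ (k - 1 - j) *
            ((x₀ : ℂ) - (v : ℂ) * Complex.I) ^ j).re *
        ((x₀ ^ 2 + v ^ 2) ^ (k + ℓ - 1))⁻¹ := by
  obtain ⟨m, rfl⟩ : ∃ m, ℓ = m + 1 := ⟨ℓ - 1, by omega⟩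
  obtain ⟨n, rfl⟩ : ∃ n, k = n + 1 := ⟨k - 1, by omega⟩
  have hXY := ofReal_add_mul_I_mul_ofReal_sub_mul_I x₀ v
  obtain ⟨hX, hY⟩ := mul_ne_zero_iff.mp (hXY ▸ ofReal_ne_zero.mpr h)
  rw [Nat.add_sub_cancel, iteratedDeriv_inv_sq_add_sq_pow _ _ _ h]
  simp only [sub_eq_add_neg] at hY ⊢
  rw [iteratedDeriv_inv_pow_mul_inv_pow _ _ hX hY]
  simp only [← sub_eq_add_neg] at hY ⊢
  rw [sum_congr rfl fun j hj => choose_mul_ascFactorial_mul_inv_pow_mul_inv_pow hX hY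
      (Nat.lt_succ_iff.mp (mem_range.mp hj)),
    ← sum_mul, ← mul_sum, hXY, ← ofReal_pow, ← ofReal_inv,
    show n + 1 + (m + 1) - 2 = m + n by omega, show n + 1 + (m + 1) - 1 = n + (m + 1) by omega]
  simp only [Nat.add_sub_cancel]
  have hsign : (-1 : ℂ) ^ n * n.factorial = (((-1) ^ n * n.factorial : ℝ) : ℂ) := by
    push_cast
    rfl
  rw [← mul_assoc, ← mul_assoc, hsign, re_mul_ofReal, re_ofReal_mul]
  ring
end

section
/- Let ℓ ≥ 1, k ≥ 2 and 1 ≤ j ≤ k−1 be integers. Then, as an identity of integers, (k−j)·C_{j−1}^{k−2+2ℓ}(ℓ) + j·C_{j}^{k−2+2ℓ}(ℓ) − (k+ℓ−1)·( C_{j}^{k−2+2ℓ}(ℓ) + C_{j−1}^{k−2+2ℓ}(ℓ) ) = −k·C_{j}^{k−1+2ℓ}(ℓ), where C_j^K(ℓ) := C(ℓ+j−1, ℓ−1)·C(K−ℓ−j, ℓ−1). (Proposition 7.1, item (c) of the paper: the coefficient identity used in the inductive proof of Proposition 5.4.) -/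
/-!
Write `ℓ = a + 1`. Every coefficient in the identity splits as `C(a+i, a) · C(a+d, a)`, and
the coefficients with indices `j - 1`, `j` and level `K`, `K + 1` differ only by moving one of
`i`, `d` up by one. The absorption identity `(m+1) C(a+m+1, a) = (a+m+1) C(a+m, a)`, applied to
each factor, then turns the claim into a linear identity between the resulting products.
-/

def Ccoef (ℓ K j : ℕ) : ℤ :=
  (Nat.choose (ℓ + j - 1) (ℓ - 1) * Nat.choose (K - ℓ - j) (ℓ - 1) : ℕ)

theorem Ccoef_succ_eq (a i d : ℕ) {K : ℕ} (hK : K = 2 * a + 1 + i + d) :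
    Ccoef (a + 1) K i = (a + i).choose a * (a + d).choose a := by
  rw [Ccoef, hK, show 2 * a + 1 + i + d - (a + 1) - i = a + d by omega,
    show a + 1 + i - 1 = a + i by omega, Nat.add_sub_cancel]
  push_cast
  rfl

theorem Int.choose_add_succ_mul (a m : ℕ) :
    ((a + m + 1).choose a : ℤ) * (m + 1) = (a + m).choose a * (a + m + 1) := by
  have h := Nat.choose_mul_succ_eq (a + m) a
  rw [show a + m + 1 - a = m + 1 by omega] at h
  exact_mod_cast h.symm

theorem Ccoef_identity_c_general (ℓ k j : ℕ) (hℓ : 1 ≤ ℓ) (hj1 : 1 ≤ j)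
    (hj2 : j ≤ k - 1) :
    ((k : ℤ) - j) * Ccoef ℓ (k - 2 + 2 * ℓ) (j - 1) + (j : ℤ) * Ccoef ℓ (k - 2 + 2 * ℓ) j -
        ((k : ℤ) + ℓ - 1) * (Ccoef ℓ (k - 2 + 2 * ℓ) j + Ccoef ℓ (k - 2 + 2 * ℓ) (j - 1)) =
      -(k : ℤ) * Ccoef ℓ (k - 1 + 2 * ℓ) j := by
  obtain ⟨a, rfl⟩ : ∃ a, ℓ = a + 1 := ⟨ℓ - 1, by omega⟩
  obtain ⟨i, rfl⟩ : ∃ i, j = i + 1 := ⟨j - 1, by omega⟩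
  obtain ⟨e, rfl⟩ : ∃ e, k = i + e + 2 := ⟨k - i - 2, by omega⟩
  rw [Nat.add_sub_cancel (n := i), Ccoef_succ_eq a i (e + 1) (by omega),
    Ccoef_succ_eq a (i + 1) e (by omega), Ccoef_succ_eq a (i + 1) (e + 1) (by omega)]
  push_cast
  linear_combination (((a + e + 1).choose a : ℕ) : ℤ) * Int.choose_add_succ_mul a i +
    (((a + i + 1).choose a : ℕ) : ℤ) * Int.choose_add_succ_mul a e

/-- **Proposition 7.1, item (c).** For `ℓ ≥ 1`, `k ≥ 2` and `1 ≤ j ≤ k-1`: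
`(k-j) C_{j-1}^{k-2+2ℓ}(ℓ) + j C_j^{k-2+2ℓ}(ℓ) - (k+ℓ-1)(C_j^{k-2+2ℓ}(ℓ) + C_{j-1}^{k-2+2ℓ}(ℓ))
  = -k C_j^{k-1+2ℓ}(ℓ)`. -/
theorem Ccoef_identity_c (ℓ k j : ℕ) (hℓ : 1 ≤ ℓ) (hk : 2 ≤ k) (hj1 : 1 ≤ j)
    (hj2 : j ≤ k - 1) :
    ((k : ℤ) - j) * Ccoef ℓ (k - 2 + 2 * ℓ) (j - 1) + (j : ℤ) * Ccoef ℓ (k - 2 + 2 * ℓ) j -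
        ((k : ℤ) + ℓ - 1) * (Ccoef ℓ (k - 2 + 2 * ℓ) j + Ccoef ℓ (k - 2 + 2 * ℓ) (j - 1)) =
      -(k : ℤ) * Ccoef ℓ (k - 1 + 2 * ℓ) j :=
  Ccoef_identity_c_general ℓ k j hℓ hj1 hj2
end

section
/- Let ℓ ≥ 1, k ≥ 2ℓ+1 and 1 ≤ j ≤ k−2ℓ be integers. Then, as an identity of integers, C_{j}^{k+2}(ℓ+1) − C_{j}^{k+1}(ℓ+1) − C_{j−1}^{k+1}(ℓ+1) + C_{j−1}^{k}(ℓ+1) = C_{j}^{k}(ℓ), where C_j^K(ℓ) := C(ℓ+j−1, ℓ−1)·C(K−ℓ−j, ℓ−1), so that C_j^K(ℓ+1) = C(ℓ+j, ℓ)·C(K−ℓ−1−j, ℓ). (Proposition 7.1, item (e) of the paper: the coefficient identity used in the proof of the recursion Lemma 5.9.) -/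
theorem Ccoef_succ (ℓ K j : ℕ) :
    Ccoef (ℓ + 1) K j = (Nat.choose (ℓ + j) ℓ : ℤ) * Nat.choose (K - (ℓ + 1) - j) ℓ := by
  simp only [Ccoef, Nat.add_sub_cancel, Nat.add_right_comm ℓ 1 j, Nat.cast_mul]

theorem Nat.cast_choose_succ_succ_sub_cast_choose {R : Type*} [AddGroupWithOne R] (n r : ℕ) :
    (Nat.choose (n + 1) (r + 1) : R) - Nat.choose n (r + 1) = Nat.choose n r := by
  rw [Nat.choose_succ_succ', Nat.cast_add, add_sub_cancel_right]

theorem Ccoef_mixed_second_difference (ℓ K j : ℕ) (hK : ℓ + j + 2 ≤ K) :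
    Ccoef (ℓ + 1 + 1) (K + 2) (j + 1) - Ccoef (ℓ + 1 + 1) (K + 1) (j + 1) -
        Ccoef (ℓ + 1 + 1) (K + 1) j + Ccoef (ℓ + 1 + 1) K j =
      Ccoef (ℓ + 1) K (j + 1) := by
  obtain ⟨m, rfl⟩ : ∃ m, K = ℓ + j + 2 + m := ⟨K - (ℓ + j + 2), by omega⟩
  simp only [Ccoef_succ]
  rw [show ℓ + j + 2 + m + 2 - (ℓ + 1 + 1) - (j + 1) = m + 1 by omega,
    show ℓ + j + 2 + m + 1 - (ℓ + 1 + 1) - (j + 1) = m by omega,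
    show ℓ + j + 2 + m + 1 - (ℓ + 1 + 1) - j = m + 1 by omega,
    show ℓ + j + 2 + m - (ℓ + 1 + 1) - j = m by omega,
    show ℓ + j + 2 + m - (ℓ + 1) - (j + 1) = m by omega,
    show ℓ + 1 + (j + 1) = ℓ + j + 1 + 1 by omega, show ℓ + (j + 1) = ℓ + j + 1 by omega,
    show ℓ + 1 + j = ℓ + j + 1 by omega]
  calc _ = ((Nat.choose (ℓ + j + 1 + 1) (ℓ + 1) : ℤ) - Nat.choose (ℓ + j + 1) (ℓ + 1)) *
          ((Nat.choose (m + 1) (ℓ + 1) : ℤ) - Nat.choose m (ℓ + 1)) := by ring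
    _ = _ := by
      rw [Nat.cast_choose_succ_succ_sub_cast_choose, Nat.cast_choose_succ_succ_sub_cast_choose]

theorem Ccoef_identity_e_general (ℓ k j : ℕ) (hℓ : 1 ≤ ℓ) (hj1 : 1 ≤ j)
    (hj2 : j ≤ k - 2 * ℓ) :
    Ccoef (ℓ + 1) (k + 2) j - Ccoef (ℓ + 1) (k + 1) j - Ccoef (ℓ + 1) (k + 1) (j - 1) +
        Ccoef (ℓ + 1) k (j - 1) =
      Ccoef ℓ k j := by
  obtain ⟨l, rfl⟩ : ∃ l, ℓ = l + 1 := ⟨ℓ - 1, by omega⟩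
  obtain ⟨i, rfl⟩ : ∃ i, j = i + 1 := ⟨j - 1, by omega⟩
  exact Ccoef_mixed_second_difference l k i (by omega)

/-- **Proposition 7.1, item (e).** For `ℓ ≥ 1`, `k ≥ 2ℓ+1` and `1 ≤ j ≤ k-2ℓ`:
`C_j^{k+2}(ℓ+1) - C_j^{k+1}(ℓ+1) - C_{j-1}^{k+1}(ℓ+1) + C_{j-1}^{k}(ℓ+1) = C_j^{k}(ℓ)`. -/
theorem Ccoef_identity_e (ℓ k j : ℕ) (hℓ : 1 ≤ ℓ) (hk : 2 * ℓ + 1 ≤ k) (hj1 : 1 ≤ j)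
    (hj2 : j ≤ k - 2 * ℓ) :
    Ccoef (ℓ + 1) (k + 2) j - Ccoef (ℓ + 1) (k + 1) j - Ccoef (ℓ + 1) (k + 1) (j - 1) +
        Ccoef (ℓ + 1) k (j - 1) =
      Ccoef ℓ k j :=
  Ccoef_identity_e_general ℓ k j hℓ hj1 hj2
end
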